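/- arXiv:2009.09888 — 6 statements merged into one kernel-verified Lean document; each statement's English description precedes it below -/
import Mathlib

section
/- Let K([0,1]) denote the hyperspace of nonempty compact subsets of [0,1] equipped with the Hausdorff metric. Then the set {(A,p) ∈ K([0,1]) × [0,1] : dimH(A) > p} is Σ⁰₂ (i.e. a countable union of closed sets) in the product space K([0,1]) × [0,1], and the set {(A,p) ∈ K([0,1]) × [0,1] : dimH(A) ≥ p} is Π⁰₃ (i.e. a countable intersection of Σ⁰₂ sets) in K([0,1]) × [0,1]. -/
open MeasureTheory Topology Filter Set
open scoped ENNReal NNReal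

/-- Hausdorff dimension, as a real number (`dimH` is always `≤ d < ∞` for subsets of `ℝᵈ`). -/
noncomputable def hausdorffDim {E : Type*} [EMetricSpace E] (A : Set E) : ℝ :=
  (dimH A).toReal

/-- The Fourier dimension of a set `A` in a real inner product space `E`:
`sup {s ∈ [0, dim E] : ∃ probability measure μ with μ A = 1 and c > 0 with
|μ̂(ξ)| ≤ c ⬝ |ξ| ^ (-s/2) for all ξ}` (the inequality is stated in `ℝ≥0∞`, so that
`0 ^ (negative) = ∞` and the condition at `ξ = 0` is vacuous, as intended). -/
noncomputable def fourierDim {E : Type*} [NormedAddCommGroup E] [InnerProductSpace ℝ E]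
    [MeasurableSpace E] (A : Set E) : ℝ :=
  sSup {s : ℝ | 0 ≤ s ∧ s ≤ (Module.finrank ℝ E : ℝ) ∧
    ∃ μ : Measure E, IsProbabilityMeasure μ ∧ μ A = 1 ∧
      ∃ c : ℝ, 0 < c ∧ ∀ ξ : E,
        ENNReal.ofReal ‖∫ x, Complex.exp (-(Complex.I * ((inner ℝ ξ x : ℝ) : ℂ))) ∂μ‖ ≤
          ENNReal.ofReal c * (‖ξ‖₊ : ℝ≥0∞) ^ (-(s / 2)) }

/-- A set is `Σ⁰₂` (Fσ) if it is a countable union of closed sets. -/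
def IsSigma02 {X : Type*} [TopologicalSpace X] (S : Set X) : Prop :=
  ∃ F : ℕ → Set X, (∀ n, IsClosed (F n)) ∧ S = ⋃ n, F n

/-- A set is `Π⁰₃` if it is a countable intersection of `Σ⁰₂` sets. -/
def IsPi03 {X : Type*} [TopologicalSpace X] (S : Set X) : Prop :=
  ∃ G : ℕ → Set X, (∀ n, IsSigma02 (G n)) ∧ S = ⋂ n, G n

/-- The hyperspace of nonempty compact subsets of `[0,1]`, with the Hausdorff metric. -/
abbrev K01 : Type _ := TopologicalSpace.NonemptyCompacts unitInterval

/-- The underlying subset of `ℝ` of an element of the hyperspace `K([0,1])`. -/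
def asSet (A : K01) : Set ℝ := Subtype.val '' (A : Set unitInterval)



/-- Hausdorff content (with unbounded covers). -/
noncomputable def hcontent (d : ℝ) (A : Set ℝ) : ℝ≥0∞ :=
  ⨅ (t : ℕ → Set ℝ) (_ : A ⊆ ⋃ n, t n),
    ∑' n, ⨆ _ : (t n).Nonempty, EMetric.diam (t n) ^ d

lemma hcontent_le_of_cover {d : ℝ} {A : Set ℝ} (t : ℕ → Set ℝ) (h : A ⊆ ⋃ n, t n) :
    hcontent d A ≤ ∑' n, ⨆ _ : (t n).Nonempty, EMetric.diam (t n) ^ d :=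
  iInf₂_le t h

lemma hcontent_le_hausdorffMeasure (d : ℝ) (A : Set ℝ) : hcontent d A ≤ μH[d] A := by
  rw [MeasureTheory.Measure.hausdorffMeasure_apply]
  refine le_trans ?_ (le_iSup₂ (⊤ : ℝ≥0∞) (by norm_num))
  exact le_iInf fun t => le_iInf fun ht => le_iInf fun _ => hcontent_le_of_cover t ht

lemma hausdorffMeasure_eq_zero_of_hcontent {d : ℝ} (hd : 0 < d) {A : Set ℝ}
    (h : hcontent d A = 0) : μH[d] A = 0 := by
  rw [MeasureTheory.Measure.hausdorffMeasure_apply]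
  refine le_antisymm (iSup₂_le fun r hr => ?_) zero_le
  refine ENNReal.le_of_forall_pos_le_add fun ε hε _ => ?_
  rw [zero_add]
  have hrd : (0 : ℝ≥0∞) < r ^ d := by
    rw [pos_iff_ne_zero, Ne, ENNReal.rpow_eq_zero_iff]
    push_neg
    exact ⟨fun h0 => absurd h0 hr.ne', fun _ => hd.le⟩
  set εE : ℝ≥0∞ := min (ε : ℝ≥0∞) (r ^ d) with hεE
  have hεE0 : 0 < εE := lt_min (by exact_mod_cast hε) hrd
  have hlt : hcontent d A < εE := h ▸ hεE0
  rw [hcontent] at hlt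
  simp only [iInf_lt_iff] at hlt
  obtain ⟨t, ht, hsum⟩ := hlt
  have hdiam : ∀ n, EMetric.diam (t n) ≤ r := by
    intro n
    rcases (t n).eq_empty_or_nonempty with he | hne
    · simp [he, EMetric.diam]
    · have h1 : EMetric.diam (t n) ^ d ≤ εE := by
        refine le_trans ?_ hsum.le
        refine le_trans ?_ (ENNReal.le_tsum n)
        simp [hne]
      have h2 : EMetric.diam (t n) ^ d ≤ r ^ d := h1.trans (min_le_right _ _)
      exact (ENNReal.rpow_le_rpow_iff hd).1 h2
  calc (⨅ (t : ℕ → Set ℝ) (_ : A ⊆ ⋃ n, t n) (_ : ∀ n, EMetric.diam (t n) ≤ r),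
        ∑' n, ⨆ _ : (t n).Nonempty, EMetric.diam (t n) ^ d)
      ≤ ∑' n, ⨆ _ : (t n).Nonempty, EMetric.diam (t n) ^ d := by
        exact le_trans (iInf_le _ t) (le_trans (iInf_le _ ht) (iInf_le _ hdiam))
    _ ≤ εE := hsum.le
    _ ≤ ε := min_le_left _ _

lemma hcontent_mono {d : ℝ} {A B : Set ℝ} (h : A ⊆ B) : hcontent d A ≤ hcontent d B :=
  le_iInf fun t => le_iInf fun ht => hcontent_le_of_cover t (h.trans ht)

lemma isCompact_asSet (A : K01) : IsCompact (asSet A) :=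
  A.isCompact.image continuous_subtype_val

lemma isClosed_hcontent_ge (s : ℝ) (hs : 0 < s) (hs1 : s ≤ 1) (t : ℝ≥0∞) :
    IsClosed {A : K01 | t ≤ hcontent s (asSet A)} := by
  rw [← isOpen_compl_iff]
  rw [EMetric.isOpen_iff]
  intro A₀ hA₀
  simp only [mem_compl_iff, mem_setOf_eq, not_le] at hA₀
  -- get a cover of asSet A₀ with sum < u < t
  obtain ⟨U, hU, hS⟩ : ∃ U : ℕ → Set ℝ, (asSet A₀ ⊆ ⋃ n, U n) ∧
      (∑' n, ⨆ _ : (U n).Nonempty, EMetric.diam (U n) ^ s) < t := by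
    have := hA₀
    rw [hcontent] at this
    simp only [iInf_lt_iff] at this
    obtain ⟨U, hU, hS⟩ := this
    exact ⟨U, hU, hS⟩
  set S := ∑' n, ⨆ _ : (U n).Nonempty, EMetric.diam (U n) ^ s with hSdef
  obtain ⟨u, hSu, hut⟩ := exists_between hS
  have hε₀ : (0 : ℝ≥0∞) < u - S := tsub_pos_of_lt hSu
  obtain ⟨ε, hεpos, hεsum⟩ := ENNReal.exists_pos_sum_of_countable hε₀.ne' ℕ
  -- radii
  set δ : ℕ → ℝ≥0 := fun n => (ε n) ^ (1 / s : ℝ) / 2 with hδdef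
  have hδpos : ∀ n, (0 : ℝ) < δ n := by
    intro n
    have : (0 : ℝ≥0) < δ n := by
      apply div_pos _ (by norm_num)
      exact NNReal.rpow_pos (hεpos n)
    exact_mod_cast this
  -- thickened cover
  set V : ℕ → Set ℝ := fun n => Metric.thickening (δ n) (U n) with hVdef
  have hVopen : ∀ n, IsOpen (V n) := fun n => Metric.isOpen_thickening
  have hterm : ∀ n, (⨆ _ : (V n).Nonempty, EMetric.diam (V n) ^ s)
      ≤ (⨆ _ : (U n).Nonempty, EMetric.diam (U n) ^ s) + (ε n : ℝ≥0∞) := by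
    intro n
    rcases (U n).eq_empty_or_nonempty with he | hne
    · simp [hVdef, he, Metric.thickening_empty]
    · have hVne : (V n).Nonempty := hne.mono (Metric.self_subset_thickening (hδpos n) _)
      rw [iSup_pos hVne, iSup_pos hne]
      have h1 : EMetric.diam (V n) ≤ EMetric.diam (U n) + 2 * (δ n : ℝ≥0) :=
        Metric.ediam_thickening_le _
      have h2 : EMetric.diam (V n) ^ s ≤ (EMetric.diam (U n) + 2 * (δ n : ℝ≥0)) ^ s :=
        ENNReal.rpow_le_rpow h1 hs.le
      refine h2.trans ?_
      refine (ENNReal.rpow_add_le_add_rpow _ _ hs.le hs1).trans ?_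
      gcongr
      -- (2 * δ n) ^ s ≤ ε n
      have h2δ : (2 * δ n : ℝ≥0) = (ε n) ^ (1 / s : ℝ) := by
        rw [hδdef]
        rw [mul_div_cancel₀]
        norm_num
      have hkey : ((2 * (δ n) : ℝ≥0) : ℝ≥0∞) ^ s = ((ε n : ℝ≥0∞)) := by
        rw [← ENNReal.coe_rpow_of_nonneg _ hs.le, h2δ, ← NNReal.rpow_mul, one_div,
          inv_mul_cancel₀ hs.ne', NNReal.rpow_one]
      have hcast : (2 * (δ n : ℝ≥0∞)) = ((2 * (δ n) : ℝ≥0) : ℝ≥0∞) := by push_cast; ring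
      rw [hcast, hkey]
  have hsum' : (∑' n, ⨆ _ : (V n).Nonempty, EMetric.diam (V n) ^ s) < t := by
    calc (∑' n, ⨆ _ : (V n).Nonempty, EMetric.diam (V n) ^ s)
        ≤ ∑' n, ((⨆ _ : (U n).Nonempty, EMetric.diam (U n) ^ s) + (ε n : ℝ≥0∞)) :=
          ENNReal.tsum_le_tsum hterm
      _ = S + ∑' n, (ε n : ℝ≥0∞) := ENNReal.tsum_add
      _ ≤ S + (u - S) := add_le_add_right hεsum.le S
      _ = u := add_tsub_cancel_of_le hSu.le
      _ < t := hut
  -- compactness: thickening of asSet A₀ inside ⋃ V n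
  have hsub : asSet A₀ ⊆ ⋃ n, V n :=
    hU.trans (iUnion_mono fun n => Metric.self_subset_thickening (hδpos n) _)
  obtain ⟨ρ, hρpos, hρ⟩ := (isCompact_asSet A₀).exists_thickening_subset_open
    (isOpen_iUnion hVopen) hsub
  refine ⟨ENNReal.ofReal ρ, by simpa using hρpos, ?_⟩
  intro A hA
  simp only [EMetric.mem_ball] at hA
  simp only [mem_compl_iff, mem_setOf_eq, not_le]
  have hHE : EMetric.hausdorffEdist (asSet A) (asSet A₀) < ENNReal.ofReal ρ := by
    have : EMetric.hausdorffEdist (asSet A) (asSet A₀)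
        = EMetric.hausdorffEdist (A : Set unitInterval) (A₀ : Set unitInterval) :=
      EMetric.hausdorffEdist_image isometry_subtype_coe
    rw [this]
    exact hA
  have hsubA : asSet A ⊆ ⋃ n, V n := by
    refine subset_trans ?_ hρ
    intro x hx
    obtain ⟨y, hy, hxy⟩ := EMetric.exists_edist_lt_of_hausdorffEdist_lt hx hHE
    exact (Metric.mem_thickening_iff_exists_edist_lt _ _).2 ⟨y, hy, hxy⟩
  exact lt_of_le_of_lt (hcontent_le_of_cover V hsubA) hsum'

lemma dimH_asSet_le_one (A : K01) : dimH (asSet A) ≤ 1 := by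
  have := dimH_mono (subset_univ (asSet A))
  rwa [Real.dimH_univ] at this

lemma dimH_asSet_ne_top (A : K01) : dimH (asSet A) ≠ ⊤ :=
  ne_top_of_le_ne_top (by norm_num) (dimH_asSet_le_one A)

lemma le_dimH_of_hcontent_ne_zero {q : ℝ} (hq : 0 ≤ q) {A : Set ℝ}
    (h : hcontent q A ≠ 0) : ENNReal.ofReal q ≤ dimH A := by
  by_contra hlt
  push_neg at hlt
  have h0 : μH[((q.toNNReal : ℝ≥0) : ℝ)] A = 0 := by
    refine hausdorffMeasure_of_dimH_lt ?_
    rwa [ENNReal.ofReal] at hlt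
  rw [Real.coe_toNNReal q hq] at h0
  exact h (le_antisymm (h0 ▸ hcontent_le_hausdorffMeasure q A) zero_le)

lemma hcontent_ne_zero_of_lt_dimH {q : ℝ} (hq : 0 < q) {A : Set ℝ}
    (h : ENNReal.ofReal q < dimH A) : hcontent q A ≠ 0 := by
  intro h0
  have h1 : μH[((q.toNNReal : ℝ≥0) : ℝ)] A = ⊤ := by
    refine hausdorffMeasure_of_lt_dimH ?_
    rwa [ENNReal.ofReal] at h
  rw [Real.coe_toNNReal q hq.le] at h1
  exact ENNReal.top_ne_zero (h1 ▸ hausdorffMeasure_eq_zero_of_hcontent hq h0)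

lemma isSigma02_iUnion {X : Type*} [TopologicalSpace X] {ι : Type*} [Countable ι]
    (F : ι → Set X) (h : ∀ i, IsClosed (F i)) : IsSigma02 (⋃ i, F i) := by
  cases isEmpty_or_nonempty ι with
  | inl hE => exact ⟨fun _ => ∅, fun _ => isClosed_empty, by simp⟩
  | inr hN =>
    obtain ⟨f, hf⟩ := exists_surjective_nat ι
    exact ⟨F ∘ f, fun n => h _, (hf.iUnion_comp F).symm⟩

lemma sigma_gt (c : ℝ) (hc : 0 ≤ c) :
    IsSigma02 {Ap : K01 × unitInterval | hausdorffDim (asSet Ap.1) > (Ap.2 : ℝ) - c} := by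
  classical
  set F : (ℚ × ℕ × ℕ) ⊕ ℕ → Set (K01 × unitInterval) := fun i =>
    match i with
    | Sum.inl (q, k, m) =>
        if _ : 0 < q ∧ (q : ℝ) < 1 then
          {Ap : K01 × unitInterval | ((k : ℝ≥0∞) + 1)⁻¹ ≤ hcontent (q : ℝ) (asSet Ap.1)} ∩
          {Ap : K01 × unitInterval | (Ap.2 : ℝ) - c ≤ (q : ℝ) - 1 / (m + 1)}
        else ∅
    | Sum.inr m => {Ap : K01 × unitInterval | (Ap.2 : ℝ) - c ≤ -(1 / (m + 1))} with hF
  have hsnd : Continuous fun Ap : K01 × unitInterval => (Ap.2 : ℝ) :=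
    continuous_subtype_val.comp continuous_snd
  have hclosed : ∀ i, IsClosed (F i) := by
    rintro (⟨q, k, m⟩ | m)
    · simp only [hF]
      split_ifs with hq
      · refine IsClosed.inter ?_ ?_
        · exact (isClosed_hcontent_ge (q : ℝ) (by exact_mod_cast hq.1) hq.2.le _).preimage
            continuous_fst
        · exact isClosed_le (by fun_prop) continuous_const
      · exact isClosed_empty
    · exact isClosed_le (by fun_prop) continuous_const
  have hEq : {Ap : K01 × unitInterval | hausdorffDim (asSet Ap.1) > (Ap.2 : ℝ) - c}
      = ⋃ i, F i := by
    ext ⟨A, p⟩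
    simp only [mem_setOf_eq, mem_iUnion]
    constructor
    · intro h
      rcases lt_or_ge ((p : ℝ) - c) 0 with hneg | hpos
      · obtain ⟨m, hm⟩ := exists_nat_one_div_lt (show (0 : ℝ) < -((p : ℝ) - c) by linarith)
        refine ⟨Sum.inr m, ?_⟩
        simp only [hF, mem_setOf_eq]
        linarith
      · have hdne := dimH_asSet_ne_top A
        obtain ⟨q, hq1, hq2⟩ := exists_rat_btwn (show (p : ℝ) - c < (dimH (asSet A)).toReal from h)
        have hq0 : (0 : ℝ) < (q : ℝ) := lt_of_le_of_lt hpos hq1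
        have hql : (q : ℝ) < 1 := by
          refine lt_of_lt_of_le hq2 ?_
          have := ENNReal.toReal_mono (by norm_num) (dimH_asSet_le_one A)
          simpa using this
        have hofq : ENNReal.ofReal (q : ℝ) < dimH (asSet A) := by
          rw [ENNReal.ofReal_lt_iff_lt_toReal hq0.le hdne]
          exact hq2
        have hcne := hcontent_ne_zero_of_lt_dimH hq0 hofq
        obtain ⟨k, hk⟩ := ENNReal.exists_inv_nat_lt hcne
        obtain ⟨m, hm⟩ := exists_nat_one_div_lt (show (0 : ℝ) < (q : ℝ) - ((p : ℝ) - c) by linarith)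
        refine ⟨Sum.inl (q, k, m), ?_⟩
        have hqq : 0 < q ∧ (q : ℝ) < 1 := ⟨by exact_mod_cast hq0, hql⟩
        simp only [hF, dif_pos hqq, mem_inter_iff, mem_setOf_eq]
        constructor
        · refine le_trans (le_trans ?_ hk.le) le_rfl
          gcongr
          exact le_self_add
        · linarith
    · rintro ⟨(⟨q, k, m⟩ | m), hi⟩
      · simp only [hF] at hi
        split_ifs at hi with hq
        · obtain ⟨h1, h2⟩ := hi
          have hcne : hcontent (q : ℝ) (asSet A) ≠ 0 := by
            refine ne_of_gt (lt_of_lt_of_le ?_ h1)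
            rw [ENNReal.inv_pos]
            exact (ENNReal.add_lt_top.2 ⟨ENNReal.natCast_lt_top k, by norm_num⟩).ne
          have hq0 : (0 : ℝ) < (q : ℝ) := by exact_mod_cast hq.1
          have hle : ENNReal.ofReal (q : ℝ) ≤ dimH (asSet A) :=
            le_dimH_of_hcontent_ne_zero hq0.le hcne
          have : (q : ℝ) ≤ hausdorffDim (asSet A) := by
            have := ENNReal.toReal_mono (dimH_asSet_ne_top A) hle
            rwa [ENNReal.toReal_ofReal hq0.le] at this
          have hm : (0 : ℝ) < 1 / (m + 1) := by positivity
          simp only [mem_setOf_eq] at h2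
          unfold hausdorffDim at this ⊢
          linarith
        · exact absurd hi (notMem_empty _)
      · simp only [hF, mem_setOf_eq] at hi
        have hm : (0 : ℝ) < 1 / (m + 1) := by positivity
        have h0 : (0 : ℝ) ≤ hausdorffDim (asSet A) := ENNReal.toReal_nonneg
        unfold hausdorffDim at h0 ⊢
        linarith
  rw [hEq]
  exact isSigma02_iUnion F hclosed

/-- The set `{(A,p) ∈ K([0,1]) × [0,1] : dimH A > p}` is `Σ⁰₂` and the set
`{(A,p) : dimH A ≥ p}` is `Π⁰₃`, in the product space `K([0,1]) × [0,1]`. -/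
theorem hausdorffDim_gt_isSigma02_and_ge_isPi03 :
    IsSigma02 {Ap : K01 × unitInterval | hausdorffDim (asSet Ap.1) > (Ap.2 : ℝ)} ∧
    IsPi03 {Ap : K01 × unitInterval | hausdorffDim (asSet Ap.1) ≥ (Ap.2 : ℝ)} := by
  constructor
  · have := sigma_gt 0 le_rfl
    simpa using this
  · refine ⟨fun n => {Ap : K01 × unitInterval |
      hausdorffDim (asSet Ap.1) > (Ap.2 : ℝ) - 1 / (n + 1)}, fun n => sigma_gt _ (by positivity), ?_⟩
    ext ⟨A, p⟩
    simp only [mem_setOf_eq, mem_iInter, ge_iff_le]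
    constructor
    · intro h n
      have : (0 : ℝ) < 1 / (n + 1) := by positivity
      show hausdorffDim (asSet A) > (p : ℝ) - 1 / (n + 1)
      linarith
    · intro h
      by_contra hlt
      push_neg at hlt
      obtain ⟨n, hn⟩ := exists_nat_one_div_lt (show (0 : ℝ) < (p : ℝ) - hausdorffDim (asSet A) by linarith)
      have := h n
      linarith
end

section
/- Let K([0,1]) denote the hyperspace of nonempty compact subsets of [0,1] equipped with the Hausdorff metric. Then the set {(A,p) ∈ K([0,1]) × [0,1] : dimF(A) > p} is Σ⁰₂ (i.e. a countable union of closed sets) in the product space K([0,1]) × [0,1], and the set {(A,p) ∈ K([0,1]) × [0,1] : dimF(A) ≥ p} is Π⁰₃ (i.e. a countable intersection of Σ⁰₂ sets) in K([0,1]) × [0,1]. -/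
open MeasureTheory Topology Filter Set
open scoped ENNReal NNReal

namespace FDProof


/-- The decay condition with a fixed constant. -/
def SCond (A : Set ℝ) (s c : ℝ) : Prop :=
  ∃ μ : Measure ℝ, IsProbabilityMeasure μ ∧ μ A = 1 ∧ ∀ ξ : ℝ,
    ENNReal.ofReal ‖∫ x, Complex.exp (-(Complex.I * ((inner ℝ ξ x : ℝ) : ℂ))) ∂μ‖ ≤
      ENNReal.ofReal c * (‖ξ‖₊ : ℝ≥0∞) ^ (-(s / 2))

def Sset (A : Set ℝ) : Set ℝ := {s | 0 ≤ s ∧ s ≤ 1 ∧ ∃ c, 0 < c ∧ SCond A s c}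

lemma fourierDim_eq (A : Set ℝ) : fourierDim A = sSup (Sset A) := by
  have : (Module.finrank ℝ ℝ : ℝ) = 1 := by simp
  simp only [fourierDim, Sset, SCond, this]
  congr 1
  ext s
  constructor
  · rintro ⟨h0, h1, μ, hμ, hA, c, hc, hb⟩
    exact ⟨h0, h1, c, hc, μ, hμ, hA, hb⟩
  · rintro ⟨h0, h1, c, hc, μ, hμ, hA, hb⟩
    exact ⟨h0, h1, μ, hμ, hA, c, hc, hb⟩

lemma continuous_integrand (ξ : ℝ) :
    Continuous fun x : ℝ => Complex.exp (-(Complex.I * ((inner ℝ ξ x : ℝ) : ℂ))) := by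
  show Continuous fun x : ℝ => Complex.exp (-(Complex.I * ((x * ξ : ℝ) : ℂ)))
  fun_prop

lemma norm_integrand (ξ x : ℝ) :
    ‖Complex.exp (-(Complex.I * ((inner ℝ ξ x : ℝ) : ℂ)))‖ = 1 := by
  show ‖Complex.exp (-(Complex.I * ((x * ξ : ℝ) : ℂ)))‖ = 1
  rw [Complex.norm_exp]
  simp

lemma norm_integral_le_one (μ : Measure ℝ) [IsProbabilityMeasure μ] (ξ : ℝ) :
    ‖∫ x, Complex.exp (-(Complex.I * ((inner ℝ ξ x : ℝ) : ℂ))) ∂μ‖ ≤ 1 := by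
  have := norm_integral_le_of_norm_le_const (μ := μ) (C := 1)
    (f := fun x : ℝ => Complex.exp (-(Complex.I * ((inner ℝ ξ x : ℝ) : ℂ))))
    (by filter_upwards with x; rw [norm_integrand])
  simpa using this

lemma SCond.mono_c {A : Set ℝ} {s c c' : ℝ} (h : SCond A s c) (hcc : c ≤ c') :
    SCond A s c' := by
  obtain ⟨μ, h1, h2, h3⟩ := h
  exact ⟨μ, h1, h2, fun ξ => (h3 ξ).trans
    (mul_le_mul_left (ENNReal.ofReal_le_ofReal hcc) _)⟩

lemma zero_mem_Sset {A : Set ℝ} (hA : A.Nonempty) (hm : MeasurableSet A) :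
    (0 : ℝ) ∈ Sset A := by
  obtain ⟨x, hx⟩ := hA
  refine ⟨le_refl _, zero_le_one, 1, one_pos, Measure.dirac x, inferInstance, ?_, ?_⟩
  · rw [Measure.dirac_apply' _ hm]
    simp [hx]
  · intro ξ
    rw [integral_dirac' _ _ (continuous_integrand ξ).stronglyMeasurable]
    rw [norm_integrand, zero_div, neg_zero, ENNReal.rpow_zero]
    simp

lemma mem_Sset_of_le {A : Set ℝ} {s s' : ℝ} (hs : s ∈ Sset A) (h0 : 0 ≤ s') (h1 : s' ≤ s) :
    s' ∈ Sset A := by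
  obtain ⟨hs0, hs1, c, hc, μ, hμ1, hμ2, hb⟩ := hs
  refine ⟨h0, h1.trans hs1, max c 1, lt_of_lt_of_le one_pos (le_max_right _ _), μ, hμ1, hμ2, ?_⟩
  intro ξ
  rcases le_or_gt (‖ξ‖₊ : ℝ≥0∞) 1 with hξ | hξ
  · have h2 : (1 : ℝ≥0∞) ≤ (‖ξ‖₊ : ℝ≥0∞) ^ (-(s' / 2)) := by
      rw [ENNReal.rpow_neg, ENNReal.one_le_inv]
      exact ENNReal.rpow_le_one hξ (by positivity)
    calc ENNReal.ofReal ‖∫ x, Complex.exp (-(Complex.I * ((inner ℝ ξ x : ℝ) : ℂ))) ∂μ‖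
        ≤ 1 := by
          rw [show (1:ℝ≥0∞) = ENNReal.ofReal 1 by simp]
          exact ENNReal.ofReal_le_ofReal (norm_integral_le_one μ ξ)
      _ ≤ ENNReal.ofReal (max c 1) * 1 := by
          rw [mul_one, show (1:ℝ≥0∞) = ENNReal.ofReal 1 by simp]
          exact ENNReal.ofReal_le_ofReal (le_max_right _ _)
      _ ≤ _ := mul_le_mul_right h2 _
  · refine (hb ξ).trans ?_
    refine mul_le_mul' (ENNReal.ofReal_le_ofReal (le_max_left _ _)) ?_
    exact ENNReal.rpow_le_rpow_of_exponent_le hξ.le (by linarith)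

lemma Sset_subset {A : Set ℝ} : Sset A ⊆ Set.Iic 1 := fun s hs => hs.2.1

lemma Sset_bddAbove {A : Set ℝ} : BddAbove (Sset A) := ⟨1, fun s hs => hs.2.1⟩

lemma asSet_nonempty (A : K01) : (asSet A).Nonempty := A.nonempty.image _

lemma asSet_subset (A : K01) : asSet A ⊆ Set.Icc 0 1 := by
  rintro x ⟨y, _, rfl⟩; exact y.2

lemma asSet_compact (A : K01) : IsCompact (asSet A) :=
  A.isCompact.image continuous_subtype_val

lemma asSet_measurable (A : K01) : MeasurableSet (asSet A) :=
  (asSet_compact A).isClosed.measurableSet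

lemma Sset_nonempty (A : K01) : (Sset (asSet A)).Nonempty :=
  ⟨0, zero_mem_Sset (asSet_nonempty A) (asSet_measurable A)⟩



lemma G_nonneg {G : ℚ → ℝ} (hmono : Monotone G) (hG0 : ∀ q : ℚ, q < 0 → G q = 0) :
    ∀ q : ℚ, 0 ≤ G q := by
  intro q
  rcases lt_or_ge q 0 with h | h
  · exact (hG0 q h).ge
  · calc (0:ℝ) = G (-1) := (hG0 (-1) (by norm_num)).symm
      _ ≤ G q := hmono (by linarith)

lemma helly_sInf_nonempty (G : ℚ → ℝ) (x : ℝ) : (G '' {q : ℚ | x < (q:ℝ)}).Nonempty := by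
  obtain ⟨q, hq⟩ := exists_rat_gt x
  exact ⟨G q, q, hq, rfl⟩

lemma helly_sInf_bddBelow {G : ℚ → ℝ} (hmono : Monotone G) (hG0 : ∀ q : ℚ, q < 0 → G q = 0)
    (x : ℝ) : BddBelow (G '' {q : ℚ | x < (q:ℝ)}) := by
  refine ⟨0, ?_⟩
  rintro y ⟨q, _, rfl⟩
  exact G_nonneg hmono hG0 q

/-- Helly-type construction of a Stieltjes function from a monotone function on `ℚ`. -/
lemma exists_stieltjes {G : ℚ → ℝ} (hmono : Monotone G) (hG0 : ∀ q : ℚ, q < 0 → G q = 0) :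
    ∃ F : StieltjesFunction ℝ, ∀ x : ℝ, F x = sInf (G '' {q : ℚ | x < (q:ℝ)}) := by
  have hne := helly_sInf_nonempty G
  have hbd := helly_sInf_bddBelow hmono hG0
  have hmonoF : Monotone fun x : ℝ => sInf (G '' {q : ℚ | x < (q:ℝ)}) := by
    intro x y hxy
    apply csInf_le_csInf (hbd x) (hne y)
    apply image_mono
    intro q hq
    exact lt_of_le_of_lt hxy hq
  refine ⟨⟨fun x => sInf (G '' {q : ℚ | x < (q:ℝ)}), hmonoF, ?_⟩, fun _ => rfl⟩
  intro x
  rw [ContinuousWithinAt]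
  rw [tendsto_order]
  constructor
  · intro a ha
    filter_upwards [self_mem_nhdsWithin] with y (hy : x ≤ y)
    exact lt_of_lt_of_le ha (hmonoF hy)
  · intro b hb
    obtain ⟨v, ⟨q, hq, rfl⟩, hvb⟩ := exists_lt_of_csInf_lt (hne x) hb
    filter_upwards [Ico_mem_nhdsGE_of_mem (left_mem_Ico.mpr hq)] with y hy
    calc sInf (G '' {r : ℚ | y < (r:ℝ)}) ≤ G q := csInf_le (hbd y) ⟨q, hy.2, rfl⟩
      _ < b := hvb



noncomputable def gfun (ξ : ℝ) (t : ℝ) : ℂ := Complex.exp (-(Complex.I * (ξ:ℂ) * (t:ℂ)))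

noncomputable def dfun (ξ : ℝ) (t : ℝ) : ℂ := gfun ξ t * (-(Complex.I * (ξ:ℂ)))

lemma gfun_hasDerivAt (ξ t : ℝ) : HasDerivAt (gfun ξ) (dfun ξ t) t := by
  have h1 : HasDerivAt (fun t : ℝ => (t : ℂ)) 1 t := by
    simpa using (hasDerivAt_id t).ofReal_comp
  have h2 : HasDerivAt (fun t : ℝ => -(Complex.I * (ξ:ℂ)) * (t:ℂ)) (-(Complex.I * (ξ:ℝ))) t := by
    simpa using h1.const_mul (-(Complex.I * (ξ:ℂ)))
  have h3 := h2.cexp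
  have : (fun t : ℝ => Complex.exp (-(Complex.I * (ξ:ℂ)) * (t:ℂ))) = gfun ξ := by
    funext t; unfold gfun; ring_nf
  rw [this] at h3
  convert h3 using 1
  simp only [dfun, gfun]
  ring_nf

lemma gfun_continuous (ξ : ℝ) : Continuous (gfun ξ) := by unfold gfun; fun_prop

lemma dfun_continuous (ξ : ℝ) : Continuous (dfun ξ) := by unfold dfun gfun; fun_prop

lemma norm_gfun (ξ t : ℝ) : ‖gfun ξ t‖ = 1 := by
  rw [gfun, Complex.norm_exp]
  simp

lemma norm_dfun (ξ t : ℝ) : ‖dfun ξ t‖ = |ξ| := by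
  rw [dfun, norm_mul, norm_gfun, one_mul, norm_neg, norm_mul,
    Complex.norm_I, one_mul, Complex.norm_real, Real.norm_eq_abs]

instance : IsFiniteMeasure (volume.restrict (Icc (-1:ℝ) 2)) :=
  ⟨by rw [Measure.restrict_apply_univ]; simp⟩

/-- Integration-by-parts representation of `∫ e^{-iξx} dν` for `ν` supported on `[0,1]`. -/
lemma integral_repr (ν : Measure ℝ) [IsProbabilityMeasure ν] (hν : ν (Icc 0 1) = 1) (ξ : ℝ) :
    ∫ x, gfun ξ x ∂ν
      = gfun ξ 2 - ∫ t in Icc (-1:ℝ) 2, (ν (Iio t)).toReal • dfun ξ t := by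
  have hae : ∀ᵐ x ∂ν, x ∈ Icc (0:ℝ) 1 := by
    rw [ae_iff]
    have : {x : ℝ | ¬x ∈ Icc (0:ℝ) 1} = (Icc (0:ℝ) 1)ᶜ := rfl
    rw [this, measure_compl measurableSet_Icc (measure_ne_top _ _), hν, measure_univ]
    simp
  -- pointwise representation
  have hpt : ∀ x ∈ Icc (0:ℝ) 1,
      gfun ξ x = gfun ξ 2 - ∫ t in Icc (-1:ℝ) 2, ((Ioi x).indicator (dfun ξ)) t := by
    intro x hx
    have hx1 : (-1:ℝ) ≤ x := by linarith [hx.1]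
    have hx2 : x ≤ 2 := by linarith [hx.2]
    have hftc : ∫ t in x..2, dfun ξ t = gfun ξ 2 - gfun ξ x :=
      intervalIntegral.integral_eq_sub_of_hasDerivAt
        (fun t _ => gfun_hasDerivAt ξ t) ((dfun_continuous ξ).intervalIntegrable _ _)
    have hioc : ∫ t in x..2, dfun ξ t = ∫ t in Ioc x 2, dfun ξ t :=
      intervalIntegral.integral_of_le hx2
    have hind : ∫ t in Icc (-1:ℝ) 2, ((Ioi x).indicator (dfun ξ)) t
        = ∫ t in Ioc x 2, dfun ξ t := by
      rw [setIntegral_indicator measurableSet_Ioi]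
      have hset : Icc (-1:ℝ) 2 ∩ Ioi x = Ioc x 2 := by
        ext t
        simp only [mem_inter_iff, mem_Icc, mem_Ioi, mem_Ioc]
        constructor
        · rintro ⟨⟨h1, h2⟩, h3⟩; exact ⟨h3, h2⟩
        · rintro ⟨h1, h2⟩; exact ⟨⟨by linarith, h2⟩, h1⟩
      rw [hset]
    rw [hind, ← hioc, hftc]
    ring
  -- integrability of the double integrand
  set H : ℝ × ℝ → ℂ := fun p => ({p : ℝ × ℝ | p.1 < p.2}).indicator (fun p => dfun ξ p.2) p with hH
  have hmeasH : AEStronglyMeasurable H (ν.prod (volume.restrict (Icc (-1:ℝ) 2))) := by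
    apply Measurable.aestronglyMeasurable
    apply Measurable.indicator
    · exact ((dfun_continuous ξ).measurable).comp measurable_snd
    · exact measurableSet_lt measurable_fst measurable_snd
  have hintH : Integrable H (ν.prod (volume.restrict (Icc (-1:ℝ) 2))) := by
    apply Integrable.mono' (integrable_const |ξ|) hmeasH
    filter_upwards with p
    refine (norm_indicator_le_norm_self _ _).trans ?_
    rw [norm_dfun]
  have hHsec : ∀ x : ℝ, (fun t => H (x, t)) = (Ioi x).indicator (dfun ξ) := by
    intro x
    funext t
    simp only [hH, indicator]
    by_cases h : x < t <;> simp [h, mem_Ioi]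
  -- put it together
  calc ∫ x, gfun ξ x ∂ν
      = ∫ x, (gfun ξ 2 - ∫ t in Icc (-1:ℝ) 2, ((Ioi x).indicator (dfun ξ)) t) ∂ν := by
        apply integral_congr_ae
        filter_upwards [hae] with x hx
        exact hpt x hx
    _ = gfun ξ 2 - ∫ x, (∫ t in Icc (-1:ℝ) 2, H (x, t)) ∂ν := by
        rw [integral_sub (integrable_const _)]
        · rw [integral_const, probReal_univ]
          simp only [ENNReal.toReal_one, one_smul]
          have heq : ∀ x : ℝ, ∫ t in Icc (-1:ℝ) 2, ((Ioi x).indicator (dfun ξ)) t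
              = ∫ t in Icc (-1:ℝ) 2, H (x, t) := fun x => by rw [hHsec x]
          simp_rw [heq]
        · have := hintH.integral_prod_left
          apply this.congr
          filter_upwards with x
          rw [hHsec x]
    _ = gfun ξ 2 - ∫ t in Icc (-1:ℝ) 2, (∫ x, H (x, t) ∂ν) := by
        congr 1
        exact integral_integral_swap hintH
    _ = gfun ξ 2 - ∫ t in Icc (-1:ℝ) 2, (ν (Iio t)).toReal • dfun ξ t := by
        congr 1
        apply integral_congr_ae
        filter_upwards with t
        have : (fun x => H (x, t)) = (Iio t).indicator (fun _ => dfun ξ t) := by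
          funext x
          simp only [hH, indicator]
          by_cases h : x < t <;> simp [h, mem_Iio]
        rw [this, integral_indicator_const _ measurableSet_Iio]; rfl



lemma toReal_prob_le_one {m : Measure ℝ} [IsProbabilityMeasure m] (s : Set ℝ) :
    (m s).toReal ≤ 1 := by
  have h := prob_le_one (μ := m) (s := s)
  have := ENNReal.toReal_mono ENNReal.one_ne_top h
  simpa using this

/-- Convergence of CDFs at continuity points of the limit. -/
lemma tendsto_Iio_cdf (μ : ℕ → Measure ℝ) [hk : ∀ k, IsProbabilityMeasure (μ k)]
    {G : ℚ → ℝ} (hmono : Monotone G)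
    (F : StieltjesFunction ℝ) (hF : ∀ x : ℝ, F x = sInf (G '' {q : ℚ | x < (q:ℝ)}))
    (hbdd : ∀ x : ℝ, BddBelow (G '' {q : ℚ | x < (q:ℝ)}))
    (hne : ∀ x : ℝ, (G '' {q : ℚ | x < (q:ℝ)}).Nonempty)
    (hconv : ∀ q : ℚ, Tendsto (fun k => ((μ k) (Iic (q:ℝ))).toReal) atTop (𝓝 (G q)))
    {t : ℝ} (ht : ContinuousAt F t) :
    Tendsto (fun k => ((μ k) (Iio t)).toReal) atTop (𝓝 (F t)) := by
  have hFle : ∀ (x : ℝ) (q : ℚ), x < (q:ℝ) → F x ≤ G q := by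
    intro x q h
    rw [hF x]
    exact csInf_le (hbdd x) ⟨q, h, rfl⟩
  have hGleF : ∀ q : ℚ, G q ≤ F (q:ℝ) := by
    intro q
    rw [hF q]
    apply le_csInf (hne _)
    rintro b ⟨r, hr, rfl⟩
    have : (q:ℝ) < (r:ℝ) := hr
    exact hmono (by exact_mod_cast this.le)
  rw [Metric.tendsto_atTop]
  intro ε hε
  obtain ⟨δ, hδ, hδε⟩ := Metric.continuousAt_iff.mp ht (ε / 2) (by positivity)
  obtain ⟨q1, hq11, hq12⟩ := exists_rat_btwn (show t - δ/2 < t by linarith)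
  obtain ⟨q2, hq21, hq22⟩ := exists_rat_btwn (show t < t + δ/2 by linarith)
  -- G q1 > F t - ε/2
  have hx : t - (3/4) * δ < (q1:ℝ) := by linarith
  have hxd : dist (t - (3/4) * δ) t < δ := by
    rw [Real.dist_eq]
    rw [abs_lt]
    constructor <;> linarith
  have h1 : F t - ε / 2 < G q1 := by
    have h := hδε hxd
    rw [Real.dist_eq, abs_lt] at h
    have := hFle (t - (3/4) * δ) q1 hx
    linarith [h.1, h.2]
  -- G q2 < F t + ε/2
  have h2 : G q2 < F t + ε / 2 := by
    have hd2 : dist ((q2:ℝ)) t < δ := by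
      rw [Real.dist_eq, abs_lt]
      constructor <;> linarith
    have h := hδε hd2
    rw [Real.dist_eq, abs_lt] at h
    have := hGleF q2
    linarith [h.1, h.2]
  obtain ⟨N1, hN1⟩ := Metric.tendsto_atTop.mp (hconv q1) (ε/2) (by positivity)
  obtain ⟨N2, hN2⟩ := Metric.tendsto_atTop.mp (hconv q2) (ε/2) (by positivity)
  refine ⟨max N1 N2, fun k hkN => ?_⟩
  have hk1 := hN1 k (le_trans (le_max_left _ _) hkN)
  have hk2 := hN2 k (le_trans (le_max_right _ _) hkN)
  rw [Real.dist_eq, abs_lt] at hk1 hk2 ⊢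
  have hmono1 : ((μ k) (Iic (q1:ℝ))).toReal ≤ ((μ k) (Iio t)).toReal :=
    ENNReal.toReal_mono (measure_ne_top _ _) (measure_mono (fun x hx => lt_of_le_of_lt hx hq12))
  have hmono2 : ((μ k) (Iio t)).toReal ≤ ((μ k) (Iic (q2:ℝ))).toReal :=
    ENNReal.toReal_mono (measure_ne_top _ _)
      (measure_mono (fun x hx => le_of_lt (lt_trans hx hq21)))
  constructor
  · linarith [hk1.1, hk1.2]
  · linarith [hk2.1, hk2.2]


lemma isClosed_SCond (s c : ℝ) : IsClosed {A : K01 | SCond (asSet A) s c} := by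
  apply IsSeqClosed.isClosed
  intro B A hB hBA
  simp only [mem_setOf_eq] at hB ⊢
  choose μ hprob hsupp hbound using hB
  haveI : ∀ k, IsProbabilityMeasure (μ k) := hprob
  -- the sequence of rational CDFs
  set u : ℕ → ℚ → ℝ := fun k q => ((μ k) (Iic (q:ℝ))).toReal with hu
  have hu_mem : ∀ k, u k ∈ univ.pi (fun _ : ℚ => Icc (0:ℝ) 1) := by
    intro k q _
    exact ⟨ENNReal.toReal_nonneg, toReal_prob_le_one _⟩
  have hcpt : IsSeqCompact (univ.pi (fun _ : ℚ => Icc (0:ℝ) 1)) :=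
    (isCompact_univ_pi (fun _ => isCompact_Icc)).isSeqCompact
  obtain ⟨G, hGmem, φ, hφ, hGconv⟩ := hcpt hu_mem
  have hconv : ∀ q : ℚ, Tendsto (fun k => ((μ (φ k)) (Iic (q:ℝ))).toReal) atTop (𝓝 (G q)) :=
    fun q => tendsto_pi_nhds.mp hGconv q
  -- support facts for the μ k
  have hIcc : ∀ k, μ k (Icc (0:ℝ) 1) = 1 := fun k =>
    le_antisymm prob_le_one (by rw [← hsupp k]; exact measure_mono (asSet_subset _))
  have hcompl : ∀ k, μ k ((asSet (B k))ᶜ) = 0 := by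
    intro k
    rw [measure_compl (asSet_measurable _) (measure_ne_top _ _), hsupp k, measure_univ, tsub_self]
  -- facts about G
  have hGmono : Monotone G := by
    intro q r hqr
    refine le_of_tendsto_of_tendsto' (hconv q) (hconv r) (fun k => ?_)
    exact ENNReal.toReal_mono (measure_ne_top _ _) (measure_mono (Iic_subset_Iic.mpr (by exact_mod_cast hqr)))
  have hG0 : ∀ q : ℚ, q < 0 → G q = 0 := by
    intro q hq
    refine tendsto_nhds_unique ((hconv q).congr' ?_) tendsto_const_nhds
    filter_upwards with k
    have hsub : Iic ((q:ℝ)) ⊆ (Icc (0:ℝ) 1)ᶜ := by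
      intro x hx
      simp only [mem_compl_iff, mem_Icc, not_and_or, not_le]
      left
      calc x ≤ (q:ℝ) := hx
        _ < 0 := by exact_mod_cast hq
    have hzero : μ (φ k) (Iic ((q:ℝ))) = 0 := by
      apply measure_mono_null hsub
      rw [measure_compl measurableSet_Icc (measure_ne_top _ _), hIcc (φ k), measure_univ, tsub_self]
    show ((μ (φ k)) (Iic (q:ℝ))).toReal = 0
    rw [hzero, ENNReal.toReal_zero]
  have hG1 : ∀ q : ℚ, 1 ≤ q → G q = 1 := by
    intro q hq
    refine tendsto_nhds_unique ((hconv q).congr' ?_) tendsto_const_nhds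
    filter_upwards with k
    have hone : μ (φ k) (Iic ((q:ℝ))) = 1 := by
      refine le_antisymm prob_le_one ?_
      rw [← hIcc (φ k)]
      apply measure_mono
      intro x hx
      calc x ≤ 1 := hx.2
        _ ≤ (q:ℝ) := by exact_mod_cast hq
    show ((μ (φ k)) (Iic (q:ℝ))).toReal = 1
    rw [hone, ENNReal.toReal_one]
  -- Hausdorff-metric approximation of the support
  have hA_near : ∀ δ : ℝ, 0 < δ → ∀ᶠ k in atTop,
      ∀ x ∈ asSet (B (φ k)), ∃ y ∈ asSet A, dist x y < δ := by
    intro δ hδ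
    have hT : Tendsto (fun k => B (φ k)) atTop (𝓝 A) := hBA.comp hφ.tendsto_atTop
    filter_upwards [Metric.tendsto_nhds.mp hT δ hδ] with k hk x hx
    have hdist : Metric.hausdorffDist (asSet (B (φ k))) (asSet A) < δ := by
      have h1 : Metric.hausdorffDist (asSet (B (φ k))) (asSet A)
          = Metric.hausdorffDist ((B (φ k)) : Set unitInterval) (A : Set unitInterval) :=
        Metric.hausdorffDist_image isometry_subtype_coe
      rw [h1]
      exact hk
    refine Metric.exists_dist_lt_of_hausdorffDist_lt hx hdist ?_
    apply Metric.hausdorffEdist_ne_top_of_nonempty_of_bounded (asSet_nonempty _) (asSet_nonempty _)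
    · exact Metric.isBounded_Icc (0:ℝ) 1 |>.subset (asSet_subset _)
    · exact Metric.isBounded_Icc (0:ℝ) 1 |>.subset (asSet_subset _)
  -- G is constant on rational points of intervals avoiding A
  have hGconst : ∀ p q : ℚ, Ioo ((p:ℝ)) ((q:ℝ)) ∩ asSet A = ∅ →
      ∀ s1 s2 : ℚ, p < s1 → s1 ≤ s2 → s2 < q → G s1 = G s2 := by
    intro p q hdisj s1 s2 h1 h2 h3
    set δ : ℝ := min ((s1:ℝ) - (p:ℝ)) ((q:ℝ) - (s2:ℝ)) with hδdef
    have hδ : 0 < δ := by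
      apply lt_min <;> simp only [sub_pos] <;> exact_mod_cast (by assumption)
    refine tendsto_nhds_unique ((hconv s1).congr' ?_) (hconv s2)
    filter_upwards [hA_near δ hδ] with k hk
    -- the measures give no mass to (s1, s2]
    have hIoc : Ioc ((s1:ℝ)) ((s2:ℝ)) ∩ asSet (B (φ k)) = ∅ := by
      rw [eq_empty_iff_forall_notMem]
      rintro x ⟨hx1, hx2⟩
      obtain ⟨y, hy, hdxy⟩ := hk x hx2
      have hynot : y ∉ Ioo ((p:ℝ)) ((q:ℝ)) := by
        intro hy2
        rw [eq_empty_iff_forall_notMem] at hdisj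
        exact hdisj y ⟨hy2, hy⟩
      simp only [mem_Ioo, not_and_or, not_lt] at hynot
      rw [Real.dist_eq] at hdxy
      rcases hynot with hyp | hyq
      · have : (s1:ℝ) - (p:ℝ) ≤ x - y := by
          have := hx1.1
          linarith
        have : δ ≤ x - y := le_trans (min_le_left _ _) this
        have habs : x - y ≤ |x - y| := le_abs_self _
        linarith
      · have : (q:ℝ) - (s2:ℝ) ≤ y - x := by
          have := hx1.2
          linarith
        have : δ ≤ y - x := le_trans (min_le_right _ _) this
        have habs : y - x ≤ |x - y| := by
          rw [abs_sub_comm]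
          exact le_abs_self _
        linarith
    have hnull : μ (φ k) (Ioc ((s1:ℝ)) ((s2:ℝ))) = 0 := by
      apply measure_mono_null ?_ (hcompl (φ k))
      intro x hx
      intro hmem
      rw [eq_empty_iff_forall_notMem] at hIoc
      exact hIoc x ⟨hx, hmem⟩
    have heq : μ (φ k) (Iic ((s1:ℝ))) = μ (φ k) (Iic ((s2:ℝ))) := by
      refine le_antisymm (measure_mono (Iic_subset_Iic.mpr (by exact_mod_cast h2))) ?_
      have hsplit : Iic ((s2:ℝ)) ⊆ Iic ((s1:ℝ)) ∪ Ioc ((s1:ℝ)) ((s2:ℝ)) := by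
        intro x hx
        rcases le_or_gt x ((s1:ℝ)) with h | h
        · exact Or.inl h
        · exact Or.inr ⟨h, hx⟩
      calc μ (φ k) (Iic ((s2:ℝ))) ≤ μ (φ k) (Iic ((s1:ℝ))) + μ (φ k) (Ioc ((s1:ℝ)) ((s2:ℝ))) :=
            le_trans (measure_mono hsplit) (measure_union_le _ _)
        _ = μ (φ k) (Iic ((s1:ℝ))) := by rw [hnull, add_zero]
    show ((μ (φ k)) (Iic (s1:ℝ))).toReal = ((μ (φ k)) (Iic (s2:ℝ))).toReal
    rw [heq]
  -- the limit Stieltjes function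
  obtain ⟨F, hF⟩ := exists_stieltjes hGmono hG0
  have hbdd := helly_sInf_bddBelow hGmono hG0
  have hne := helly_sInf_nonempty G
  have hGnn := G_nonneg hGmono hG0
  have hFnonneg : ∀ x : ℝ, 0 ≤ F x := by
    intro x
    rw [hF x]
    apply le_csInf (hne x)
    rintro b ⟨r, _, rfl⟩
    exact hGnn r
  have hFle : ∀ (x : ℝ) (q : ℚ), x < (q:ℝ) → F x ≤ G q := by
    intro x q h
    rw [hF x]
    exact csInf_le (hbdd x) ⟨q, h, rfl⟩
  have hF0 : ∀ x : ℝ, x < 0 → F x = 0 := by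
    intro x hx
    refine le_antisymm ?_ (hFnonneg x)
    obtain ⟨q, hq1, hq2⟩ := exists_rat_btwn hx
    calc F x ≤ G q := hFle x q hq1
      _ = 0 := hG0 q (by exact_mod_cast hq2)
  have hF1 : ∀ x : ℝ, 1 ≤ x → F x = 1 := by
    intro x hx
    obtain ⟨q, hq⟩ := exists_rat_gt x
    refine le_antisymm ?_ ?_
    · calc F x ≤ G q := hFle x q hq
        _ = 1 := hG1 q (by exact_mod_cast le_trans hx hq.le)
    · rw [hF x]
      apply le_csInf (hne x)
      rintro b ⟨r, hr, rfl⟩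
      have : (1:ℝ) ≤ (r:ℝ) := le_trans hx (le_of_lt hr)
      rw [hG1 r (by exact_mod_cast this)]
  have hFbot : Tendsto F atBot (𝓝 0) := by
    apply Tendsto.congr' ?_ (tendsto_const_nhds (α := ℝ) (f := atBot))
    rw [EventuallyEq, eventually_atBot]
    exact ⟨-1, fun x hx => (hF0 x (by linarith)).symm⟩
  have hFtop : Tendsto F atTop (𝓝 1) := by
    apply Tendsto.congr' ?_ (tendsto_const_nhds (α := ℝ) (f := atTop))
    rw [EventuallyEq, eventually_atTop]
    exact ⟨1, fun x hx => (hF1 x hx).symm⟩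
  set ν : Measure ℝ := F.measure with hν
  haveI : IsProbabilityMeasure ν := ⟨by rw [hν, F.measure_univ hFbot hFtop]; norm_num⟩
  -- ν is supported on A
  have hIocnull : ∀ p q : ℚ, Ioo ((p:ℝ)) ((q:ℝ)) ∩ asSet A = ∅ → ν (Ioo ((p:ℝ)) ((q:ℝ))) = 0 := by
    intro p q hdisj
    rcases le_or_gt ((q:ℝ)) ((p:ℝ)) with h | h
    · rw [Ioo_eq_empty (by exact not_lt.mpr h), measure_empty]
    · have hIocr : ∀ r : ℚ, p < r → (r:ℝ) < (q:ℝ) → ν (Ioc ((p:ℝ)) ((r:ℝ))) = 0 := by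
        intro r hr1 hr2
        rw [hν, F.measure_Ioc]
        rw [ENNReal.ofReal_eq_zero, sub_nonpos]
        -- F r ≤ F p
        rw [hF ((r:ℝ)), hF ((p:ℝ))]
        apply le_csInf (hne ((p:ℝ)))
        rintro b ⟨w, hw, rfl⟩
        have hpw : (p:ℝ) < (w:ℝ) := hw
        obtain ⟨w0, hw01, hw02⟩ := exists_rat_btwn hr2
        have hrw0 : r < w0 := by exact_mod_cast hw01
        have hw0q : (w0:ℝ) < (q:ℝ) := hw02
        rcases le_total w w0 with hcase | hcase
        · have heq : G w = G w0 :=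
            hGconst p q hdisj w w0 (by exact_mod_cast hpw) hcase (by exact_mod_cast hw0q)
          calc sInf (G '' {v : ℚ | ((r:ℝ)) < (v:ℝ)}) ≤ G w0 := csInf_le (hbdd _) ⟨w0, hw01, rfl⟩
            _ = G w := heq.symm
        · calc sInf (G '' {v : ℚ | ((r:ℝ)) < (v:ℝ)}) ≤ G w0 := csInf_le (hbdd _) ⟨w0, hw01, rfl⟩
            _ ≤ G w := hGmono hcase
      have hsub : Ioo ((p:ℝ)) ((q:ℝ)) ⊆
          ⋃ r : {r : ℚ // p < r ∧ (r:ℝ) < (q:ℝ)}, Ioc ((p:ℝ)) (((r:ℚ):ℝ)) := by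
        rintro x ⟨hx1, hx2⟩
        obtain ⟨r, hr1, hr2⟩ := exists_rat_btwn hx2
        refine mem_iUnion.mpr ⟨⟨r, ?_, hr2⟩, hx1, hr1.le⟩
        exact_mod_cast lt_trans hx1 hr1
      exact measure_mono_null hsub (measure_iUnion_null (fun r => hIocr r r.2.1 r.2.2))
  have hAcompl : ν ((asSet A)ᶜ) = 0 := by
    have hcover : (asSet A)ᶜ ⊆
        ⋃ pq : {pq : ℚ × ℚ // Ioo ((pq.1:ℝ)) ((pq.2:ℝ)) ∩ asSet A = ∅},
          Ioo (((pq:ℚ×ℚ).1:ℝ)) (((pq:ℚ×ℚ).2:ℝ)) := by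
      intro x hx
      have hopen : IsOpen ((asSet A)ᶜ) := (asSet_compact A).isClosed.isOpen_compl
      obtain ⟨ε, hε, hball⟩ := Metric.isOpen_iff.mp hopen x hx
      obtain ⟨p, hp1, hp2⟩ := exists_rat_btwn (show x - ε < x by linarith)
      obtain ⟨q, hq1, hq2⟩ := exists_rat_btwn (show x < x + ε by linarith)
      have hsub : Ioo ((p:ℝ)) ((q:ℝ)) ⊆ (asSet A)ᶜ := by
        intro y hy
        apply hball
        rw [Metric.mem_ball, Real.dist_eq, abs_lt]
        constructor
        · have := hy.1; linarith
        · have := hy.2; linarith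
      have hdisj : Ioo ((p:ℝ)) ((q:ℝ)) ∩ asSet A = ∅ := by
        rw [eq_empty_iff_forall_notMem]
        rintro y ⟨hy1, hy2⟩
        exact (hsub hy1) hy2
      exact mem_iUnion.mpr ⟨⟨(p, q), hdisj⟩, hp2, hq1⟩
    exact measure_mono_null hcover
      (measure_iUnion_null (fun pq => hIocnull pq.1.1 pq.1.2 pq.2))
  have hAfull : ν (asSet A) = 1 := by
    have h := measure_add_measure_compl (μ := ν) (asSet_measurable A)
    rw [hAcompl, add_zero, measure_univ] at h
    exact h
  have hνIcc : ν (Icc 0 1) = 1 :=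
    le_antisymm prob_le_one (by rw [← hAfull]; exact measure_mono (asSet_subset A))
  -- a.e. good points
  have hbadset : (volume.restrict (Icc (-1:ℝ) 2))
      ({t : ℝ | ¬ContinuousAt F t} ∪ {t : ℝ | Function.leftLim F t ≠ F t}) = 0 := by
    have hcnt : Set.Countable ({t : ℝ | ¬ContinuousAt F t} ∪ {t : ℝ | Function.leftLim F t ≠ F t}) :=
      (F.mono.countable_not_continuousAt).union F.countable_leftLim_ne
    have hvol := hcnt.measure_zero volume
    exact le_antisymm (le_trans (Measure.restrict_apply_le _ _) hvol.le) zero_le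
  have hgood : ∀ᵐ t ∂(volume.restrict (Icc (-1:ℝ) 2)),
      ContinuousAt F t ∧ Function.leftLim F t = F t := by
    rw [ae_iff]
    apply measure_mono_null ?_ hbadset
    intro t ht
    simp only [mem_setOf_eq, not_and_or] at ht
    rcases ht with h | h
    · exact Or.inl h
    · exact Or.inr h
  have hνIio : ∀ t : ℝ, Function.leftLim F t = F t → (ν (Iio t)).toReal = F t := by
    intro t htl
    have hIic : ν (Iic t) = ENNReal.ofReal (F t) := by
      rw [hν, F.measure_Iic hFbot, sub_zero]
    have hsing : ν {t} = 0 := by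
      rw [hν, F.measure_singleton, htl, sub_self, ENNReal.ofReal_zero]
    have hIio : ν (Iio t) = ν (Iic t) := by
      refine le_antisymm (measure_mono Iio_subset_Iic_self) ?_
      calc ν (Iic t) ≤ ν (Iio t ∪ {t}) := by
            apply measure_mono
            intro x hx
            have hx' : x ≤ t := hx
            rcases hx'.lt_or_eq with h | h
            · exact Or.inl h
            · exact Or.inr h
        _ ≤ ν (Iio t) + ν {t} := measure_union_le _ _
        _ = ν (Iio t) := by rw [hsing, add_zero]
    rw [hIio, hIic, ENNReal.toReal_ofReal (hFnonneg t)]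
  -- conclusion
  refine ⟨ν, inferInstance, hAfull, ?_⟩
  intro ξ
  have hint_eq : ∀ m : Measure ℝ,
      (∫ x, Complex.exp (-(Complex.I * ((inner ℝ ξ x : ℝ):ℂ))) ∂m) = ∫ x, gfun ξ x ∂m := by
    intro m
    apply integral_congr_ae
    filter_upwards with x
    show Complex.exp (-(Complex.I * ((x * ξ : ℝ):ℂ))) = gfun ξ x
    rw [gfun, mul_comm x ξ, Complex.ofReal_mul, mul_assoc]
  have hlim : Tendsto (fun k => ∫ x, gfun ξ x ∂(μ (φ k))) atTop (𝓝 (∫ x, gfun ξ x ∂ν)) := by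
    have hrepr : ∀ k, ∫ x, gfun ξ x ∂(μ (φ k))
        = gfun ξ 2 - ∫ t in Icc (-1:ℝ) 2, ((μ (φ k)) (Iio t)).toReal • dfun ξ t :=
      fun k => integral_repr _ (hIcc (φ k)) ξ
    have hreprν : ∫ x, gfun ξ x ∂ν
        = gfun ξ 2 - ∫ t in Icc (-1:ℝ) 2, (ν (Iio t)).toReal • dfun ξ t :=
      integral_repr _ hνIcc ξ
    rw [hreprν]
    simp_rw [hrepr]
    apply Tendsto.const_sub
    apply tendsto_integral_of_dominated_convergence (bound := fun _ => |ξ|)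
    · intro k
      apply Measurable.aestronglyMeasurable
      apply Measurable.smul (f := fun t : ℝ => ((μ (φ k)) (Iio t)).toReal) ?_ (dfun_continuous ξ).measurable
      have hm : Monotone (fun t : ℝ => ((μ (φ k)) (Iio t)).toReal) := by
        intro a b hab
        exact ENNReal.toReal_mono (measure_ne_top _ _) (measure_mono (Iio_subset_Iio hab))
      exact hm.measurable
    · exact integrable_const _
    · intro k
      filter_upwards with t
      rw [norm_smul, Real.norm_eq_abs, norm_dfun]
      have h1 : |((μ (φ k)) (Iio t)).toReal| ≤ 1 := by
        rw [abs_of_nonneg ENNReal.toReal_nonneg]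
        exact toReal_prob_le_one _
      calc |((μ (φ k)) (Iio t)).toReal| * |ξ| ≤ 1 * |ξ| :=
            mul_le_mul_of_nonneg_right h1 (abs_nonneg _)
        _ = |ξ| := one_mul _
    · filter_upwards [hgood] with t ht
      have h1 : Tendsto (fun k => ((μ (φ k)) (Iio t)).toReal) atTop (𝓝 (F t)) :=
        tendsto_Iio_cdf (fun k => μ (φ k)) hGmono F hF hbdd hne hconv ht.1
      rw [hνIio t ht.2]
      exact h1.smul_const (dfun ξ t)
  have hnorm : Tendsto (fun k => ENNReal.ofReal ‖∫ x, gfun ξ x ∂(μ (φ k))‖) atTop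
      (𝓝 (ENNReal.ofReal ‖∫ x, gfun ξ x ∂ν‖)) :=
    (ENNReal.continuous_ofReal.tendsto _).comp hlim.norm
  rw [hint_eq ν]
  apply le_of_tendsto hnorm
  filter_upwards with k
  have hb := hbound (φ k) ξ
  rw [hint_eq (μ (φ k))] at hb
  exact hb

lemma isSigma02_iUnion {X : Type*} [TopologicalSpace X] {ι : Type} [Countable ι]
    (F : ι → Set X) (h : ∀ i, IsClosed (F i)) : IsSigma02 (⋃ i, F i) := by
  rcases isEmpty_or_nonempty ι with hι | hι
  · refine ⟨fun _ => ∅, fun _ => isClosed_empty, ?_⟩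
    simp
  · obtain ⟨f, hf⟩ := exists_surjective_nat ι
    exact ⟨fun n => F (f n), fun n => h (f n), (hf.iUnion_comp F).symm⟩

/-- The closed building blocks in the product space. -/
def Dset (g : unitInterval → ℝ) (qnm : ℚ × ℕ × ℕ) : Set (K01 × unitInterval) :=
  if (0 ≤ qnm.1 ∧ qnm.1 ≤ 1) then
    {A : K01 | SCond (asSet A) qnm.1 (qnm.2.1 + 1)} ×ˢ
      {p : unitInterval | g p ≤ (qnm.1 : ℝ) - 1 / (qnm.2.2 + 1)}
  else ∅

lemma isClosed_Dset {g : unitInterval → ℝ} (hg : Continuous g) (qnm : ℚ × ℕ × ℕ) :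
    IsClosed (Dset g qnm) := by
  unfold Dset
  split_ifs
  · exact (isClosed_SCond _ _).prod (isClosed_le hg continuous_const)
  · exact isClosed_empty

lemma gt_iff_mem_iUnion {g : unitInterval → ℝ} (Ap : K01 × unitInterval) :
    sSup (Sset (asSet Ap.1)) > g Ap.2 ↔ Ap ∈ ⋃ qnm : ℚ × ℕ × ℕ, Dset g qnm := by
  constructor
  · intro h
    obtain ⟨s, hs, hgs⟩ := exists_lt_of_lt_csSup (Sset_nonempty Ap.1) h
    obtain ⟨hs0, hs1, c, hc, hcond⟩ := hs
    obtain ⟨q, hq1, hq2⟩ := exists_rat_btwn hgs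
    set q' : ℚ := max q 0 with hq'
    have hq'cast : ((q' : ℚ) : ℝ) = max (q : ℝ) 0 := by rw [hq']; push_cast [Rat.cast_max]; rfl
    have hq'0 : (0:ℚ) ≤ q' := le_max_right _ _
    have hq'le : ((q' : ℚ) : ℝ) ≤ s := by
      rw [hq'cast]; exact max_le hq2.le hs0
    have hgq' : g Ap.2 < ((q' : ℚ) : ℝ) := by
      rw [hq'cast]; exact lt_of_lt_of_le hq1 (le_max_left _ _)
    have hmem : ((q' : ℚ) : ℝ) ∈ Sset (asSet Ap.1) :=
      mem_Sset_of_le ⟨hs0, hs1, c, hc, hcond⟩ (by exact_mod_cast hq'0) hq'le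
    obtain ⟨_, hle1, c', hc', hcond'⟩ := hmem
    obtain ⟨m, hm⟩ := exists_nat_one_div_lt (sub_pos.mpr hgq')
    refine mem_iUnion.mpr ⟨⟨q', ⌈c'⌉₊, m⟩, ?_⟩
    unfold Dset
    rw [if_pos ⟨hq'0, by exact_mod_cast hle1⟩]
    constructor
    · exact hcond'.mono_c ((Nat.le_ceil c').trans (by push_cast; linarith))
    · simp only [mem_setOf_eq]
      have : (1:ℝ) / (m + 1) < (q' : ℝ) - g Ap.2 := hm
      linarith
  · intro h
    obtain ⟨⟨q, n, m⟩, hmem⟩ := mem_iUnion.mp h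
    unfold Dset at hmem
    split_ifs at hmem with hq
    · obtain ⟨hcond, hp⟩ := hmem
      have hqS : ((q : ℚ) : ℝ) ∈ Sset (asSet Ap.1) :=
        ⟨by exact_mod_cast hq.1, by exact_mod_cast hq.2, (n:ℝ) + 1, by positivity, hcond⟩
      have h1 : ((q : ℚ) : ℝ) ≤ sSup (Sset (asSet Ap.1)) := le_csSup Sset_bddAbove hqS
      have h2 : g Ap.2 ≤ (q : ℝ) - 1 / (m + 1) := hp
      have : (0:ℝ) < 1 / (m + 1) := by positivity
      linarith
    · exact absurd hmem (notMem_empty _)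

lemma isSigma02_gt {g : unitInterval → ℝ} (hg : Continuous g) :
    IsSigma02 {Ap : K01 × unitInterval | sSup (Sset (asSet Ap.1)) > g Ap.2} := by
  have : {Ap : K01 × unitInterval | sSup (Sset (asSet Ap.1)) > g Ap.2}
      = ⋃ qnm : ℚ × ℕ × ℕ, Dset g qnm := by
    ext Ap; exact gt_iff_mem_iUnion Ap
  rw [this]
  exact isSigma02_iUnion _ (isClosed_Dset hg)


end FDProof

/-- The set `{(A,p) ∈ K([0,1]) × [0,1] : dimF A > p}` is `Σ⁰₂` and the set
`{(A,p) : dimF A ≥ p}` is `Π⁰₃`, in the product space `K([0,1]) × [0,1]`. -/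
theorem fourierDim_gt_isSigma02_and_ge_isPi03 :
    IsSigma02 {Ap : K01 × unitInterval | fourierDim (asSet Ap.1) > (Ap.2 : ℝ)} ∧
    IsPi03 {Ap : K01 × unitInterval | fourierDim (asSet Ap.1) ≥ (Ap.2 : ℝ)} := by
  constructor
  · have := FDProof.isSigma02_gt (g := fun p : unitInterval => (p : ℝ)) continuous_subtype_val
    convert this using 2
    ext Ap
    simp [FDProof.fourierDim_eq]
  · refine ⟨fun m => {Ap : K01 × unitInterval |
      sSup (FDProof.Sset (asSet Ap.1)) > (Ap.2 : ℝ) - 1 / (m + 1)}, fun m => ?_, ?_⟩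
    · exact FDProof.isSigma02_gt (continuous_subtype_val.sub continuous_const)
    · ext Ap
      simp only [mem_setOf_eq, mem_iInter, FDProof.fourierDim_eq]
      constructor
      · intro h m
        have : (0:ℝ) < 1 / (m + 1) := by positivity
        linarith
      · intro h
        by_contra hlt
        push_neg at hlt
        obtain ⟨m, hm⟩ := exists_nat_one_div_lt (sub_pos.mpr hlt)
        have := h m
        linarith
end

section
/- The family Salem([0,1]) = {A ∈ K([0,1]) : dimF(A) = dimH(A)} is comeager in the hyperspace K([0,1]). Moreover, for every p ∈ [0,1] the sets {K ∈ K([0,1]) : dimH(K) ≤ p} and {K ∈ K([0,1]) : dimF(K) ≤ p} are comeager in K([0,1]). -/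
open MeasureTheory Topology Filter Set
open scoped ENNReal NNReal

open Metric Complex
open scoped Real FourierTransform

lemma gauss_inv {ν : ℝ} (hν : 0 < ν) (u : ℝ) :
    Complex.exp (-(↑π/↑ν) * (u:ℂ)^2) =
      (Real.sqrt ν : ℂ) *
        ∫ ξ : ℝ, Complex.exp (↑(-2*π*ξ*u) * Complex.I) * Complex.exp (-↑π*↑ν*(ξ:ℂ)^2) := by
  have hb : (0:ℝ) < ((ν:ℂ)).re := by simpa using hν
  have h := fourier_gaussian_pi (b := (ν:ℂ)) hb
  have h2 := congrFun h u
  rw [Real.fourier_real_eq_integral_exp_smul] at h2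
  have hsqrt : ((ν:ℂ)) ^ (1/2 : ℂ) = (Real.sqrt ν : ℂ) := by
    rw [Real.sqrt_eq_rpow, Complex.ofReal_cpow hν.le]; norm_num
  have hne : (Real.sqrt ν : ℂ) ≠ 0 := by
    simpa [Complex.ofReal_eq_zero] using (Real.sqrt_pos.2 hν).ne'
  rw [hsqrt] at h2
  simp only [smul_eq_mul] at h2
  rw [h2, neg_div]
  field_simp

lemma integrable_abs_rpow_mul_exp_neg_mul_sq {b : ℝ} (hb : 0 < b) {t : ℝ} (ht : -1 < t) :
    Integrable fun x : ℝ => |x| ^ t * Real.exp (-b * x ^ 2) := by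
  have h0 : IntegrableOn (fun x : ℝ => |x| ^ t * Real.exp (-b * x ^ 2)) (Ioi 0) := by
    apply (integrableOn_rpow_mul_exp_neg_mul_sq hb ht).congr_fun ?_ measurableSet_Ioi
    intro x hx
    simp [abs_of_pos (show (0:ℝ) < x from hx)]
  have h1 : IntegrableOn (fun x : ℝ => |x| ^ t * Real.exp (-b * x ^ 2)) (Iic 0) := by
    rw [← Measure.map_neg_eq_self (volume : Measure ℝ)]
    have m : MeasurableEmbedding fun x : ℝ => -x := (Homeomorph.neg ℝ).measurableEmbedding
    rw [m.integrableOn_map_iff]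
    simp_rw [Function.comp_def, abs_neg, neg_sq, neg_preimage, neg_Iic, neg_zero]
    exact Iff.mpr integrableOn_Ici_iff_integrableOn_Ioi h0
  rw [← integrableOn_univ, ← Iic_union_Ioi (a := (0:ℝ))]
  exact h1.union h0

lemma integrable_gauss_decay {b : ℝ} (hb : 0 < b) {t c : ℝ} (ht : -1 < t) :
    Integrable fun ξ : ℝ => Real.exp (-b * ξ ^ 2) * (2 * π * |ξ|) ^ t * c := by
  have : (fun ξ : ℝ => Real.exp (-b * ξ ^ 2) * (2 * π * |ξ|) ^ t * c)
      = fun ξ : ℝ => ((2*π) ^ t * c) * (|ξ| ^ t * Real.exp (-b * ξ ^ 2)) := by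
    funext ξ
    rw [Real.mul_rpow (by positivity) (abs_nonneg _)]
    ring
  rw [this]
  exact (integrable_abs_rpow_mul_exp_neg_mul_sq hb ht).const_mul _

lemma ball_bound {μ : Measure ℝ} [IsProbabilityMeasure μ] {s c : ℝ}
    (hs : 0 < s) (hs1 : s ≤ 1) (hc : 0 < c)
    (hd : ∀ ξ : ℝ, ξ ≠ 0 →
      ‖∫ x, Complex.exp (-(Complex.I * ((ξ:ℂ) * (x:ℂ)))) ∂μ‖ ≤ c * |ξ| ^ (-(s/2))) :
    ∃ K, 0 < K ∧ ∀ x₀ r : ℝ, 0 < r →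
      (μ (Metric.ball x₀ r)).toReal ≤ K * r ^ (s/2) := by
  set t : ℝ := -(s/2) with htdef
  have ht : -1 < t := by rw [htdef]; linarith
  set C₀ : ℝ := ∫ u : ℝ, Real.exp (-π * u ^ 2) * (2 * π * |u|) ^ t with hC₀def
  have hC₀nn : 0 ≤ C₀ := by
    apply integral_nonneg
    intro u
    positivity
  refine ⟨Real.exp 1 * c * (C₀ + 1) * (Real.sqrt π) ^ (s/2), by positivity, ?_⟩
  intro x₀ r hr
  set ν : ℝ := π * r ^ 2 with hνdef
  have hν : 0 < ν := by positivity
  set a : ℝ := Real.sqrt ν with hadef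
  have ha : 0 < a := Real.sqrt_pos.2 hν
  have ha2 : a ^ 2 = ν := Real.sq_sqrt hν.le
  set f : ℝ → ℝ := fun y => Real.exp (-(π/ν) * (y - x₀) ^ 2) with hfdef
  have hf1 : ∀ y, f y ≤ 1 := by
    intro y
    have h0 : -(π/ν) * (y - x₀) ^ 2 ≤ 0 := by
      have : 0 ≤ (π/ν) * (y - x₀)^2 := by positivity
      linarith
    calc f y ≤ Real.exp 0 := Real.exp_le_exp.2 h0
      _ = 1 := Real.exp_zero
  have hfc : Continuous f := by
    apply Real.continuous_exp.comp
    fun_prop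
  have hfnn : ∀ y, 0 ≤ f y := fun y => (Real.exp_pos _).le
  have hfint : Integrable f μ := by
    apply Integrable.mono' (integrable_const (1:ℝ)) hfc.aestronglyMeasurable
    exact Eventually.of_forall fun y => by
      rw [Real.norm_eq_abs, _root_.abs_of_nonneg (hfnn y)]; exact hf1 y
  -- Step 1
  have step1 : (μ (Metric.ball x₀ r)).toReal ≤ Real.exp 1 * ∫ y, f y ∂μ := by
    rw [← measureReal_def, ← integral_indicator_one measurableSet_ball, ← integral_const_mul]
    apply integral_mono ((integrable_const (1:ℝ)).indicator measurableSet_ball)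
      (hfint.const_mul _)
    intro y
    by_cases hy : y ∈ Metric.ball x₀ r
    · rw [Set.indicator_of_mem hy]
      have hdist : |y - x₀| < r := by
        rw [← Real.dist_eq]; exact mem_ball.1 hy
      have hsq : (y - x₀)^2 ≤ r^2 := by
        have := abs_nonneg (y - x₀)
        nlinarith [_root_.sq_abs (y - x₀)]
      have hexp : -(1:ℝ) ≤ -(π/ν) * (y - x₀)^2 := by
        have hπν' : π/ν * r^2 = 1 := by
          rw [hνdef]; field_simp
        have h2 : (π/ν) * (y - x₀)^2 ≤ (π/ν) * r^2 :=
          mul_le_mul_of_nonneg_left hsq (by positivity)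
        rw [hπν'] at h2
        linarith
      have : Real.exp (-1) ≤ f y := Real.exp_le_exp.2 hexp
      calc (1:ℝ) = Real.exp 1 * Real.exp (-1) := by
            rw [← Real.exp_add]; norm_num
        _ ≤ Real.exp 1 * f y :=
            mul_le_mul_of_nonneg_left this (Real.exp_pos 1).le
    · rw [Set.indicator_of_notMem hy]
      have := hfnn y
      positivity
  -- Step 2: complex identity
  have key : ∫ y, f y ∂μ ≤ c * C₀ * a ^ (s/2) := by
    have hπν : (0:ℝ) < π * ν := by positivity
    set M : ℝ → ℂ := fun η => ∫ x, Complex.exp (-(Complex.I * ((η:ℂ) * (x:ℂ)))) ∂μ with hMdef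
    set F : ℝ → ℝ → ℂ := fun y ξ =>
      Complex.exp (↑(-2*π*ξ*(y - x₀)) * Complex.I) * Complex.exp (-↑π*↑ν*(ξ:ℂ)^2) with hFdef
    have hgauss : ∀ y : ℝ, ((f y : ℝ) : ℂ) = (a:ℂ) * ∫ ξ : ℝ, F y ξ := by
      intro y
      have h := gauss_inv hν (y - x₀)
      rw [hfdef]
      simp only
      rw [Complex.ofReal_exp]
      rw [show ((↑(-(π / ν) * (y - x₀) ^ 2) : ℝ) : ℂ) = -(↑π/↑ν) * ((y - x₀ : ℝ):ℂ)^2 by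
        push_cast; ring]
      exact h
    have hFnorm : ∀ y ξ, ‖F y ξ‖ = Real.exp (-(π*ν) * ξ^2) := by
      intro y ξ
      rw [hFdef]
      simp only
      rw [norm_mul, Complex.norm_exp_ofReal_mul_I,
        show (-↑π*↑ν*(ξ:ℂ)^2 : ℂ) = ((-(π*ν)*ξ^2 : ℝ) : ℂ) by push_cast; ring,
        ← Complex.ofReal_exp, Complex.norm_real, Real.norm_eq_abs,
        _root_.abs_of_nonneg (Real.exp_pos _).le, one_mul]
    have hgint : Integrable (fun ξ : ℝ => Real.exp (-(π*ν) * ξ^2)) volume :=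
      integrable_exp_neg_mul_sq hπν
    have hFmeas : AEStronglyMeasurable (Function.uncurry F) (μ.prod volume) := by
      apply Continuous.aestronglyMeasurable
      rw [hFdef]
      apply Continuous.mul
      · apply Complex.continuous_exp.comp
        fun_prop
      · apply Complex.continuous_exp.comp
        fun_prop
    have hFint : Integrable (Function.uncurry F) (μ.prod volume) := by
      rw [MeasureTheory.integrable_prod_iff hFmeas]
      constructor
      · refine Eventually.of_forall (fun y => ?_)
        have hFcont : Continuous (F y) := by
          rw [hFdef]
          apply Continuous.mul
          · apply Complex.continuous_exp.comp
            fun_prop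
          · apply Complex.continuous_exp.comp
            fun_prop
        apply Integrable.mono' hgint hFcont.aestronglyMeasurable
        exact Eventually.of_forall fun ξ => le_of_eq (hFnorm y ξ)
      · simp only [Function.uncurry, hFnorm]
        exact integrable_const _
    have hswap : ∫ y, ∫ ξ, F y ξ ∂volume ∂μ = ∫ ξ, ∫ y, F y ξ ∂μ ∂volume :=
      MeasureTheory.integral_integral_swap hFint
    have hinner : ∀ ξ : ℝ, ∫ y, F y ξ ∂μ =
        (Complex.exp (-↑π*↑ν*(ξ:ℂ)^2) * Complex.exp (↑(2*π*ξ*x₀) * Complex.I)) *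
          M (2*π*ξ) := by
      intro ξ
      have hpt : ∀ y : ℝ, F y ξ =
          (Complex.exp (-↑π*↑ν*(ξ:ℂ)^2) * Complex.exp (↑(2*π*ξ*x₀) * Complex.I)) *
            Complex.exp (-(Complex.I * ((↑(2*π*ξ):ℂ) * (y:ℂ)))) := by
        intro y
        rw [hFdef]
        simp only
        rw [← Complex.exp_add, ← Complex.exp_add, ← Complex.exp_add]
        congr 1
        push_cast
        ring
      calc ∫ y, F y ξ ∂μ
          = ∫ y, (Complex.exp (-↑π*↑ν*(ξ:ℂ)^2) * Complex.exp (↑(2*π*ξ*x₀) * Complex.I)) *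
              Complex.exp (-(Complex.I * ((↑(2*π*ξ):ℂ) * (y:ℂ)))) ∂μ := by
            exact integral_congr_ae (Eventually.of_forall hpt)
        _ = _ := by
            rw [MeasureTheory.integral_const_mul, hMdef]
    -- the decay bound
    have hbound : ‖∫ ξ, ∫ y, F y ξ ∂μ ∂volume‖ ≤
        ∫ ξ : ℝ, Real.exp (-(π*ν) * ξ^2) * (2*π*|ξ|) ^ t * c ∂volume := by
      apply MeasureTheory.norm_integral_le_of_norm_le (integrable_gauss_decay hπν ht)
      filter_upwards [compl_mem_ae_iff.mpr (measure_singleton (0:ℝ))] with ξ hξ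
      have hξ0 : ξ ≠ 0 := hξ
      rw [hinner ξ]
      have h2πξ : (2*π*ξ) ≠ 0 := mul_ne_zero (by positivity) hξ0
      have hM : ‖M (2*π*ξ)‖ ≤ c * (2*π*|ξ|) ^ t := by
        have := hd (2*π*ξ) h2πξ
        rwa [show |2*π*ξ| = 2*π*|ξ| by rw [abs_mul, _root_.abs_of_nonneg (by positivity : (0:ℝ) ≤ 2*π)], htdef] at this
      calc ‖(Complex.exp (-↑π*↑ν*(ξ:ℂ)^2) * Complex.exp (↑(2*π*ξ*x₀) * Complex.I)) * M (2*π*ξ)‖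
          = ‖Complex.exp (-↑π*↑ν*(ξ:ℂ)^2)‖ * ‖Complex.exp (↑(2*π*ξ*x₀) * Complex.I)‖ *
              ‖M (2*π*ξ)‖ := by rw [norm_mul, norm_mul]
        _ = Real.exp (-(π*ν) * ξ^2) * ‖M (2*π*ξ)‖ := by
            rw [Complex.norm_exp_ofReal_mul_I,
              show (-↑π*↑ν*(ξ:ℂ)^2 : ℂ) = ((-(π*ν)*ξ^2 : ℝ) : ℂ) by push_cast; ring,
              ← Complex.ofReal_exp, Complex.norm_real, Real.norm_eq_abs,
              _root_.abs_of_nonneg (Real.exp_pos _).le, mul_one]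
        _ ≤ Real.exp (-(π*ν) * ξ^2) * (c * (2*π*|ξ|) ^ t) :=
            mul_le_mul_of_nonneg_left hM (Real.exp_pos _).le
        _ = Real.exp (-(π*ν) * ξ^2) * (2*π*|ξ|) ^ t * c := by ring
    -- compute the integral via substitution
    have hsub : ∫ ξ : ℝ, Real.exp (-(π*ν) * ξ^2) * (2*π*|ξ|) ^ t ∂volume
        = a ^ (-t) * (a⁻¹ * C₀) := by
      have hcomp : ∀ ξ : ℝ, (fun u : ℝ => Real.exp (-π * u^2) * (2*π*|u|) ^ t) (a*ξ)
          = a ^ t * (Real.exp (-(π*ν) * ξ^2) * (2*π*|ξ|) ^ t) := by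
        intro ξ
        simp only
        rw [abs_mul, _root_.abs_of_pos ha,
          show 2*π*(a*|ξ|) = (2*π*|ξ|)*a by ring,
          Real.mul_rpow (by positivity) ha.le,
          show -π * (a*ξ)^2 = -(π*ν)*ξ^2 by rw [mul_pow, ← ha2]; ring]
        ring
      have hat : (0:ℝ) < a ^ t := Real.rpow_pos_of_pos ha t
      have h2 : a ^ t * ∫ ξ : ℝ, Real.exp (-(π*ν) * ξ^2) * (2*π*|ξ|) ^ t ∂volume
          = a⁻¹ * C₀ := by
        rw [← MeasureTheory.integral_const_mul]
        calc ∫ ξ : ℝ, a ^ t * (Real.exp (-(π*ν) * ξ^2) * (2*π*|ξ|) ^ t) ∂volume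
            = ∫ ξ : ℝ, (fun u : ℝ => Real.exp (-π * u^2) * (2*π*|u|) ^ t) (a*ξ) ∂volume :=
              integral_congr_ae (Eventually.of_forall fun ξ => (hcomp ξ).symm)
          _ = |a⁻¹| • ∫ u : ℝ, Real.exp (-π * u^2) * (2*π*|u|) ^ t ∂volume :=
              MeasureTheory.Measure.integral_comp_mul_left
                (fun u : ℝ => Real.exp (-π * u^2) * (2*π*|u|) ^ t) a
          _ = a⁻¹ * C₀ := by
              rw [smul_eq_mul, _root_.abs_of_pos (inv_pos.2 ha), hC₀def]
      rw [Real.rpow_neg ha.le, ← h2, inv_mul_cancel_left₀ hat.ne']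
    -- assemble
    have hIntnn : 0 ≤ ∫ y, f y ∂μ := integral_nonneg hfnn
    have hofReal : ((∫ y, f y ∂μ : ℝ) : ℂ) = ∫ y, ((f y : ℝ) : ℂ) ∂μ := (integral_ofReal).symm
    have hcval : ∫ y, ((f y : ℝ) : ℂ) ∂μ = (a:ℂ) * ∫ ξ, ∫ y, F y ξ ∂μ ∂volume := by
      rw [integral_congr_ae (Eventually.of_forall hgauss), MeasureTheory.integral_const_mul,
        hswap]
    have : ∫ y, f y ∂μ ≤ a * ((a ^ (-t) * (a⁻¹ * C₀)) * c) := by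
      have hn : ∫ y, f y ∂μ = ‖((∫ y, f y ∂μ : ℝ) : ℂ)‖ := by
        rw [Complex.norm_real, Real.norm_eq_abs, _root_.abs_of_nonneg hIntnn]
      rw [hn, hofReal, hcval, norm_mul, Complex.norm_real, Real.norm_eq_abs,
        _root_.abs_of_pos ha]
      have h2 : ∫ ξ : ℝ, Real.exp (-(π*ν) * ξ^2) * (2*π*|ξ|) ^ t * c ∂volume
          = (a ^ (-t) * (a⁻¹ * C₀)) * c := by
        rw [MeasureTheory.integral_mul_const, hsub]
      apply mul_le_mul_of_nonneg_left _ ha.le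
      rw [← h2]
      exact hbound
    calc ∫ y, f y ∂μ ≤ a * ((a ^ (-t) * (a⁻¹ * C₀)) * c) := this
      _ = c * C₀ * a ^ (s/2) := by
          rw [htdef, neg_neg]
          field_simp
  have hApos : (0:ℝ) ≤ a ^ (s/2) := by positivity
  have hsqrt_split : a ^ (s/2) = (Real.sqrt π) ^ (s/2) * r ^ (s/2) := by
    rw [hadef, hνdef, show π * r^2 = π * r^2 by rfl]
    rw [Real.sqrt_mul Real.pi_pos.le, Real.sqrt_sq hr.le,
      Real.mul_rpow (Real.sqrt_nonneg _) hr.le]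
  calc (μ (Metric.ball x₀ r)).toReal ≤ Real.exp 1 * ∫ y, f y ∂μ := step1
    _ ≤ Real.exp 1 * (c * C₀ * a ^ (s/2)) := by
        apply mul_le_mul_of_nonneg_left key (Real.exp_pos 1).le
    _ ≤ Real.exp 1 * (c * (C₀ + 1) * a ^ (s/2)) := by
        apply mul_le_mul_of_nonneg_left ?_ (Real.exp_pos 1).le
        apply mul_le_mul_of_nonneg_right ?_ hApos
        nlinarith
    _ = Real.exp 1 * c * (C₀ + 1) * (Real.sqrt π) ^ (s/2) * r ^ (s/2) := by
        rw [hsqrt_split]; ring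

/-- the scale `1/(n+2)`. -/
noncomputable def eps (n : ℕ) : ℝ := 1 / (n + 2)

lemma eps_pos (n : ℕ) : 0 < eps n := by
  unfold eps; positivity

lemma eps_le_half (n : ℕ) : eps n ≤ 1/2 := by
  unfold eps
  rw [div_le_div_iff₀ (by positivity) (by norm_num)]
  push_cast; linarith [Nat.cast_nonneg (α := ℝ) n]

lemma eps_antitone {m n : ℕ} (h : m ≤ n) : eps n ≤ eps m := by
  unfold eps
  apply div_le_div_of_nonneg_left (by norm_num) (by positivity)
  push_cast; linarith [Nat.cast_le (α := ℝ).2 h]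

/-- the open dense sets. -/
def Gset (n : ℕ) : Set K01 :=
  {A | ∃ (k : ℕ) (cen : Fin k → unitInterval) (rad : Fin k → ℝ),
    (∀ j, 0 < rad j) ∧ (∀ j, rad j < eps n) ∧
    ((A : Set unitInterval) ⊆ ⋃ j, Metric.ball (cen j) (rad j)) ∧
    ∑ j, (2 * rad j) ^ (eps n) < eps n}

lemma asSet_subset_balls {A : K01} {k : ℕ} {cen : Fin k → unitInterval} {rad : Fin k → ℝ}
    (h : (A : Set unitInterval) ⊆ ⋃ j, Metric.ball (cen j) (rad j)) :
    asSet A ⊆ ⋃ j, Metric.ball ((cen j : ℝ)) (rad j) := by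
  rintro x ⟨y, hy, rfl⟩
  obtain ⟨j, hj⟩ := mem_iUnion.1 (h hy)
  refine mem_iUnion.2 ⟨j, ?_⟩
  rw [mem_ball] at hj ⊢
  rwa [Subtype.dist_eq] at hj

lemma eps_tendsto : Tendsto (fun n : ℕ => eps n) atTop (𝓝 0) := by
  have h : Tendsto (fun n : ℕ => ((n:ℝ) + 2)) atTop atTop :=
    tendsto_atTop_add_const_right _ 2 tendsto_natCast_atTop_atTop
  have := h.inv_tendsto_atTop
  exact Tendsto.congr (fun n => by simp [eps, one_div, Pi.inv_apply]) this

lemma exists_eps_lt {ε : ℝ} (hε : 0 < ε) : ∃ m : ℕ, eps m < ε := by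
  obtain ⟨n, hn⟩ := exists_nat_one_div_lt hε
  refine ⟨n, lt_of_le_of_lt ?_ hn⟩
  unfold eps
  apply div_le_div_of_nonneg_left (by norm_num) (by positivity)
  linarith

lemma diam_ball_le_ofReal {x r : ℝ} (hr : 0 ≤ r) :
    EMetric.diam (Metric.ball x r) ≤ ENNReal.ofReal (2 * r) := by
  rw [← Metric.emetric_ball]
  refine le_trans EMetric.diam_ball ?_
  rw [ENNReal.ofReal_mul (by norm_num : (0:ℝ) ≤ 2), ENNReal.ofReal_ofNat]

lemma hausdorff_zero_of_mem {A : K01} (hA : ∀ n, A ∈ Gset n) : dimH (asSet A) = 0 := by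
  choose k cen rad hpos hlt hcov hsum using hA
  have hcov' : ∀ n, asSet A ⊆ ⋃ j, Metric.ball ((cen n j : ℝ)) (rad n j) :=
    fun n => asSet_subset_balls (hcov n)
  have hmeas : ∀ m : ℕ, μH[eps m] (asSet A) = 0 := by
    intro m
    have htend : Tendsto (fun n : ℕ => ENNReal.ofReal (2 * eps n)) atTop (𝓝 0) := by
      have := (eps_tendsto.const_mul (2:ℝ))
      rw [mul_zero] at this
      simpa using ENNReal.tendsto_ofReal this
    have hdiam : ∀ᶠ n in atTop, ∀ j,
        EMetric.diam (Metric.ball ((cen n j : ℝ)) (rad n j)) ≤ ENNReal.ofReal (2 * eps n) := by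
      refine Eventually.of_forall fun n => fun j => ?_
      refine le_trans (diam_ball_le_ofReal (hpos n j).le) (ENNReal.ofReal_le_ofReal ?_)
      have := hlt n j
      linarith
    have hle := MeasureTheory.Measure.hausdorffMeasure_le_liminf_sum (eps m) (asSet A)
      (fun n => ENNReal.ofReal (2 * eps n)) htend
      (fun n j => Metric.ball ((cen n j : ℝ)) (rad n j)) hdiam
      (Eventually.of_forall hcov')
    refine le_antisymm (le_trans hle ?_) zero_le
    have hb : ∀ᶠ n in atTop, (∑ j, EMetric.diam
          (Metric.ball ((cen n j : ℝ)) (rad n j)) ^ (eps m))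
        ≤ ENNReal.ofReal (eps n) := by
      filter_upwards [eventually_ge_atTop m] with n hn
      have step : ∀ j, EMetric.diam (Metric.ball ((cen n j : ℝ)) (rad n j)) ^ (eps m)
          ≤ ENNReal.ofReal ((2 * rad n j) ^ (eps n)) := by
        intro j
        have h1 : EMetric.diam (Metric.ball ((cen n j : ℝ)) (rad n j)) ^ (eps m)
            ≤ (ENNReal.ofReal (2 * rad n j)) ^ (eps m) :=
          ENNReal.rpow_le_rpow (diam_ball_le_ofReal (hpos n j).le) (eps_pos m).le
        have h2 : (ENNReal.ofReal (2 * rad n j)) ^ (eps m)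
            = ENNReal.ofReal ((2 * rad n j) ^ (eps m)) :=
          ENNReal.ofReal_rpow_of_pos (by linarith [hpos n j])
        have h3 : (2 * rad n j) ^ (eps m) ≤ (2 * rad n j) ^ (eps n) := by
          apply Real.rpow_le_rpow_of_exponent_ge (by linarith [hpos n j])
          · have := hlt n j
            have := eps_le_half n
            linarith
          · exact eps_antitone hn
        calc EMetric.diam (Metric.ball ((cen n j : ℝ)) (rad n j)) ^ (eps m)
            ≤ (ENNReal.ofReal (2 * rad n j)) ^ (eps m) := h1
          _ = ENNReal.ofReal ((2 * rad n j) ^ (eps m)) := h2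
          _ ≤ ENNReal.ofReal ((2 * rad n j) ^ (eps n)) := ENNReal.ofReal_le_ofReal h3
      calc ∑ j, EMetric.diam (Metric.ball ((cen n j : ℝ)) (rad n j)) ^ (eps m)
          ≤ ∑ j, ENNReal.ofReal ((2 * rad n j) ^ (eps n)) := Finset.sum_le_sum fun j _ => step j
        _ = ENNReal.ofReal (∑ j, (2 * rad n j) ^ (eps n)) :=
            (ENNReal.ofReal_sum_of_nonneg fun j _ => Real.rpow_nonneg (by linarith [hpos n j]) _).symm
        _ ≤ ENNReal.ofReal (eps n) := ENNReal.ofReal_le_ofReal (hsum n).le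
    have hliminf : liminf (fun n : ℕ => ENNReal.ofReal (eps n)) atTop = 0 := by
      have : Tendsto (fun n : ℕ => ENNReal.ofReal (eps n)) atTop (𝓝 0) := by
        simpa using ENNReal.tendsto_ofReal eps_tendsto
      exact this.liminf_eq
    calc liminf (fun n => ∑ j, EMetric.diam
            (Metric.ball ((cen n j : ℝ)) (rad n j)) ^ (eps m)) atTop
        ≤ liminf (fun n : ℕ => ENNReal.ofReal (eps n)) atTop := liminf_le_liminf hb
      _ = 0 := hliminf
  refine le_antisymm ?_ zero_le
  refine ENNReal.le_of_forall_pos_le_add fun ε hε _ => ?_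
  obtain ⟨m, hm⟩ := exists_eps_lt (by exact_mod_cast hε : (0:ℝ) < (ε:ℝ))
  have hdim : dimH (asSet A) ≤ ((eps m).toNNReal : ℝ≥0∞) := by
    apply dimH_le_of_hausdorffMeasure_ne_top
    rw [Real.coe_toNNReal _ (eps_pos m).le, hmeas m]
    exact ENNReal.zero_ne_top
  refine le_trans hdim ?_
  rw [zero_add]
  exact_mod_cast (Real.toNNReal_le_iff_le_coe).2 hm.le

lemma fourierDim_zero_of_mem {A : K01} (hA : ∀ n, A ∈ Gset n) : fourierDim (asSet A) = 0 := by
  unfold fourierDim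
  set S : Set ℝ := {s : ℝ | 0 ≤ s ∧ s ≤ (Module.finrank ℝ ℝ : ℝ) ∧
    ∃ μ : Measure ℝ, IsProbabilityMeasure μ ∧ μ (asSet A) = 1 ∧
      ∃ c : ℝ, 0 < c ∧ ∀ ξ : ℝ,
        ENNReal.ofReal ‖∫ x, Complex.exp (-(Complex.I * ((inner ℝ ξ x : ℝ) : ℂ))) ∂μ‖ ≤
          ENNReal.ofReal c * (‖ξ‖₊ : ℝ≥0∞) ^ (-(s / 2)) } with hSdef
  have h0S : (0:ℝ) ∈ S := by
    obtain ⟨y, hy⟩ := A.nonempty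
    refine ⟨le_refl 0, by simp [Module.finrank_self], Measure.dirac (y:ℝ), inferInstance,
      Measure.dirac_apply_of_mem (Set.mem_image_of_mem _ hy), 1, one_pos, ?_⟩
    intro ξ
    rw [integral_dirac]
    have hnorm : ‖Complex.exp (-(Complex.I * ((inner ℝ ξ ((y:ℝ)) : ℝ) : ℂ)))‖ = 1 := by
      rw [show (-(Complex.I * ((inner ℝ ξ ((y:ℝ)) : ℝ) : ℂ)))
          = (((-(inner ℝ ξ ((y:ℝ)) : ℝ) : ℝ)):ℂ) * Complex.I by push_cast; ring]
      exact Complex.norm_exp_ofReal_mul_I _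
    rw [hnorm]
    simp
  have hub : ∀ s ∈ S, s ≤ 0 := by
    rintro s ⟨hs0, hs1, μ, hprob, hμA, c, hc, hdecay⟩
    by_contra hpos
    push_neg at hpos
    have hs1' : s ≤ 1 := by
      have : (Module.finrank ℝ ℝ : ℝ) = 1 := by simp [Module.finrank_self]
      linarith [hs1, this ▸ hs1]
    have hd : ∀ ξ : ℝ, ξ ≠ 0 →
        ‖∫ x, Complex.exp (-(Complex.I * ((ξ:ℂ) * (x:ℂ)))) ∂μ‖ ≤ c * |ξ| ^ (-(s/2)) := by
      intro ξ hξ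
      have h := hdecay ξ
      have hι : ∀ x : ℝ, (-(Complex.I * ((inner ℝ ξ x : ℝ) : ℂ)))
          = -(Complex.I * ((ξ:ℂ) * (x:ℂ))) := by
        intro x
        rw [show (inner ℝ ξ x : ℝ) = ξ * x from Real.inner_apply ξ x]
        push_cast
        ring
      simp_rw [hι] at h
      have hrhs : ENNReal.ofReal c * ((‖ξ‖₊ : ℝ≥0∞)) ^ (-(s/2))
          = ENNReal.ofReal (c * |ξ| ^ (-(s/2))) := by
        rw [ENNReal.ofReal_mul hc.le]
        congr 1
        rw [← enorm_eq_nnnorm, Real.enorm_eq_ofReal_abs, ENNReal.ofReal_rpow_of_pos (abs_pos.2 hξ)]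
      rw [hrhs] at h
      have hnn : (0:ℝ) ≤ c * |ξ| ^ (-(s/2)) := by positivity
      exact (ENNReal.ofReal_le_ofReal_iff hnn).1 h
    obtain ⟨K, hK, hball⟩ := ball_bound hpos hs1' hc hd
    obtain ⟨N, hN⟩ := exists_nat_gt (max (2/s) K)
    have hmax1 : 2/s < (N:ℝ) := lt_of_le_of_lt (le_max_left _ _) hN
    have hmax2 : K < (N:ℝ) := lt_of_le_of_lt (le_max_right _ _) hN
    have hNpos : (0:ℝ) < (N:ℝ) + 2 := by positivity
    have hn1 : eps N ≤ s/2 := by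
      unfold eps
      rw [div_le_div_iff₀ hNpos (by norm_num)]
      rw [div_lt_iff₀ hpos] at hmax1
      nlinarith [hmax1, hpos]
    have hn2 : K * eps N < 1 := by
      have h1 : eps N < 1/K := by
        unfold eps
        apply div_lt_div_of_pos_left one_pos hK ?_
        linarith
      calc K * eps N < K * (1/K) := by
            apply mul_lt_mul_of_pos_left h1 hK
        _ = 1 := by field_simp
    obtain ⟨k, cen, rad, hpos', hlt', hcov', hsum'⟩ := hA N
    have hcover : μ (asSet A) ≤ ∑ j, μ (Metric.ball ((cen j : ℝ)) (rad j)) :=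
      le_trans (measure_mono (asSet_subset_balls hcov')) (measure_iUnion_fintype_le _ _)
    have hsum2 : ∑ j, μ (Metric.ball ((cen j : ℝ)) (rad j))
        ≤ ENNReal.ofReal (∑ j, K * (rad j) ^ (s/2)) := by
      calc ∑ j, μ (Metric.ball ((cen j : ℝ)) (rad j))
          ≤ ∑ j, ENNReal.ofReal (K * (rad j) ^ (s/2)) := by
            apply Finset.sum_le_sum
            intro j _
            rw [← ENNReal.ofReal_toReal (measure_ne_top μ _)]
            exact ENNReal.ofReal_le_ofReal (hball _ _ (hpos' j))
        _ = ENNReal.ofReal (∑ j, K * (rad j) ^ (s/2)) :=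
            (ENNReal.ofReal_sum_of_nonneg fun j _ => by
              have := hpos' j
              positivity).symm
    have hreal : ∑ j, K * (rad j) ^ (s/2) ≤ K * eps N := by
      calc ∑ j, K * (rad j) ^ (s/2) ≤ ∑ j, K * (2 * rad j) ^ (eps N) := by
            apply Finset.sum_le_sum
            intro j _
            apply mul_le_mul_of_nonneg_left ?_ hK.le
            calc (rad j) ^ (s/2)
                ≤ (2 * rad j) ^ (s/2) :=
                  Real.rpow_le_rpow (hpos' j).le (by linarith [hpos' j]) (by positivity)
              _ ≤ (2 * rad j) ^ (eps N) := by
                  apply Real.rpow_le_rpow_of_exponent_ge (by linarith [hpos' j]) ?_ hn1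
                  have h1 := hlt' j
                  have h2 := eps_le_half N
                  linarith
        _ = K * ∑ j, (2 * rad j) ^ (eps N) := by rw [Finset.mul_sum]
        _ ≤ K * eps N := mul_le_mul_of_nonneg_left (hsum').le hK.le
    have hone : (1:ℝ≥0∞) ≤ ENNReal.ofReal (K * eps N) := by
      rw [← hμA]
      exact le_trans (le_trans hcover hsum2) (ENNReal.ofReal_le_ofReal hreal)
    have : (1:ℝ) ≤ K * eps N := ENNReal.one_le_ofReal.1 hone
    linarith
  have hbdd : BddAbove S := by
    refine ⟨(Module.finrank ℝ ℝ : ℝ), fun x hx => hx.2.1⟩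
  exact le_antisymm (Real.sSup_le hub le_rfl) (le_csSup hbdd h0S)

lemma isOpen_Gset (n : ℕ) : IsOpen (Gset n) := by
  rw [Metric.isOpen_iff]
  rintro A ⟨k, cen, rad, hpos, hlt, hcov, hsum⟩
  have hcont : Continuous (fun δ : ℝ => ∑ j, (2 * (rad j + δ)) ^ (eps n)) := by
    apply continuous_finset_sum
    intro j _
    rw [continuous_iff_continuousAt]
    intro δ
    exact (Real.continuousAt_rpow_const _ _ (Or.inr (eps_pos n).le)).comp (by fun_prop)
  have hev1 : ∀ᶠ δ : ℝ in 𝓝 0, (∑ j, (2 * (rad j + δ)) ^ (eps n)) < eps n := by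
    have h0 : Tendsto (fun δ : ℝ => ∑ j, (2 * (rad j + δ)) ^ (eps n)) (𝓝 0)
        (𝓝 (∑ j, (2 * rad j) ^ (eps n))) := by
      simpa using hcont.tendsto (0:ℝ)
    exact h0.eventually_lt_const hsum
  have hev2 : ∀ᶠ δ : ℝ in 𝓝 0, ∀ j, rad j + δ < eps n := by
    rw [eventually_all]
    intro j
    have h : Tendsto (fun δ : ℝ => rad j + δ) (𝓝 0) (𝓝 (rad j)) := by
      have : Tendsto (fun δ : ℝ => rad j + δ) (𝓝 0) (𝓝 (rad j + 0)) :=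
        tendsto_const_nhds.add tendsto_id
      simpa using this
    exact h.eventually_lt_const (hlt j)
  obtain ⟨ε, hε, hball⟩ := Metric.eventually_nhds_iff_ball.1 (hev1.and hev2)
  refine ⟨ε/2, half_pos hε, ?_⟩
  intro B hB
  have hδmem := hball (ε/2) (by
    rw [mem_ball, Real.dist_eq, sub_zero, abs_of_pos (half_pos hε)]
    exact half_lt_self hε)
  obtain ⟨h1δ, h2δ⟩ := hδmem
  refine ⟨k, cen, fun j => rad j + ε/2, fun j => by linarith [hpos j], h2δ, ?_, h1δ⟩
  intro b hb
  have hdist : Metric.hausdorffDist (B : Set unitInterval) (A : Set unitInterval) < ε/2 := hB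
  have hne : EMetric.hausdorffEdist (B : Set unitInterval) (A : Set unitInterval) ≠ ⊤ :=
    Metric.hausdorffEdist_ne_top_of_nonempty_of_bounded B.nonempty A.nonempty
      B.isCompact.isBounded A.isCompact.isBounded
  obtain ⟨a, ha, hba⟩ := Metric.exists_dist_lt_of_hausdorffDist_lt hb hdist hne
  obtain ⟨j, hj⟩ := mem_iUnion.1 (hcov ha)
  rw [mem_ball] at hj
  refine mem_iUnion.2 ⟨j, mem_ball.2 ?_⟩
  calc dist b (cen j) ≤ dist b a + dist a (cen j) := dist_triangle _ _ _
    _ < ε/2 + rad j := by linarith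
    _ = rad j + ε/2 := by ring

lemma dense_Gset (n : ℕ) : Dense (Gset n) := by
  rw [Metric.dense_iff]
  intro A ε hε
  obtain ⟨F, hFsub, hFfin, hFcov⟩ := totallyBounded_iff_subset.1 A.isCompact.totallyBounded
    _ (Metric.dist_mem_uniformity (half_pos hε))
  have hFne : F.Nonempty := by
    obtain ⟨y, hy⟩ := A.nonempty
    have h := hFcov hy
    simp only [mem_iUnion, exists_prop] at h
    obtain ⟨t, htF, _⟩ := h
    exact ⟨t, htF⟩
  set B : K01 := ⟨⟨F, hFfin.isCompact⟩, hFne⟩ with hBdef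
  have hBA : dist B A < ε := by
    have : Metric.hausdorffDist (B : Set unitInterval) (A : Set unitInterval) ≤ ε/2 := by
      apply Metric.hausdorffDist_le_of_infDist (half_pos hε).le
      · intro x hx
        rw [Metric.infDist_zero_of_mem (hFsub hx)]
        exact (half_pos hε).le
      · intro x hx
        obtain ⟨y, hyF, hxy⟩ := by
          have := hFcov hx
          simp only [mem_iUnion, exists_prop, mem_setOf_eq] at this
          exact this
        exact le_trans (Metric.infDist_le_dist_of_mem hyF) hxy.le
    calc dist B A ≤ ε/2 := this
      _ < ε := half_lt_self hε
  refine ⟨B, Metric.mem_ball.2 hBA, ?_⟩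
  -- B ∈ Gset n
  set k := hFfin.toFinset.card with hkdef
  set e := hFfin.toFinset.equivFin with hedef
  have hev1 : ∀ᶠ ρ : ℝ in 𝓝 0, (k:ℝ) * (2 * ρ) ^ (eps n) < eps n := by
    have h0 : Tendsto (fun ρ : ℝ => (k:ℝ) * (2 * ρ) ^ (eps n)) (𝓝 0)
        (𝓝 ((k:ℝ) * (2 * 0) ^ (eps n))) := by
      apply Tendsto.const_mul
      apply (Real.continuousAt_rpow_const _ _ (Or.inr (eps_pos n).le)).comp (by fun_prop)
    rw [show (2:ℝ) * 0 = 0 by ring, Real.zero_rpow (eps_pos n).ne', mul_zero] at h0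
    exact h0.eventually_lt_const (eps_pos n)
  have hev2 : ∀ᶠ ρ : ℝ in 𝓝 0, ρ < eps n :=
    tendsto_id.eventually_lt_const (eps_pos n)
  obtain ⟨ε', hε', hball'⟩ := Metric.eventually_nhds_iff_ball.1 (hev1.and hev2)
  obtain ⟨h1ρ, h2ρ⟩ := hball' (ε'/2) (by
    rw [mem_ball, Real.dist_eq, sub_zero, abs_of_pos (half_pos hε')]
    exact half_lt_self hε')
  refine ⟨k, fun j => (e.symm j : unitInterval), fun _ => ε'/2,
    fun _ => half_pos hε', fun _ => h2ρ, ?_, ?_⟩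
  · intro x hx
    have hx' : x ∈ hFfin.toFinset := hFfin.mem_toFinset.2 hx
    refine mem_iUnion.2 ⟨e ⟨x, hx'⟩, mem_ball.2 ?_⟩
    have hxx : ((e.symm (e ⟨x, hx'⟩)) : unitInterval) = x := by rw [Equiv.symm_apply_apply]
    simpa [hxx] using half_pos hε'
  · rw [Finset.sum_const, Finset.card_univ, Fintype.card_fin, nsmul_eq_mul]
    exact h1ρ


/-- `Salem([0,1])` is comeager in `K([0,1])`, and for every `p ∈ [0,1]` the sets
`{dimH ≤ p}` and `{dimF ≤ p}` are comeager in `K([0,1])`. -/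
theorem salem_comeager_and_dim_le_comeager :
    {A : K01 | fourierDim (asSet A) = hausdorffDim (asSet A)} ∈ residual K01 ∧
    ∀ p ∈ Set.Icc (0:ℝ) 1,
      {A : K01 | hausdorffDim (asSet A) ≤ p} ∈ residual K01 ∧
      {A : K01 | fourierDim (asSet A) ≤ p} ∈ residual K01 := by
  have hres : (⋂ n, Gset n) ∈ residual K01 :=
    countable_iInter_mem.2 fun n => residual_of_dense_open (isOpen_Gset n) (dense_Gset n)
  have hmem : ∀ A ∈ ⋂ n, Gset n,
      fourierDim (asSet A) = 0 ∧ hausdorffDim (asSet A) = 0 := by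
    intro A hA
    rw [mem_iInter] at hA
    refine ⟨fourierDim_zero_of_mem hA, ?_⟩
    rw [hausdorffDim, hausdorff_zero_of_mem hA]
    simp
  refine ⟨?_, ?_⟩
  · apply mem_of_superset hres
    intro A hA
    obtain ⟨h1, h2⟩ := hmem A hA
    simp only [mem_setOf_eq]
    rw [h1, h2]
  · intro p hp
    constructor
    · apply mem_of_superset hres
      intro A hA
      obtain ⟨h1, h2⟩ := hmem A hA
      simp only [mem_setOf_eq]
      rw [h2]
      exact hp.1
    · apply mem_of_superset hres
      intro A hA
      obtain ⟨h1, h2⟩ := hmem A hA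
      simp only [mem_setOf_eq]
      rw [h1]
      exact hp.1
end

section
/- Fix d ≥ 1 and let K(ℝᵈ) denote the hyperspace of nonempty compact subsets of ℝᵈ with the Hausdorff metric. Then the set {(K,p) ∈ K(ℝᵈ) × [0,d] : dimH(K) > p} is Σ⁰₂ (a countable union of closed sets) in K(ℝᵈ) × [0,d], and the set {(K,p) ∈ K(ℝᵈ) × [0,d] : dimH(K) ≥ p} is Π⁰₃ (a countable intersection of Σ⁰₂ sets) in K(ℝᵈ) × [0,d]. -/
open MeasureTheory Topology Filter Set
open scoped ENNReal NNReal

/-! ### Auxiliary: open-cover Hausdorff content -/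

/-- The "open-cover Hausdorff content" of exponent `s` of a set `A`:
the infimum over countable covers of `A` by open sets of `∑ diam ^ s`
(empty sets contributing `0`). -/
noncomputable def ocont {E : Type*} [PseudoEMetricSpace E] (s : ℝ) (A : Set E) : ℝ≥0∞ :=
  ⨅ (t : ℕ → Set E) (_ : A ⊆ ⋃ n, t n) (_ : ∀ n, IsOpen (t n)),
    ∑' n, ⨆ _ : (t n).Nonempty, EMetric.diam (t n) ^ s

lemma ocont_le {E : Type*} [PseudoEMetricSpace E] {s : ℝ} {A : Set E} {t : ℕ → Set E}
    (hcov : A ⊆ ⋃ n, t n) (hopen : ∀ n, IsOpen (t n)) :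
    ocont s A ≤ ∑' n, ⨆ _ : (t n).Nonempty, EMetric.diam (t n) ^ s :=
  le_trans (iInf_le _ t) (le_trans (iInf_le _ hcov) (iInf_le _ hopen))

lemma one_le_ocont_zero {E : Type*} [PseudoEMetricSpace E] {A : Set E} (hA : A.Nonempty) :
    1 ≤ ocont 0 A := by
  refine le_iInf fun t => le_iInf fun hcov => le_iInf fun _ => ?_
  obtain ⟨x, hx⟩ := hA
  obtain ⟨n, hn⟩ := mem_iUnion.1 (hcov hx)
  have h1 : (⨆ _ : (t n).Nonempty, EMetric.diam (t n) ^ (0 : ℝ)) = 1 := by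
    rw [iSup_pos ⟨x, hn⟩, ENNReal.rpow_zero]
  exact h1 ▸ ENNReal.le_tsum n

/-- `(a + b)^s ≤ 2^s (a^s + b^s)` for `s ≥ 0`. -/
lemma add_rpow_le {s : ℝ} (hs : 0 ≤ s) (a b : ℝ≥0∞) :
    (a + b) ^ s ≤ 2 ^ s * (a ^ s + b ^ s) := by
  have h1 : a + b ≤ 2 * max a b := by
    rw [two_mul]
    exact add_le_add (le_max_left _ _) (le_max_right _ _)
  calc (a + b) ^ s ≤ (2 * max a b) ^ s := ENNReal.rpow_le_rpow h1 hs
    _ = 2 ^ s * (max a b) ^ s := ENNReal.mul_rpow_of_nonneg _ _ hs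
    _ ≤ 2 ^ s * (a ^ s + b ^ s) := by
        rcases le_total a b with h | h
        · rw [max_eq_right h]; exact mul_le_mul_right le_add_self _
        · rw [max_eq_left h]; exact mul_le_mul_right le_self_add _

section ContentMeasure

variable {E : Type*} [MetricSpace E] [MeasurableSpace E] [BorelSpace E]

/-- If the open-cover content of exponent `s > 0` vanishes, so does Hausdorff measure. -/
lemma hausdorffMeasure_eq_zero_of_ocont {s : ℝ} (hs : 0 < s) {A : Set E}
    (h : ocont s A = 0) : μH[s] A = 0 := by
  rw [Measure.hausdorffMeasure_apply]
  refine le_antisymm (iSup₂_le fun r hr => ?_) zero_le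
  refine ENNReal.le_of_forall_pos_le_add fun ε hε _ => ?_
  rw [zero_add]
  have hrs : 0 < r ^ s := by
    rcases eq_or_ne r ⊤ with hr' | hr'
    · simp [hr', ENNReal.top_rpow_of_pos hs]
    · exact ENNReal.rpow_pos hr hr'
  have hlt : ocont s A < min (↑ε) (r ^ s) := by
    rw [h]; exact lt_min (ENNReal.coe_pos.2 hε) hrs
  rw [ocont] at hlt
  simp only [iInf_lt_iff] at hlt
  obtain ⟨t, hcov, hopen, hsum⟩ := hlt
  have hdiam : ∀ n, EMetric.diam (t n) ≤ r := by
    intro n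
    rcases (t n).eq_empty_or_nonempty with he | hne
    · simp [he]
      exact (le_of_eq EMetric.diam_empty).trans zero_le
    · have h1 := ENNReal.le_tsum (f := fun n => ⨆ _ : (t n).Nonempty, EMetric.diam (t n) ^ s) n
      rw [iSup_pos hne] at h1
      have h2 : EMetric.diam (t n) ^ s < r ^ s :=
        lt_of_le_of_lt h1 (hsum.trans_le (min_le_right _ _))
      exact ((ENNReal.rpow_lt_rpow_iff hs).1 h2).le
  exact le_trans (iInf_le _ t) (le_trans (iInf_le _ hcov) (le_trans (iInf_le _ hdiam)
    (le_trans hsum.le (min_le_left _ _))))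

/-- Conversely, if the Hausdorff measure of exponent `s > 0` vanishes, so does the
open-cover content. -/
lemma ocont_eq_zero_of_hausdorffMeasure {s : ℝ} (hs : 0 < s) {A : Set E}
    (h : μH[s] A = 0) : ocont s A = 0 := by
  refine le_antisymm ?_ zero_le
  refine ENNReal.le_of_forall_pos_le_add fun ε hε _ => ?_
  rw [zero_add]
  have h2s0 : ((2 : ℝ≥0∞) ^ s) ≠ 0 := (ENNReal.rpow_pos (by norm_num) (by norm_num)).ne'
  have h2st : ((2 : ℝ≥0∞) ^ s) ≠ ⊤ := ENNReal.rpow_ne_top_of_nonneg hs.le (by norm_num)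
  set C : ℝ≥0∞ := 3 * 2 ^ s with hC
  have hC0 : C ≠ 0 := by
    simp only [hC, mul_ne_zero_iff]
    exact ⟨by norm_num, h2s0⟩
  have hCt : C ≠ ⊤ := by
    simp only [hC]
    exact ENNReal.mul_ne_top (by norm_num) h2st
  set ε' : ℝ≥0∞ := ↑ε / C with hε'
  have hε'0 : 0 < ε' := ENNReal.div_pos (ENNReal.coe_pos.2 hε).ne' hCt
  -- extract a cover with small sum from the Hausdorff measure
  have hinf : (⨅ (t : ℕ → Set E) (_ : A ⊆ ⋃ n, t n) (_ : ∀ n, EMetric.diam (t n) ≤ 1),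
      ∑' n, ⨆ _ : (t n).Nonempty, EMetric.diam (t n) ^ s) = 0 := by
    rw [Measure.hausdorffMeasure_apply] at h
    refine le_antisymm ?_ zero_le
    rw [← h]
    exact le_iSup₂ (f := fun (r : ℝ≥0∞) (_ : 0 < r) =>
      ⨅ (t : ℕ → Set E) (_ : A ⊆ ⋃ n, t n) (_ : ∀ n, EMetric.diam (t n) ≤ r),
        ∑' n, ⨆ _ : (t n).Nonempty, EMetric.diam (t n) ^ s) 1 one_pos
  have hlt : (⨅ (t : ℕ → Set E) (_ : A ⊆ ⋃ n, t n) (_ : ∀ n, EMetric.diam (t n) ≤ 1),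
      ∑' n, ⨆ _ : (t n).Nonempty, EMetric.diam (t n) ^ s) < ε' := by rw [hinf]; exact hε'0
  simp only [iInf_lt_iff] at hlt
  obtain ⟨t, hcov, _, hsum⟩ := hlt
  -- choose small thickening radii
  have key : ∀ n : ℕ, ∃ δ : ℝ≥0, 0 < δ ∧ (2 * (δ : ℝ≥0∞)) ^ s ≤ ε' * 2⁻¹ ^ n := by
    intro n
    set c : ℝ≥0∞ := ε' * 2⁻¹ ^ n with hc
    have hc0 : c ≠ 0 := by
      simp only [hc, mul_ne_zero_iff]
      exact ⟨hε'0.ne', pow_ne_zero _ (by simp)⟩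
    set b : ℝ≥0∞ := (min c 1) ^ (1 / s) with hb
    have hmin0 : 0 < min c 1 := lt_min hc0.bot_lt one_pos
    have hmint : min c 1 ≠ ⊤ := ((min_le_right _ _).trans_lt (by norm_num)).ne
    have hb0 : b ≠ 0 := (ENNReal.rpow_pos hmin0 hmint).ne'
    have hbt : b ≠ ⊤ := ENNReal.rpow_ne_top_of_nonneg (by positivity) hmint
    refine ⟨b.toNNReal / 2, ?_, ?_⟩
    · have : 0 < b.toNNReal := ENNReal.toNNReal_pos hb0 hbt
      positivity
    · have hcoe : 2 * ((b.toNNReal / 2 : ℝ≥0) : ℝ≥0∞) = b := by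
        rw [ENNReal.coe_div (by norm_num), ENNReal.coe_ofNat,
          ENNReal.mul_div_cancel' (by norm_num) (by norm_num), ENNReal.coe_toNNReal hbt]
      rw [hcoe, hb, ← ENNReal.rpow_mul, one_div, inv_mul_cancel₀ hs.ne', ENNReal.rpow_one]
      exact min_le_left _ _
  choose δ hδpos hδle using key
  set U : ℕ → Set E := fun n => Metric.thickening (δ n) (t n) with hU
  have hUopen : ∀ n, IsOpen (U n) := fun n => Metric.isOpen_thickening
  have hUcov : A ⊆ ⋃ n, U n :=
    hcov.trans (iUnion_mono fun n =>
      Metric.self_subset_thickening (by exact_mod_cast hδpos n) _)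
  have bound : ∀ n, (⨆ _ : (U n).Nonempty, EMetric.diam (U n) ^ s) ≤
      2 ^ s * ((⨆ _ : (t n).Nonempty, EMetric.diam (t n) ^ s) + ε' * 2⁻¹ ^ n) := by
    intro n
    rcases (t n).eq_empty_or_nonempty with he | hne
    · simp [hU, he, Metric.thickening_empty]
    · have hUne : (U n).Nonempty :=
        hne.mono (Metric.self_subset_thickening (by exact_mod_cast hδpos n) _)
      rw [iSup_pos hne, iSup_pos hUne]
      calc EMetric.diam (U n) ^ s ≤ (EMetric.diam (t n) + 2 * ↑(δ n)) ^ s :=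
            ENNReal.rpow_le_rpow (Metric.ediam_thickening_le _) hs.le
        _ ≤ 2 ^ s * (EMetric.diam (t n) ^ s + (2 * ↑(δ n)) ^ s) := add_rpow_le hs.le _ _
        _ ≤ 2 ^ s * (EMetric.diam (t n) ^ s + ε' * 2⁻¹ ^ n) :=
            mul_le_mul_right (add_le_add_right (hδle n) _) _
  have hgeom : ∑' n : ℕ, ((2 : ℝ≥0∞)⁻¹) ^ n = 2 := by
    rw [ENNReal.tsum_geometric, ENNReal.one_sub_inv_two, inv_inv]
  calc ocont s A ≤ ∑' n, ⨆ _ : (U n).Nonempty, EMetric.diam (U n) ^ s := ocont_le hUcov hUopen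
    _ ≤ ∑' n, 2 ^ s * ((⨆ _ : (t n).Nonempty, EMetric.diam (t n) ^ s) + ε' * 2⁻¹ ^ n) :=
        ENNReal.tsum_le_tsum bound
    _ = 2 ^ s * ((∑' n, ⨆ _ : (t n).Nonempty, EMetric.diam (t n) ^ s) + ε' * 2) := by
        rw [ENNReal.tsum_mul_left, ENNReal.tsum_add, ENNReal.tsum_mul_left, hgeom]
    _ ≤ 2 ^ s * (ε' + ε' * 2) := by gcongr
    _ = C * ε' := by rw [hC]; ring
    _ = ↑ε := ENNReal.mul_div_cancel hC0 hCt

end ContentMeasure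


/-- The superlevel sets of the open-cover content are closed in the hyperspace of
nonempty compact sets with the Hausdorff metric. -/
lemma isClosed_ocont_ge {E : Type*} [MetricSpace E] (s : ℝ) (q : ℝ≥0∞) :
    IsClosed {K : TopologicalSpace.NonemptyCompacts E | q ≤ ocont s (K : Set E)} := by
  rw [← isOpen_compl_iff, EMetric.isOpen_iff]
  intro K hK
  simp only [mem_compl_iff, mem_setOf_eq, not_le] at hK
  rw [ocont] at hK
  simp only [iInf_lt_iff] at hK
  obtain ⟨t, hcov, hopen, hsum⟩ := hK
  obtain ⟨I, hI⟩ := K.isCompact.elim_finite_subcover t hopen hcov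
  obtain ⟨δ, δpos, hδ⟩ :=
    K.isCompact.exists_thickening_subset_open (isOpen_biUnion fun i _ => hopen i) hI
  refine ⟨ENNReal.ofReal δ, by simp [δpos], ?_⟩
  intro K' hK'
  simp only [mem_compl_iff, mem_setOf_eq, not_le]
  have hd : EMetric.hausdorffEdist (K' : Set E) (K : Set E) < ENNReal.ofReal δ := by
    rw [EMetric.mem_ball] at hK'
    exact hK'
  have hsub : (K' : Set E) ⊆ ⋃ n, t n := by
    intro x hx
    obtain ⟨y, hy, hxy⟩ := EMetric.exists_edist_lt_of_hausdorffEdist_lt hx hd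
    have hth : x ∈ Metric.thickening δ (K : Set E) := by
      rw [Metric.mem_thickening_iff_infEdist_lt]
      exact lt_of_le_of_lt (EMetric.infEdist_le_edist_of_mem hy) hxy
    obtain ⟨i, _, hi⟩ := mem_iUnion₂.1 (hδ hth)
    exact mem_iUnion.2 ⟨i, hi⟩
  exact lt_of_le_of_lt (ocont_le hsub hopen) hsum

section Dim

variable {E : Type*} [MetricSpace E] [MeasurableSpace E] [BorelSpace E]

lemma ocont_pos_of_lt_dimH {A : Set E} {s : ℝ} (hs : 0 < s)
    (h : ENNReal.ofReal s < dimH A) : 0 < ocont s A := by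
  rw [pos_iff_ne_zero]
  intro h0
  have hco : (↑s.toNNReal : ℝ≥0∞) < dimH A := h
  have hμ := hausdorffMeasure_of_lt_dimH hco
  rw [Real.coe_toNNReal _ hs.le] at hμ
  rw [hausdorffMeasure_eq_zero_of_ocont hs h0] at hμ
  exact (ENNReal.top_ne_zero hμ.symm)

lemma le_dimH_of_ocont_pos {A : Set E} {s : ℝ} (hs : 0 < s)
    (h : 0 < ocont s A) : ENNReal.ofReal s ≤ dimH A := by
  by_contra hlt
  push_neg at hlt
  have hco : dimH A < (↑s.toNNReal : ℝ≥0∞) := hlt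
  have hμ := hausdorffMeasure_of_dimH_lt hco
  rw [Real.coe_toNNReal _ hs.le] at hμ
  exact h.ne' (ocont_eq_zero_of_hausdorffMeasure hs hμ)

end Dim

lemma dimH_le_dim (d : ℕ) (A : Set (EuclideanSpace ℝ (Fin d))) : dimH A ≤ (d : ℝ≥0∞) := by
  have h := Real.dimH_univ_eq_finrank (EuclideanSpace ℝ (Fin d))
  rw [finrank_euclideanSpace_fin] at h
  exact (dimH_mono (subset_univ A)).trans h.le

/-- The basic closed sets in `K(ℝᵈ) × [0,d]`, for `x = (s, n, m)` and shift `a`: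
content of exponent `s` at least `1/(n+1)`, and `p ≤ s + a - 1/(m+1)`. -/
def contSet (d : ℕ) (x : ℚ × ℕ × ℕ) (a : ℝ) :
    Set (TopologicalSpace.NonemptyCompacts (EuclideanSpace ℝ (Fin d)) × Set.Icc (0:ℝ) (d:ℝ)) :=
  {Kp | ((x.2.1 : ℝ≥0∞) + 1)⁻¹ ≤ ocont (x.1 : ℝ) (Kp.1 : Set (EuclideanSpace ℝ (Fin d))) ∧
    (Kp.2 : ℝ) ≤ (x.1 : ℝ) + a - 1 / (x.2.2 + 1)}

lemma isClosed_contSet (d : ℕ) (x : ℚ × ℕ × ℕ) (a : ℝ) : IsClosed (contSet d x a) := by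
  have h1 : IsClosed {Kp : TopologicalSpace.NonemptyCompacts (EuclideanSpace ℝ (Fin d)) ×
      Set.Icc (0:ℝ) (d:ℝ) |
      ((x.2.1 : ℝ≥0∞) + 1)⁻¹ ≤ ocont (x.1 : ℝ) (Kp.1 : Set (EuclideanSpace ℝ (Fin d)))} :=
    (isClosed_ocont_ge _ _).preimage continuous_fst
  have h2 : IsClosed {Kp : TopologicalSpace.NonemptyCompacts (EuclideanSpace ℝ (Fin d)) ×
      Set.Icc (0:ℝ) (d:ℝ) | (Kp.2 : ℝ) ≤ (x.1 : ℝ) + a - 1 / (x.2.2 + 1)} :=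
    isClosed_le (continuous_subtype_val.comp continuous_snd) continuous_const
  exact h1.inter h2

lemma dim_ge_of_mem_contSet {d : ℕ} {x : ℚ × ℕ × ℕ} {a : ℝ}
    {Kp : TopologicalSpace.NonemptyCompacts (EuclideanSpace ℝ (Fin d)) × Set.Icc (0:ℝ) (d:ℝ)}
    (h : Kp ∈ contSet d x a) (hs : 0 < (x.1 : ℝ)) :
    (x.1 : ℝ) ≤ hausdorffDim (Kp.1 : Set (EuclideanSpace ℝ (Fin d))) := by
  have hq : (0 : ℝ≥0∞) < ((x.2.1 : ℝ≥0∞) + 1)⁻¹ := by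
    rw [ENNReal.inv_pos]
    exact ENNReal.add_ne_top.2 ⟨ENNReal.natCast_ne_top _, ENNReal.one_ne_top⟩
  have hpos : 0 < ocont (x.1 : ℝ) (Kp.1 : Set (EuclideanSpace ℝ (Fin d))) :=
    lt_of_lt_of_le hq h.1
  have hle := le_dimH_of_ocont_pos hs hpos
  have hne : dimH (Kp.1 : Set (EuclideanSpace ℝ (Fin d))) ≠ ⊤ :=
    ((dimH_le_dim d _).trans_lt (ENNReal.natCast_lt_top d)).ne
  exact (ENNReal.ofReal_le_iff_le_toReal hne).1 hle

lemma mem_contSet_of {d : ℕ}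
    {Kp : TopologicalSpace.NonemptyCompacts (EuclideanSpace ℝ (Fin d)) × Set.Icc (0:ℝ) (d:ℝ)}
    {s : ℚ} {a : ℝ} (hs : 0 < (s : ℝ))
    (hsd : ENNReal.ofReal (s : ℝ) < dimH (Kp.1 : Set (EuclideanSpace ℝ (Fin d))))
    (hp : (Kp.2 : ℝ) < (s : ℝ) + a) : ∃ n m : ℕ, Kp ∈ contSet d (s, n, m) a := by
  have hpos := ocont_pos_of_lt_dimH hs hsd
  obtain ⟨n, hn⟩ := ENNReal.exists_inv_nat_lt hpos.ne'
  obtain ⟨m, hm⟩ := exists_nat_one_div_lt (sub_pos.2 hp)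
  refine ⟨n, m, ?_, by push_cast; linarith⟩
  exact le_trans (ENNReal.inv_le_inv' (le_add_of_nonneg_right zero_le_one)) hn.le

/-- In `K(ℝᵈ) × [0,d]` (nonempty compact subsets of `ℝᵈ` with the Hausdorff metric):
`{(K,p) : dimH K > p}` is `Σ⁰₂` and `{(K,p) : dimH K ≥ p}` is `Π⁰₃`. -/
theorem hausdorffDim_complexity_compacts (d : ℕ) (hd : 1 ≤ d) :
    IsSigma02 {Kp : TopologicalSpace.NonemptyCompacts (EuclideanSpace ℝ (Fin d)) ×
        Set.Icc (0:ℝ) (d:ℝ) | hausdorffDim (Kp.1 : Set (EuclideanSpace ℝ (Fin d))) > (Kp.2 : ℝ)} ∧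
    IsPi03 {Kp : TopologicalSpace.NonemptyCompacts (EuclideanSpace ℝ (Fin d)) ×
        Set.Icc (0:ℝ) (d:ℝ) | hausdorffDim (Kp.1 : Set (EuclideanSpace ℝ (Fin d))) ≥ (Kp.2 : ℝ)} := by
  classical
  set e : ℕ ≃ ℚ × ℕ × ℕ := (Denumerable.eqv (ℚ × ℕ × ℕ)).symm with he
  have hne : ∀ K : TopologicalSpace.NonemptyCompacts (EuclideanSpace ℝ (Fin d)),
      dimH (K : Set (EuclideanSpace ℝ (Fin d))) ≠ ⊤ := fun K =>
    ((dimH_le_dim d _).trans_lt (ENNReal.natCast_lt_top d)).ne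
  constructor
  · refine ⟨fun i => contSet d (e i) 0, fun i => isClosed_contSet d (e i) 0, ?_⟩
    rw [e.surjective.iUnion_comp (fun x => contSet d x 0)]
    ext Kp
    simp only [mem_setOf_eq, mem_iUnion]
    constructor
    · intro h
      have h0 : (0 : ℝ) ≤ (Kp.2 : ℝ) := Kp.2.2.1
      obtain ⟨s, hs1, hs2⟩ := exists_rat_btwn h
      have hs0 : 0 < (s : ℝ) := h0.trans_lt hs1
      have hsd : ENNReal.ofReal (s : ℝ) < dimH (Kp.1 : Set (EuclideanSpace ℝ (Fin d))) := by
        rw [ENNReal.ofReal_lt_iff_lt_toReal hs0.le (hne Kp.1)]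
        exact hs2
      obtain ⟨n, m, hmem⟩ := mem_contSet_of (a := 0) hs0 hsd (by simpa using hs1)
      exact ⟨(s, n, m), hmem⟩
    · rintro ⟨⟨s, n, m⟩, hmem⟩
      have h0 : (0 : ℝ) ≤ (Kp.2 : ℝ) := Kp.2.2.1
      have h1m : (0 : ℝ) < 1 / ((m : ℝ) + 1) := by positivity
      have hple : (Kp.2 : ℝ) ≤ (s : ℝ) + 0 - 1 / ((m : ℝ) + 1) := hmem.2
      have hs0 : 0 < (s : ℝ) := by linarith
      have hdim := dim_ge_of_mem_contSet hmem hs0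
      show (Kp.2 : ℝ) < hausdorffDim (Kp.1 : Set (EuclideanSpace ℝ (Fin d)))
      linarith
  · refine ⟨fun k => ⋃ x : ℚ × ℕ × ℕ, contSet d x (1 / (k + 1)),
      fun k => ⟨fun i => contSet d (e i) (1 / (k + 1)),
        fun i => isClosed_contSet d (e i) (1 / (k + 1)),
        (e.surjective.iUnion_comp (fun x => contSet d x (1 / (k + 1)))).symm⟩, ?_⟩
    ext Kp
    simp only [mem_setOf_eq, mem_iInter, mem_iUnion]
    constructor
    · intro h k
      have h0 : (0 : ℝ) ≤ (Kp.2 : ℝ) := Kp.2.2.1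
      have hk1 : (0 : ℝ) < 1 / ((k : ℝ) + 1) := by positivity
      have hD0 : 0 ≤ hausdorffDim (Kp.1 : Set (EuclideanSpace ℝ (Fin d))) :=
        ENNReal.toReal_nonneg
      rcases eq_or_lt_of_le hD0 with hD | hD
      · -- dimension zero, hence p = 0; use s = 0
        have hp0 : (Kp.2 : ℝ) = 0 := le_antisymm (le_of_le_of_eq h hD.symm) h0
        refine ⟨((0 : ℚ), 0, k), ?_, ?_⟩
        · have h1 : (1 : ℝ≥0∞) ≤ ocont ((0 : ℚ) : ℝ)
              (Kp.1 : Set (EuclideanSpace ℝ (Fin d))) := by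
            exact_mod_cast one_le_ocont_zero Kp.1.nonempty
          simpa using h1
        · simp [contSet, hp0]
      · have hlow : max ((Kp.2 : ℝ) - 1 / ((k : ℝ) + 1)) 0 <
            hausdorffDim (Kp.1 : Set (EuclideanSpace ℝ (Fin d))) :=
          max_lt (by linarith) hD
        obtain ⟨s, hs1, hs2⟩ := exists_rat_btwn hlow
        have hs0 : 0 < (s : ℝ) := (le_max_right _ _).trans_lt hs1
        have hsd : ENNReal.ofReal (s : ℝ) < dimH (Kp.1 : Set (EuclideanSpace ℝ (Fin d))) := by
          rw [ENNReal.ofReal_lt_iff_lt_toReal hs0.le (hne Kp.1)]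
          exact hs2
        have hp : (Kp.2 : ℝ) < (s : ℝ) + 1 / ((k : ℝ) + 1) := by
          have := (le_max_left ((Kp.2 : ℝ) - 1 / ((k : ℝ) + 1)) 0).trans_lt hs1
          linarith
        obtain ⟨n, m, hmem⟩ := mem_contSet_of hs0 hsd hp
        exact ⟨(s, n, m), hmem⟩
    · intro h
      by_contra hlt
      push_neg at hlt
      have h0 : (0 : ℝ) ≤ (Kp.2 : ℝ) := Kp.2.2.1
      have hD0 : 0 ≤ hausdorffDim (Kp.1 : Set (EuclideanSpace ℝ (Fin d))) :=
        ENNReal.toReal_nonneg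
      obtain ⟨k, hk⟩ := exists_nat_one_div_lt (sub_pos.2 hlt)
      obtain ⟨⟨s, n, m⟩, hmem⟩ := h k
      have hple : (Kp.2 : ℝ) ≤ (s : ℝ) + 1 / ((k : ℝ) + 1) - 1 / ((m : ℝ) + 1) := hmem.2
      have h1m : (0 : ℝ) < 1 / ((m : ℝ) + 1) := by positivity
      rcases le_or_gt ((s : ℝ)) 0 with hs | hs
      · linarith
      · have hsD := dim_ge_of_mem_contSet hmem hs
        linarith
end

section
/- Fix d ≥ 1 and endow the set 𝓕(ℝᵈ) of all closed subsets of ℝᵈ with the Fell topology. Then the set {(A,p) ∈ 𝓕(ℝᵈ) × [0,d] : dimH(A) > p} is Σ⁰₂ (a countable union of closed sets) in 𝓕(ℝᵈ) × [0,d], and the set {(A,p) ∈ 𝓕(ℝᵈ) × [0,d] : dimH(A) ≥ p} is Π⁰₃ (a countable intersection of Σ⁰₂ sets) in 𝓕(ℝᵈ) × [0,d]. In particular, for every fixed p ∈ [0,d) the set {A ∈ 𝓕(ℝᵈ) : dimH(A) > p} is Σ⁰₂, and for every fixed q ∈ (0,d] the set {A ∈ 𝓕(ℝᵈ) : dimH(A)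 ≥ q} is Π⁰₃. -/
open MeasureTheory Topology Filter Set
open scoped ENNReal NNReal

/-- The space of all closed subsets of a topological space. -/
def FellSpace (X : Type*) [TopologicalSpace X] : Type _ := {F : Set X // IsClosed F}

/-- The Fell topology on the space of closed subsets, generated by the sets
`{F : F ∩ K = ∅}` for `K` compact and `{F : F ∩ U ≠ ∅}` for `U` open. -/
instance (X : Type*) [TopologicalSpace X] : TopologicalSpace (FellSpace X) :=
  TopologicalSpace.generateFrom
    ({S | ∃ K : Set X, IsCompact K ∧ S = {F : FellSpace X | F.1 ∩ K = ∅}} ∪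
     {S | ∃ U : Set X, IsOpen U ∧ S = {F : FellSpace X | (F.1 ∩ U).Nonempty}})

namespace FellAux

variable {X : Type*} [EMetricSpace X]

noncomputable def oc (q : ℝ) (s : Set X) : ℝ≥0∞ :=
  ⨅ (U : ℕ → Set X) (_ : ∀ i, IsOpen (U i)) (_ : s ⊆ ⋃ i, U i), ∑' i, EMetric.diam (U i) ^ q

lemma oc_le {q : ℝ} {s : Set X} {U : ℕ → Set X} (hU : ∀ i, IsOpen (U i)) (hc : s ⊆ ⋃ i, U i) :
    oc q s ≤ ∑' i, EMetric.diam (U i) ^ q :=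
  iInf_le_of_le U (iInf_le_of_le hU (iInf_le _ hc))

lemma add_rpow_le {q : ℝ} (hq : 0 ≤ q) (x y : ℝ≥0∞) :
    (x + y) ^ q ≤ 2 ^ q * (x ^ q + y ^ q) := by
  calc (x + y) ^ q ≤ (2 * max x y) ^ q := by
        apply ENNReal.rpow_le_rpow _ hq
        rw [two_mul]
        exact add_le_add (le_max_left _ _) (le_max_right _ _)
    _ = 2 ^ q * max x y ^ q := ENNReal.mul_rpow_of_nonneg _ _ hq
    _ ≤ 2 ^ q * (x ^ q + y ^ q) := by
        gcongr
        rcases max_cases x y with ⟨h, _⟩ | ⟨h, _⟩ <;> rw [h]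
        · exact le_self_add
        · exact le_add_self

variable [MeasurableSpace X] [BorelSpace X]

lemma oc_eq_zero {q : ℝ} (hq : 0 < q) {s : Set X} (h : μH[q] s = 0) : oc q s = 0 := by
  classical
  have h2q : (2 : ℝ≥0∞) ^ q ≠ ∞ := by
    simp [ENNReal.rpow_eq_top_iff]
  set C : ℝ≥0∞ := 2 ^ q * 2 ^ q * 3 with hCdef
  have hC0 : C ≠ 0 := by
    simp [hCdef, ENNReal.rpow_eq_zero_iff]
  have hCtop : C ≠ ∞ := by
    simp [hCdef, ENNReal.mul_eq_top, h2q]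
  refine le_antisymm ?_ zero_le
  refine ENNReal.le_of_forall_pos_le_add fun ε hε _ => ?_
  rw [zero_add]
  set δ : ℝ≥0∞ := ε / C with hδdef
  have hδ0 : δ ≠ 0 := (ENNReal.div_pos (by exact_mod_cast hε.ne') hCtop).ne'
  have hδtop : δ ≠ ∞ := (ENNReal.div_lt_top ENNReal.coe_ne_top hC0).ne
  -- extract a cover with guarded sum < δ
  have h1 : (⨅ (t : ℕ → Set X) (_ : s ⊆ ⋃ i, t i) (_ : ∀ i, EMetric.diam (t i) ≤ 1),
      ∑' i, ⨆ _ : (t i).Nonempty, EMetric.diam (t i) ^ q) = 0 := by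
    refine le_antisymm ?_ zero_le
    rw [← h, Measure.hausdorffMeasure_apply]
    exact le_iSup₂ (α := ℝ≥0∞) 1 one_pos
  have h2 : (⨅ (t : ℕ → Set X) (_ : s ⊆ ⋃ i, t i) (_ : ∀ i, EMetric.diam (t i) ≤ 1),
      ∑' i, ⨆ _ : (t i).Nonempty, EMetric.diam (t i) ^ q) < δ := by
    rw [h1]; exact pos_iff_ne_zero.2 hδ0
  simp only [iInf_lt_iff] at h2
  obtain ⟨t, hts, -, htsum⟩ := h2
  set g : ℕ → ℝ≥0∞ := fun i => ⨆ _ : (t i).Nonempty, EMetric.diam (t i) ^ q with hg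
  have hgfin : ∀ i, g i < ∞ := fun i =>
    lt_of_le_of_lt (ENNReal.le_tsum i) (htsum.trans (lt_top_iff_ne_top.2 hδtop))
  have hdfin : ∀ i, (t i).Nonempty → EMetric.diam (t i) ≠ ∞ := by
    intro i hi hcon
    have hgi : g i = ∞ := by
      rw [hg]
      simp only [iSup_pos hi, hcon, ENNReal.top_rpow_of_pos hq]
    exact (hgfin i).ne hgi
  set b : ℕ → ℝ≥0∞ := fun i => (δ * 2⁻¹ ^ i) ^ q⁻¹ with hb
  have hbase0 : ∀ i, δ * 2⁻¹ ^ i ≠ 0 := fun i =>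
    mul_ne_zero hδ0 (pow_ne_zero _ (by simp))
  have hbasetop : ∀ i, δ * 2⁻¹ ^ i ≠ ∞ := fun i =>
    ENNReal.mul_ne_top hδtop (ENNReal.pow_ne_top (by simp))
  have hb0 : ∀ i, b i ≠ 0 := fun i =>
    (ENNReal.rpow_pos (pos_iff_ne_zero.2 (hbase0 i)) (hbasetop i)).ne'
  have hbq : ∀ i, b i ^ q = δ * 2⁻¹ ^ i := by
    intro i
    rw [hb]
    dsimp only
    rw [← ENNReal.rpow_mul, inv_mul_cancel₀ hq.ne', ENNReal.rpow_one]
  set U : ℕ → Set X := fun i =>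
    if hi : (t i).Nonempty then EMetric.ball hi.choose (EMetric.diam (t i) + b i) else ∅ with hU
  have hUopen : ∀ i, IsOpen (U i) := by
    intro i; rw [hU]; dsimp only; split
    · exact EMetric.isOpen_ball
    · exact isOpen_empty
  have hUcov : s ⊆ ⋃ i, U i := by
    intro x hx
    obtain ⟨i, hxi⟩ := mem_iUnion.1 (hts hx)
    refine mem_iUnion.2 ⟨i, ?_⟩
    have hi : (t i).Nonempty := ⟨x, hxi⟩
    simp only [hU, dif_pos hi]
    exact EMetric.mem_ball.2 (lt_of_le_of_lt (EMetric.edist_le_diam_of_mem hxi hi.choose_spec)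
      (ENNReal.lt_add_right (hdfin i hi) (hb0 i)))
  have hpt : ∀ i, EMetric.diam (U i) ^ q ≤ 2 ^ q * 2 ^ q * (g i + δ * 2⁻¹ ^ i) := by
    intro i
    rw [hU]; dsimp only; split
    case isTrue hi =>
      calc EMetric.diam (EMetric.ball hi.choose (EMetric.diam (t i) + b i)) ^ q
          ≤ (2 * (EMetric.diam (t i) + b i)) ^ q :=
            ENNReal.rpow_le_rpow EMetric.diam_ball hq.le
        _ = 2 ^ q * (EMetric.diam (t i) + b i) ^ q := ENNReal.mul_rpow_of_nonneg _ _ hq.le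
        _ ≤ 2 ^ q * (2 ^ q * (EMetric.diam (t i) ^ q + b i ^ q)) := by
            gcongr
            exact add_rpow_le hq.le _ _
        _ = 2 ^ q * 2 ^ q * (EMetric.diam (t i) ^ q + b i ^ q) := by ring
        _ = 2 ^ q * 2 ^ q * (g i + δ * 2⁻¹ ^ i) := by rw [hbq i, hg]; simp [iSup_pos hi]
    case isFalse hi =>
      simp [show EMetric.diam (∅ : Set X) = 0 from Metric.ediam_empty, ENNReal.zero_rpow_of_pos hq]
  calc oc q s ≤ ∑' i, EMetric.diam (U i) ^ q := oc_le hUopen hUcov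
    _ ≤ ∑' i, 2 ^ q * 2 ^ q * (g i + δ * 2⁻¹ ^ i) := ENNReal.tsum_le_tsum hpt
    _ = 2 ^ q * 2 ^ q * ((∑' i, g i) + δ * ∑' i, (2 : ℝ≥0∞)⁻¹ ^ i) := by
        rw [ENNReal.tsum_mul_left, ENNReal.tsum_add, ENNReal.tsum_mul_left]
    _ ≤ 2 ^ q * 2 ^ q * (δ + δ * 2) := by
        have hgeo : ∑' i, (2 : ℝ≥0∞)⁻¹ ^ i = 2 := by
          rw [ENNReal.tsum_geometric, ENNReal.one_sub_inv_two, inv_inv]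
        rw [hgeo]
        exact mul_le_mul_right (add_le_add_left htsum.le _) _
    _ = C * δ := by rw [hCdef]; ring
    _ ≤ ε := by rw [hδdef]; exact ENNReal.mul_div_le

lemma hausdorffMeasure_eq_zero_of_oc {q : ℝ} (hq : 0 < q) {s : Set X} (h : oc q s = 0) :
    μH[q] s = 0 := by
  rw [Measure.hausdorffMeasure_apply]
  refine le_antisymm (iSup₂_le fun r hr => ?_) zero_le
  refine ENNReal.le_of_forall_pos_le_add fun ε hε _ => ?_
  rw [zero_add]
  have hrq : (0 : ℝ≥0∞) < r ^ q := by
    rcases eq_or_ne r ∞ with hrtop | hrtop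
    · rw [hrtop, ENNReal.top_rpow_of_pos hq]; exact ENNReal.coe_lt_top.trans_le le_top
    · exact ENNReal.rpow_pos hr hrtop
  set ε' : ℝ≥0∞ := min (ε : ℝ≥0∞) (r ^ q) with hε'
  have hε'0 : 0 < ε' := lt_min (by exact_mod_cast hε) hrq
  have h2 : oc q s < ε' := h ▸ hε'0
  simp only [oc, iInf_lt_iff] at h2
  obtain ⟨U, hUopen, hUcov, hUsum⟩ := h2
  have hdiam : ∀ i, EMetric.diam (U i) ≤ r := by
    intro i
    have h3 : EMetric.diam (U i) ^ q ≤ r ^ q :=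
      ((ENNReal.le_tsum i).trans hUsum.le).trans (min_le_right _ _)
    exact (ENNReal.rpow_le_rpow_iff hq).1 h3
  have hfin : (∑' i, ⨆ _ : (U i).Nonempty, EMetric.diam (U i) ^ q) ≤ (ε : ℝ≥0∞) := by
    refine le_trans (ENNReal.tsum_le_tsum fun i => iSup_le fun _ => le_rfl) ?_
    exact hUsum.le.trans (min_le_left _ _)
  exact le_trans (iInf₂_le_of_le U hUcov (iInf_le_of_le hdiam le_rfl)) hfin

section Euclid

variable {d : ℕ}

local notation "E" => EuclideanSpace ℝ (Fin d)

lemma dimH_ne_top (s : Set E) : dimH s ≠ ∞ :=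
  ((dimH_mono (subset_univ s)).trans_lt
    (by rw [Real.dimH_univ_eq_finrank]; exact ENNReal.natCast_lt_top _)).ne

lemma hausdorffDim_nonneg (s : Set E) : 0 ≤ hausdorffDim s := ENNReal.toReal_nonneg

lemma D1 {q : ℚ} (hq : 0 < q) {n m : ℕ} {A : Set E}
    (h : (1 : ℝ≥0∞) / (m + 1) ≤ oc (q : ℝ) (A ∩ Metric.closedBall 0 n)) :
    (q : ℝ) ≤ hausdorffDim A := by
  have hq' : (0 : ℝ) < (q : ℝ) := by exact_mod_cast hq
  have hoc : oc (q : ℝ) (A ∩ Metric.closedBall 0 n) ≠ 0 := by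
    intro h0
    rw [h0, le_zero_iff] at h
    simp [ENNReal.div_eq_zero_iff] at h
  have hμ : μH[(q : ℝ)] (A ∩ Metric.closedBall 0 n) ≠ 0 := fun h0 =>
    hoc (oc_eq_zero hq' h0)
  set d' : ℝ≥0 := ⟨(q : ℝ), hq'.le⟩ with hd'
  have hdim : (d' : ℝ≥0∞) ≤ dimH (A ∩ Metric.closedBall 0 n) :=
    le_dimH_of_hausdorffMeasure_ne_zero hμ
  have hdim2 : (d' : ℝ≥0∞) ≤ dimH A := hdim.trans (dimH_mono inter_subset_left)
  have := ENNReal.toReal_mono (dimH_ne_top A) hdim2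
  exact this

lemma D2 {A : Set E} {r : ℝ} (hr : 0 ≤ r) (h : r < hausdorffDim A) :
    ∃ q : ℚ, 0 < q ∧ r < (q : ℝ) ∧ ∃ n m : ℕ,
      (1 : ℝ≥0∞) / (m + 1) ≤ oc (q : ℝ) (A ∩ Metric.closedBall 0 n) := by
  obtain ⟨q, hq1, hq2⟩ := exists_rat_btwn h
  have hq0 : (0 : ℝ) < q := hr.trans_lt hq1
  refine ⟨q, by exact_mod_cast hq0, hq1, ?_⟩
  have hofq : ENNReal.ofReal (q : ℝ) < dimH A :=
    (ENNReal.ofReal_lt_iff_lt_toReal hq0.le (dimH_ne_top A)).2 hq2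
  have hA : A = ⋃ n : ℕ, A ∩ Metric.closedBall 0 n := by
    rw [← inter_iUnion, Metric.iUnion_closedBall_nat, inter_univ]
  rw [hA, dimH_iUnion, lt_iSup_iff] at hofq
  obtain ⟨n, hn⟩ := hofq
  have hμ : μH[(q : ℝ)] (A ∩ Metric.closedBall 0 n) = ∞ := by
    have := hausdorffMeasure_of_lt_dimH (d := ⟨(q : ℝ), hq0.le⟩)
      (by convert hn using 1; exact (ENNReal.ofReal_eq_coe_nnreal hq0.le).symm)
    exact this
  have hoc : oc (q : ℝ) (A ∩ Metric.closedBall 0 n) ≠ 0 := by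
    intro h0
    rw [hausdorffMeasure_eq_zero_of_oc hq0 h0] at hμ
    exact (ENNReal.zero_ne_top hμ).elim
  obtain ⟨m, hm⟩ := ENNReal.exists_inv_nat_lt hoc
  refine ⟨n, m, ?_⟩
  rw [one_div]
  refine le_trans ?_ hm.le
  exact ENNReal.inv_le_inv.2 (by exact_mod_cast le_self_add)

lemma isClosed_C (q : ℝ) (hq : 0 < q) (c : ℝ≥0∞) (n : ℕ) :
    IsClosed {A : FellSpace E | c ≤ oc q (A.1 ∩ Metric.closedBall 0 n)} := by
  rw [← isOpen_compl_iff, isOpen_iff_forall_mem_open]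
  intro A hA
  rw [mem_compl_iff, mem_setOf_eq, not_le] at hA
  simp only [oc, iInf_lt_iff] at hA
  obtain ⟨U, hUopen, hUcov, hUsum⟩ := hA
  have hcpt : IsCompact (A.1 ∩ Metric.closedBall 0 n) :=
    (isCompact_closedBall (0 : E) n).inter_left A.2
  obtain ⟨sf, hsf⟩ := hcpt.elim_finite_subcover U hUopen hUcov
  set K : Set E := Metric.closedBall 0 n \ ⋃ i ∈ sf, U i with hK
  have hKcpt : IsCompact K :=
    (isCompact_closedBall (0 : E) n).diff (isOpen_biUnion fun i _ => hUopen i)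
  classical
  refine ⟨{F : FellSpace E | F.1 ∩ K = ∅}, ?_, ?_, ?_⟩
  · intro F hF
    simp only [mem_setOf_eq] at hF
    rw [mem_compl_iff, mem_setOf_eq, not_le]
    set U' : ℕ → Set E := fun i => if i ∈ sf then U i else ∅ with hU'
    have hU'open : ∀ i, IsOpen (U' i) := by
      intro i; rw [hU']; dsimp only; split
      · exact hUopen i
      · exact isOpen_empty
    have hcov' : F.1 ∩ Metric.closedBall 0 n ⊆ ⋃ i, U' i := by
      intro x hx
      by_cases hxU : x ∈ ⋃ i ∈ sf, U i
      · obtain ⟨i, hi, hxi⟩ := mem_iUnion₂.1 hxU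
        exact mem_iUnion.2 ⟨i, by simp only [hU', if_pos hi]; exact hxi⟩
      · have hxK : x ∈ F.1 ∩ K := ⟨hx.1, hx.2, hxU⟩
        rw [hF] at hxK
        exact hxK.elim
    calc oc q (F.1 ∩ Metric.closedBall 0 n) ≤ ∑' i, EMetric.diam (U' i) ^ q :=
          oc_le hU'open hcov'
      _ ≤ ∑' i, EMetric.diam (U i) ^ q := by
          refine ENNReal.tsum_le_tsum fun i => ?_
          rw [hU']; dsimp only; split
          · exact le_rfl
          · simp [show EMetric.diam (∅ : Set E) = 0 from Metric.ediam_empty, ENNReal.zero_rpow_of_pos hq]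
      _ < c := hUsum
  · exact TopologicalSpace.isOpen_generateFrom_of_mem (Or.inl ⟨K, hKcpt, rfl⟩)
  · simp only [mem_setOf_eq]
    rw [eq_empty_iff_forall_notMem]
    rintro x ⟨hxA, hxB, hxU⟩
    exact hxU (hsf ⟨hxA, hxB⟩)

lemma L3 (r : ℝ) : IsSigma02 {A : FellSpace E | hausdorffDim A.1 > r} := by
  rcases lt_or_ge r 0 with hr | hr
  · refine ⟨fun _ => univ, fun _ => isClosed_univ, ?_⟩
    rw [iUnion_const]
    ext A
    simp only [mem_setOf_eq, mem_univ, iff_true]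
    exact hr.trans_le (hausdorffDim_nonneg _)
  · classical
    set piece : ℚ × ℕ × ℕ → Set (FellSpace E) := fun x =>
      if 0 < x.1 ∧ r < (x.1 : ℝ) then
        {A : FellSpace E |
          (1 : ℝ≥0∞) / (x.2.2 + 1) ≤ oc (x.1 : ℝ) (A.1 ∩ Metric.closedBall 0 x.2.1)}
      else ∅ with hpiece
    have hclosed : ∀ x, IsClosed (piece x) := by
      intro x
      rw [hpiece]; dsimp only; split
      case isTrue hx => exact isClosed_C _ (by exact_mod_cast hx.1) _ _
      case isFalse => exact isClosed_empty
    have hunion : {A : FellSpace E | hausdorffDim A.1 > r} = ⋃ x, piece x := by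
      ext A
      simp only [mem_setOf_eq, mem_iUnion]
      constructor
      · intro h
        obtain ⟨q, hq0, hrq, n, m, hnm⟩ := D2 hr h
        exact ⟨(q, n, m), by rw [hpiece]; dsimp only; rw [if_pos ⟨hq0, hrq⟩]; exact hnm⟩
      · rintro ⟨⟨q, n, m⟩, hx⟩
        rw [hpiece] at hx; dsimp only at hx
        split at hx
        case isTrue hcond => exact hcond.2.trans_le (D1 hcond.1 hx)
        case isFalse => exact hx.elim
    refine ⟨piece ∘ (Denumerable.eqv (ℚ × ℕ × ℕ)).symm, fun k => hclosed _, ?_⟩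
    rw [hunion]
    exact ((Denumerable.eqv (ℚ × ℕ × ℕ)).symm.surjective.iUnion_comp piece).symm

lemma L2 {c : ℝ} (hc : 0 ≤ c) :
    IsSigma02 {Ap : FellSpace E × Set.Icc (0 : ℝ) (d : ℝ) |
      hausdorffDim Ap.1.1 > (Ap.2 : ℝ) - c} := by
  classical
  set piece : ((ℚ × ℚ) × ℕ × ℕ) ⊕ ℕ → Set (FellSpace E × Set.Icc (0 : ℝ) (d : ℝ)) := fun x =>
    Sum.rec (fun y =>
      if 0 < y.1.2 ∧ y.1.1 < y.1.2 ∧ 0 ≤ y.1.1 then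
        {A : FellSpace E |
            (1 : ℝ≥0∞) / (y.2.2 + 1) ≤ oc (y.1.2 : ℝ) (A.1 ∩ Metric.closedBall 0 y.2.1)} ×ˢ
          {p : Set.Icc (0 : ℝ) (d : ℝ) | (p : ℝ) ≤ (y.1.1 : ℝ) + c}
      else ∅)
      (fun j =>
        if 0 < c then
          (univ : Set (FellSpace E)) ×ˢ
            {p : Set.Icc (0 : ℝ) (d : ℝ) | (p : ℝ) ≤ c - c / (j + 2)}
        else ∅) x with hpiece
  have hIic : ∀ a : ℝ, IsClosed {p : Set.Icc (0 : ℝ) (d : ℝ) | (p : ℝ) ≤ a} := fun a =>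
    IsClosed.preimage continuous_subtype_val isClosed_Iic
  have hclosed : ∀ x, IsClosed (piece x) := by
    rintro (⟨⟨q', q⟩, n, m⟩ | j) <;> rw [hpiece] <;> dsimp only <;> split
    case isTrue hx => exact (isClosed_C _ (by exact_mod_cast hx.1) _ _).prod (hIic _)
    case isFalse => exact isClosed_empty
    case isTrue => exact isClosed_univ.prod (hIic _)
    case isFalse => exact isClosed_empty
  have hunion : {Ap : FellSpace E × Set.Icc (0 : ℝ) (d : ℝ) |
      hausdorffDim Ap.1.1 > (Ap.2 : ℝ) - c} = ⋃ x, piece x := by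
    ext ⟨A, p⟩
    have hp0 : (0 : ℝ) ≤ (p : ℝ) := p.2.1
    simp only [mem_setOf_eq, mem_iUnion]
    constructor
    · intro h
      rcases lt_or_ge ((p : ℝ) - c) 0 with hpc | hpc
      · have hcp : 0 < c - (p : ℝ) := by linarith
        have hc0 : 0 < c := by linarith
        obtain ⟨j, hj⟩ := exists_nat_ge (c / (c - (p : ℝ)))
        refine ⟨.inr j, ?_⟩
        rw [hpiece]; dsimp only; rw [if_pos hc0]
        refine ⟨mem_univ _, ?_⟩
        simp only [mem_setOf_eq]
        have h2 : c / ((j : ℝ) + 2) ≤ c - (p : ℝ) := by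
          rw [div_le_iff₀ (by positivity)]
          have h3 : c / (c - (p : ℝ)) ≤ (j : ℝ) + 2 := hj.trans (by linarith)
          rw [div_le_iff₀ hcp] at h3
          linarith [mul_le_mul_of_nonneg_left (le_refl ((j:ℝ)+2)) hcp.le]
        linarith
      · obtain ⟨q, hq0, hrq, n, m, hnm⟩ := D2 hpc h
        obtain ⟨q', hq'1, hq'2⟩ := exists_rat_btwn hrq
        refine ⟨.inl ((q', q), n, m), ?_⟩
        rw [hpiece]; dsimp only
        rw [if_pos ⟨hq0, by exact_mod_cast hq'2, by exact_mod_cast hpc.trans hq'1.le⟩]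
        exact ⟨hnm, by simp only [mem_setOf_eq]; linarith⟩
    · rintro ⟨(⟨⟨q', q⟩, n, m⟩ | j), hx⟩ <;> rw [hpiece] at hx <;> dsimp only at hx <;>
        split at hx
      case isTrue hcond =>
        have h1 := D1 hcond.1 hx.1
        have h2 : (p : ℝ) ≤ (q' : ℝ) + c := hx.2
        have h3 : (q' : ℝ) < (q : ℝ) := by exact_mod_cast hcond.2.1
        linarith
      case isFalse => exact hx.elim
      case isTrue hc0 =>
        have h2 : (p : ℝ) ≤ c - c / ((j : ℝ) + 2) := hx.2
        have h3 : 0 < c / ((j : ℝ) + 2) := by positivity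
        have h4 : (p : ℝ) - c < 0 := by linarith
        exact h4.trans_le (hausdorffDim_nonneg _)
      case isFalse => exact hx.elim
  refine ⟨piece ∘ (Denumerable.eqv (((ℚ × ℚ) × ℕ × ℕ) ⊕ ℕ)).symm, fun k => hclosed _, ?_⟩
  rw [hunion]
  exact ((Denumerable.eqv (((ℚ × ℚ) × ℕ × ℕ) ⊕ ℕ)).symm.surjective.iUnion_comp piece).symm

end Euclid

end FellAux

/-- In `𝓕(ℝᵈ) × [0,d]` (Fell topology): `{(A,p) : dimH A > p}` is `Σ⁰₂` and
`{(A,p) : dimH A ≥ p}` is `Π⁰₃`; in particular the corresponding sets with fixed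
`p ∈ [0,d)`, resp. `q ∈ (0,d]`, are `Σ⁰₂`, resp. `Π⁰₃`, in `𝓕(ℝᵈ)`. -/
theorem hausdorffDim_complexity_fell (d : ℕ) (hd : 1 ≤ d) :
    IsSigma02 {Ap : FellSpace (EuclideanSpace ℝ (Fin d)) × Set.Icc (0:ℝ) (d:ℝ) |
      hausdorffDim Ap.1.1 > (Ap.2 : ℝ)} ∧
    IsPi03 {Ap : FellSpace (EuclideanSpace ℝ (Fin d)) × Set.Icc (0:ℝ) (d:ℝ) |
      hausdorffDim Ap.1.1 ≥ (Ap.2 : ℝ)} ∧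
    (∀ p : ℝ, p ∈ Set.Ico (0:ℝ) (d:ℝ) →
      IsSigma02 {A : FellSpace (EuclideanSpace ℝ (Fin d)) | hausdorffDim A.1 > p}) ∧
    (∀ q : ℝ, q ∈ Set.Ioc (0:ℝ) (d:ℝ) →
      IsPi03 {A : FellSpace (EuclideanSpace ℝ (Fin d)) | hausdorffDim A.1 ≥ q}) := by
  classical
  refine ⟨?_, ?_, ?_, ?_⟩
  · simpa only [sub_zero] using FellAux.L2 (d := d) (le_refl 0)
  · refine ⟨fun k => {Ap : FellSpace (EuclideanSpace ℝ (Fin d)) × Set.Icc (0:ℝ) (d:ℝ) |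
        hausdorffDim Ap.1.1 > (Ap.2 : ℝ) - 1 / (k + 1)},
        fun k => FellAux.L2 (by positivity), ?_⟩
    ext ⟨A, p⟩
    simp only [mem_setOf_eq, mem_iInter, ge_iff_le]
    constructor
    · intro h k
      have hk : (0:ℝ) < 1 / ((k:ℝ) + 1) := by positivity
      linarith
    · intro h
      by_contra hlt
      push_neg at hlt
      obtain ⟨k, hk⟩ := exists_nat_one_div_lt
        (show (0:ℝ) < (p:ℝ) - hausdorffDim A.1 by linarith)
      have h2 := h k
      linarith
  · intro p _
    exact FellAux.L3 p
  · intro q _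
    refine ⟨fun k => {A : FellSpace (EuclideanSpace ℝ (Fin d)) |
        hausdorffDim A.1 > q - 1 / (k + 1)}, fun k => FellAux.L3 _, ?_⟩
    ext A
    simp only [mem_setOf_eq, mem_iInter, ge_iff_le]
    constructor
    · intro h k
      have hk : (0:ℝ) < 1 / ((k:ℝ) + 1) := by positivity
      linarith
    · intro h
      by_contra hlt
      push_neg at hlt
      obtain ⟨k, hk⟩ := exists_nat_one_div_lt
        (show (0:ℝ) < q - hausdorffDim A.1 by linarith)
      have h2 := h k
      linarith
end

section
/- Fix d ≥ 1. For every nonempty Borel set A ⊆ ℝᵈ, dimF(A) = sup{dimF(K) : K ⊆ A, K bounded and Borel}. In particular, for every nonempty closed set A ⊆ ℝᵈ, dimF(A) = sup{dimF(K) : K ⊆ A, K compact}. -/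
open MeasureTheory Topology Filter Set
open scoped ENNReal NNReal

section FourierDimAux

open scoped FourierTransform RealInnerProductSpace ContDiff
open Complex Metric Bornology

variable {d : ℕ}
local notation "𝔼" => EuclideanSpace ℝ (Fin d)

/-- A smooth compactly supported function, as a Schwartz map. -/
noncomputable def schwartzOfCompactSupport {E : Type*} [NormedAddCommGroup E] [InnerProductSpace ℝ E]
    [FiniteDimensional ℝ E] {f : E → ℂ} (hf : ContDiff ℝ ∞ f)
    (h : HasCompactSupport f) : SchwartzMap E ℂ where
  toFun := f
  smooth' := hf
  decay' := by
    intro k n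
    have h1 : HasCompactSupport (fun x => ‖x‖ ^ k * ‖iteratedFDeriv ℝ n f x‖) :=
      ((h.iteratedFDeriv n).norm).mul_left
    have h2 : Continuous fun x => ‖x‖ ^ k * ‖iteratedFDeriv ℝ n f x‖ :=
      (continuous_norm.pow k).mul (hf.continuous_iteratedFDeriv (mod_cast le_top)).norm
    obtain ⟨C, hC⟩ := h2.bounded_above_of_compact_support h1
    exact ⟨C, fun x => (le_abs_self _).trans ((Real.norm_eq_abs _) ▸ hC x)⟩

@[simp] lemma schwartzOfCompactSupport_apply {E : Type*} [NormedAddCommGroup E] [InnerProductSpace ℝ E]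
    [FiniteDimensional ℝ E] {f : E → ℂ} (hf : ContDiff ℝ ∞ f)
    (h : HasCompactSupport f) (x : E) : schwartzOfCompactSupport hf h x = f x := rfl

lemma norm_exp_I_mul' (r : ℝ) : ‖Complex.exp ((r : ℂ) * Complex.I)‖ = 1 :=
  Complex.norm_exp_ofReal_mul_I _

lemma norm_exp_neg_I_mul (r : ℝ) : ‖Complex.exp (-(Complex.I * (r : ℂ)))‖ = 1 := by
  rw [show -(Complex.I * (r : ℂ)) = ((-r : ℝ) : ℂ) * Complex.I by push_cast; ring]
  exact Complex.norm_exp_ofReal_mul_I _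

lemma swap_formula (μ : Measure 𝔼) [IsProbabilityMeasure μ] (ψ : SchwartzMap 𝔼 ℂ) (ξ : 𝔼) :
    ∫ x, (∫ η : 𝔼, Complex.exp ((2 * Real.pi * ⟪η, x⟫ : ℝ) * Complex.I) • ψ η) *
        Complex.exp (-(Complex.I * ((⟪ξ, x⟫ : ℝ) : ℂ))) ∂μ
      = ∫ η : 𝔼, ψ η * ∫ x,
          Complex.exp (-(Complex.I * ((⟪ξ - (2 * Real.pi) • η, x⟫ : ℝ) : ℂ))) ∂μ := by
  have hker : ∀ (η x : 𝔼),
      Complex.exp ((2 * Real.pi * ⟪η, x⟫ : ℝ) * Complex.I) *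
        Complex.exp (-(Complex.I * ((⟪ξ, x⟫ : ℝ) : ℂ)))
      = Complex.exp (-(Complex.I * ((⟪ξ - (2 * Real.pi) • η, x⟫ : ℝ) : ℂ))) := by
    intro η x
    rw [← Complex.exp_add]
    congr 1
    have : ⟪ξ - (2 * Real.pi) • η, x⟫ = ⟪ξ, x⟫ - 2 * Real.pi * ⟪η, x⟫ := by
      rw [inner_sub_left, real_inner_smul_left]
    rw [this]
    push_cast
    ring
  have hint : Integrable (Function.uncurry fun (x η : 𝔼) =>
      (Complex.exp ((2 * Real.pi * ⟪η, x⟫ : ℝ) * Complex.I) • ψ η) *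
        Complex.exp (-(Complex.I * ((⟪ξ, x⟫ : ℝ) : ℂ)))) (μ.prod volume) := by
    have hb : Integrable (fun z : 𝔼 × 𝔼 => (1 : ℝ) * ‖ψ z.2‖) (μ.prod volume) :=
      (integrable_const (1 : ℝ)).mul_prod ψ.integrable.norm
    refine hb.mono' ?_ ?_
    · apply Continuous.aestronglyMeasurable
      have h1 : Continuous fun z : 𝔼 × 𝔼 => ⟪z.2, z.1⟫ :=
        continuous_inner.comp (continuous_snd.prodMk continuous_fst)
      have h2 : Continuous fun z : 𝔼 × 𝔼 => ⟪ξ, z.1⟫ :=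
        continuous_inner.comp ((continuous_const : Continuous fun _ : 𝔼 × 𝔼 => ξ).prodMk
          continuous_fst)
      exact ((((Complex.continuous_ofReal.comp (continuous_const.mul h1)).mul
        continuous_const).cexp).smul (ψ.continuous.comp continuous_snd)).mul
        ((continuous_const.mul (Complex.continuous_ofReal.comp h2)).neg.cexp)
    · refine Eventually.of_forall fun z => ?_
      rw [Function.uncurry]
      simp only [norm_mul, norm_smul, norm_exp_I_mul', norm_exp_neg_I_mul, one_mul, mul_one]
      exact le_rfl
  calc
    ∫ x, (∫ η : 𝔼, Complex.exp ((2 * Real.pi * ⟪η, x⟫ : ℝ) * Complex.I) • ψ η) *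
        Complex.exp (-(Complex.I * ((⟪ξ, x⟫ : ℝ) : ℂ))) ∂μ
      = ∫ x, (∫ η : 𝔼, (Complex.exp ((2 * Real.pi * ⟪η, x⟫ : ℝ) * Complex.I) • ψ η) *
          Complex.exp (-(Complex.I * ((⟪ξ, x⟫ : ℝ) : ℂ)))) ∂μ := by
        refine integral_congr_ae (Eventually.of_forall fun x => ?_)
        exact (integral_mul_const _ _).symm
    _ = ∫ η : 𝔼, ∫ x, (Complex.exp ((2 * Real.pi * ⟪η, x⟫ : ℝ) * Complex.I) • ψ η) *
          Complex.exp (-(Complex.I * ((⟪ξ, x⟫ : ℝ) : ℂ))) ∂μ := integral_integral_swap hint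
    _ = ∫ η : 𝔼, ψ η * ∫ x,
          Complex.exp (-(Complex.I * ((⟪ξ - (2 * Real.pi) • η, x⟫ : ℝ) : ℂ))) ∂μ := by
        refine integral_congr_ae (Eventually.of_forall fun η => ?_)
        simp only []
        rw [← integral_const_mul]
        refine integral_congr_ae (Eventually.of_forall fun x => ?_)
        simp only []
        rw [smul_eq_mul, ← hker η x]; ring

lemma norm_integral_exp_le_one (μ : Measure 𝔼) [IsProbabilityMeasure μ] (ξ : 𝔼) :
    ‖∫ x, Complex.exp (-(Complex.I * ((⟪ξ, x⟫ : ℝ) : ℂ))) ∂μ‖ ≤ 1 := by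
  have := norm_integral_le_of_norm_le_const
    (μ := μ) (f := fun x : 𝔼 => Complex.exp (-(Complex.I * ((⟪ξ, x⟫ : ℝ) : ℂ)))) (C := 1)
    (Eventually.of_forall fun x => le_of_eq (norm_exp_neg_I_mul _))
  simpa using this

lemma main_estimate (μ : Measure 𝔼) [IsProbabilityMeasure μ] (ψ : SchwartzMap 𝔼 ℂ)
    {s c : ℝ} (hs0 : 0 ≤ s) (hsd : s ≤ (d : ℝ)) (hc : 0 < c)
    (hdec : ∀ ζ : 𝔼, ζ ≠ 0 →
      ‖∫ x, Complex.exp (-(Complex.I * ((⟪ζ, x⟫ : ℝ) : ℂ))) ∂μ‖ ≤ c * ‖ζ‖ ^ (-(s / 2)))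
    {ξ : 𝔼} (hξ : 1 ≤ ‖ξ‖) :
    ‖∫ η : 𝔼, ψ η * ∫ x,
        Complex.exp (-(Complex.I * ((⟪ξ - (2 * Real.pi) • η, x⟫ : ℝ) : ℂ))) ∂μ‖ ≤
      ((c * 2 ^ (s / 2)) * (∫ η : 𝔼, ‖ψ η‖) +
        (4 * Real.pi) ^ d * (∫ η : 𝔼, ‖η‖ ^ d * ‖ψ η‖)) * ‖ξ‖ ^ (-(s / 2)) := by
  have hξpos : (0 : ℝ) < ‖ξ‖ := lt_of_lt_of_le one_pos hξ
  have hπ : (0 : ℝ) < Real.pi := Real.pi_pos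
  set Φ : 𝔼 → ℂ := fun ζ => ∫ x, Complex.exp (-(Complex.I * ((⟪ζ, x⟫ : ℝ) : ℂ))) ∂μ with hΦdef
  set X : ℝ := (c * 2 ^ (s / 2)) * ‖ξ‖ ^ (-(s / 2)) with hXdef
  set Y : ℝ := (4 * Real.pi) ^ d * ‖ξ‖ ^ (-(s / 2)) with hYdef
  have hXpos : 0 ≤ X := by positivity
  have hYpos : 0 ≤ Y := by positivity
  set r : ℝ := ‖ξ‖ / (4 * Real.pi) with hrdef
  have hr : 0 < r := by positivity
  have hpoint : ∀ η : 𝔼, ‖ψ η * Φ (ξ - (2 * Real.pi) • η)‖ ≤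
      X * ‖ψ η‖ + Y * (‖η‖ ^ d * ‖ψ η‖) := by
    intro η
    rw [norm_mul, mul_comm ‖ψ η‖]
    by_cases hη : ‖η‖ ≤ r
    · -- low frequency: use the decay of Φ
      have hnsm : ‖(2 * Real.pi) • η‖ ≤ ‖ξ‖ / 2 := by
        rw [norm_smul, Real.norm_eq_abs, abs_of_pos (by positivity)]
        calc 2 * Real.pi * ‖η‖ ≤ 2 * Real.pi * r :=
              mul_le_mul_of_nonneg_left hη (by positivity)
        _ = ‖ξ‖ / 2 := by rw [hrdef]; field_simp; ring
      have hζnorm : ‖ξ‖ / 2 ≤ ‖ξ - (2 * Real.pi) • η‖ := by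
        have := norm_sub_norm_le ξ ((2 * Real.pi) • η)
        linarith
      have hζ0 : ξ - (2 * Real.pi) • η ≠ 0 := by
        intro h0
        rw [h0, norm_zero] at hζnorm
        linarith
      have h2 : (‖ξ‖ / 2) ^ (-(s / 2)) = 2 ^ (s / 2) * ‖ξ‖ ^ (-(s / 2)) := by
        rw [Real.div_rpow (norm_nonneg _) (by norm_num), Real.rpow_neg (by norm_num : (0:ℝ) ≤ 2)]
        rw [div_eq_mul_inv, inv_inv, mul_comm]
      have h1 : ‖Φ (ξ - (2 * Real.pi) • η)‖ ≤ X := by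
        refine (hdec _ hζ0).trans ?_
        rw [hXdef, mul_assoc c, ← h2]
        exact mul_le_mul_of_nonneg_left
          (Real.rpow_le_rpow_of_nonpos (by positivity) hζnorm (by linarith)) hc.le
      refine le_add_of_le_of_nonneg ?_ (by positivity)
      exact mul_le_mul_of_nonneg_right h1 (norm_nonneg _)
    · -- high frequency: use the polynomial decay of ψ
      push_neg at hη
      have hΦ1 : ‖Φ (ξ - (2 * Real.pi) • η)‖ ≤ 1 := norm_integral_exp_le_one μ _
      have hkey : (1 : ℝ) ≤ Y * ‖η‖ ^ d := by
        have h3 : (1 : ℝ) ≤ ‖ξ‖ ^ ((d : ℝ) - s / 2) := by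
          have := Real.rpow_le_rpow_of_exponent_le hξ (by linarith : (0:ℝ) ≤ (d : ℝ) - s / 2)
          rwa [Real.rpow_zero] at this
        have h4 : ‖ξ‖ ^ ((d : ℝ) - s / 2) = ‖ξ‖ ^ d * ‖ξ‖ ^ (-(s / 2)) := by
          rw [show (d : ℝ) - s / 2 = (d : ℝ) + (-(s / 2)) by ring, Real.rpow_add hξpos,
            Real.rpow_natCast]
        have h5 : ‖ξ‖ ^ d = (4 * Real.pi) ^ d * r ^ d := by
          rw [← mul_pow, hrdef]
          congr 1
          field_simp
        have h6 : (4 * Real.pi) ^ d * r ^ d ≤ (4 * Real.pi) ^ d * ‖η‖ ^ d :=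
          mul_le_mul_of_nonneg_left (pow_le_pow_left₀ hr.le hη.le d) (by positivity)
        calc (1 : ℝ) ≤ ‖ξ‖ ^ ((d : ℝ) - s / 2) := h3
          _ = (4 * Real.pi) ^ d * r ^ d * ‖ξ‖ ^ (-(s / 2)) := by rw [h4, h5]
          _ ≤ (4 * Real.pi) ^ d * ‖η‖ ^ d * ‖ξ‖ ^ (-(s / 2)) :=
              mul_le_mul_of_nonneg_right h6 (by positivity)
          _ = Y * ‖η‖ ^ d := by rw [hYdef]; ring
      refine le_add_of_nonneg_of_le (by positivity) ?_
      calc ‖Φ (ξ - (2 * Real.pi) • η)‖ * ‖ψ η‖ ≤ 1 * ‖ψ η‖ :=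
            mul_le_mul_of_nonneg_right hΦ1 (norm_nonneg _)
        _ ≤ (Y * ‖η‖ ^ d) * ‖ψ η‖ := mul_le_mul_of_nonneg_right hkey (norm_nonneg _)
        _ = Y * (‖η‖ ^ d * ‖ψ η‖) := by ring
  have hI1 : Integrable (fun η : 𝔼 => X * ‖ψ η‖) volume := ψ.integrable.norm.const_mul X
  have hI2 : Integrable (fun η : 𝔼 => Y * (‖η‖ ^ d * ‖ψ η‖)) volume :=
    (ψ.integrable_pow_mul volume d).const_mul Y
  calc ‖∫ η : 𝔼, ψ η * Φ (ξ - (2 * Real.pi) • η)‖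
      ≤ ∫ η : 𝔼, (X * ‖ψ η‖ + Y * (‖η‖ ^ d * ‖ψ η‖)) :=
        norm_integral_le_of_norm_le (hI1.add hI2) (Eventually.of_forall hpoint)
    _ = X * (∫ η : 𝔼, ‖ψ η‖) + Y * (∫ η : 𝔼, ‖η‖ ^ d * ‖ψ η‖) := by
        rw [integral_add hI1 hI2, integral_const_mul, integral_const_mul]
    _ = ((c * 2 ^ (s / 2)) * (∫ η : 𝔼, ‖ψ η‖) +
        (4 * Real.pi) ^ d * (∫ η : 𝔼, ‖η‖ ^ d * ‖ψ η‖)) * ‖ξ‖ ^ (-(s / 2)) := by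
        rw [hXdef, hYdef]; ring

lemma exists_bounded_mem {A : Set 𝔼} (hA : MeasurableSet A) {s : ℝ}
    (hs0 : 0 ≤ s) (hsd : s ≤ (d : ℝ))
    (μ : Measure 𝔼) [IsProbabilityMeasure μ] (hμA : μ A = 1)
    {c : ℝ} (hc : 0 < c)
    (hdec : ∀ ξ : 𝔼, ENNReal.ofReal ‖∫ x, Complex.exp (-(Complex.I * ((⟪ξ, x⟫ : ℝ) : ℂ))) ∂μ‖ ≤
      ENNReal.ofReal c * (‖ξ‖₊ : ℝ≥0∞) ^ (-(s / 2))) :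
    ∃ T : ℝ, 0 < T ∧ ∃ ν : Measure 𝔼, IsProbabilityMeasure ν ∧
      ν (A ∩ closedBall 0 T) = 1 ∧ ∃ c' : ℝ, 0 < c' ∧ ∀ ξ : 𝔼,
        ENNReal.ofReal ‖∫ x, Complex.exp (-(Complex.I * ((⟪ξ, x⟫ : ℝ) : ℂ))) ∂ν‖ ≤
          ENNReal.ofReal c' * (‖ξ‖₊ : ℝ≥0∞) ^ (-(s / 2)) := by
  -- real form of the decay hypothesis
  have hdecR : ∀ ζ : 𝔼, ζ ≠ 0 →
      ‖∫ x, Complex.exp (-(Complex.I * ((⟪ζ, x⟫ : ℝ) : ℂ))) ∂μ‖ ≤ c * ‖ζ‖ ^ (-(s / 2)) := by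
    intro ζ hζ
    have hn : (0 : ℝ) < ‖ζ‖ := norm_pos_iff.2 hζ
    have h := hdec ζ
    rw [← enorm_eq_nnnorm, ← ofReal_norm, ENNReal.ofReal_rpow_of_pos hn,
      ← ENNReal.ofReal_mul hc.le] at h
    exact (ENNReal.ofReal_le_ofReal_iff (by positivity)).1 h
  -- a ball with positive measure
  obtain ⟨n, hn⟩ : ∃ n : ℕ, 0 < μ (closedBall (0 : 𝔼) ((n : ℝ) + 1)) := by
    by_contra h
    push_neg at h
    have h0 : ∀ n : ℕ, μ (closedBall (0 : 𝔼) ((n : ℝ) + 1)) = 0 :=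
      fun n => le_antisymm (h n) zero_le
    have huniv : (Set.univ : Set 𝔼) ⊆ ⋃ n : ℕ, closedBall (0 : 𝔼) ((n : ℝ) + 1) := by
      intro x _
      obtain ⟨k, hk⟩ := exists_nat_ge ‖x‖
      exact Set.mem_iUnion.2 ⟨k, by
        simpa [mem_closedBall, dist_zero_right] using hk.trans (by linarith)⟩
    have h1 : μ Set.univ = 0 :=
      le_antisymm ((measure_mono huniv).trans (measure_iUnion_null h0).le) zero_le
    simp [measure_univ] at h1
  set R : ℝ := (n : ℝ) + 1 with hRdef
  have hR0 : 0 < R := by positivity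
  -- the bump function and its Fourier transform
  set φ : ContDiffBump (0 : 𝔼) := ⟨R, 2 * R, hR0, by linarith⟩ with hφdef
  have hφc : ContDiff ℝ ∞ (fun x : 𝔼 => ((φ x : ℝ) : ℂ)) :=
    Complex.ofRealCLM.contDiff.comp φ.contDiff
  have hφsupp : HasCompactSupport (fun x : 𝔼 => ((φ x : ℝ) : ℂ)) :=
    φ.hasCompactSupport.comp_left (g := Complex.ofReal) Complex.ofReal_zero
  set fS : SchwartzMap 𝔼 ℂ := schwartzOfCompactSupport hφc hφsupp with hfSdef
  set ψ : SchwartzMap 𝔼 ℂ := SchwartzMap.fourierTransformCLM ℂ fS with hψdef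
  have hcoe : ⇑fS = fun x : 𝔼 => ((φ x : ℝ) : ℂ) := rfl
  have hψcoe : ⇑ψ = 𝓕 (fun x : 𝔼 => ((φ x : ℝ) : ℂ)) := by
    rw [hψdef, SchwartzMap.fourierTransformCLM_apply, SchwartzMap.fourier_coe, hcoe]
  have hinv : ∀ x : 𝔼, ((φ x : ℝ) : ℂ) =
      ∫ η : 𝔼, Complex.exp ((2 * Real.pi * ⟪η, x⟫ : ℝ) * Complex.I) • ψ η := by
    intro x
    have h : 𝓕⁻ (𝓕 (fun x : 𝔼 => ((φ x : ℝ) : ℂ))) = fun x : 𝔼 => ((φ x : ℝ) : ℂ) :=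
      Continuous.fourierInv_fourier_eq hφc.continuous (hcoe ▸ fS.integrable) (hψcoe ▸ ψ.integrable)
    conv_lhs => rw [← congrFun h x]
    rw [Real.fourierInv_eq']
    simp_rw [← hψcoe]
  -- the normalization constant
  have hφmint : Integrable (fun x : 𝔼 => φ x) μ :=
    φ.continuous.integrable_of_hasCompactSupport φ.hasCompactSupport
  set m : ℝ := ∫ x, φ x ∂μ with hmdef
  have hm_pos : 0 < m := by
    have h2 : ∫ x in closedBall (0 : 𝔼) R, φ x ∂μ = (μ (closedBall (0 : 𝔼) R)).toReal := by
      rw [setIntegral_congr_fun measurableSet_closedBall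
        (fun x hx => φ.one_of_mem_closedBall hx)]
      simp
      rfl
    have h1 : (μ (closedBall (0 : 𝔼) R)).toReal ≤ m := by
      rw [← h2]
      exact setIntegral_le_integral hφmint (Eventually.of_forall fun x => φ.nonneg)
    have h3 : 0 < (μ (closedBall (0 : 𝔼) R)).toReal :=
      ENNReal.toReal_pos (by exact hn.ne') (measure_ne_top μ _)
    linarith
  have hm0 : ENNReal.ofReal m ≠ 0 := by
    simp only [ne_eq, ENNReal.ofReal_eq_zero, not_le]
    exact hm_pos
  -- the new measure
  set ρ : Measure 𝔼 := μ.withDensity (fun x => ENNReal.ofReal (φ x)) with hρdef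
  have hρuniv : ρ Set.univ = ENNReal.ofReal m := by
    rw [hρdef, withDensity_apply _ MeasurableSet.univ, Measure.restrict_univ,
      ← ofReal_integral_eq_lintegral_ofReal hφmint (Eventually.of_forall fun x => φ.nonneg)]
  set ν : Measure 𝔼 := (ENNReal.ofReal m)⁻¹ • ρ with hνdef
  have hν : IsProbabilityMeasure ν := ⟨by
    rw [hνdef, Measure.smul_apply, smul_eq_mul, hρuniv,
      ENNReal.inv_mul_cancel hm0 ENNReal.ofReal_ne_top]⟩
  haveI := hν
  -- ν is carried by the bounded set
  have hρA : ρ Aᶜ = 0 :=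
    (withDensity_absolutelyContinuous μ _) ((prob_compl_eq_zero_iff hA).2 hμA)
  have hρB : ρ (closedBall (0 : 𝔼) (2 * R))ᶜ = 0 := by
    rw [hρdef, withDensity_apply _ measurableSet_closedBall.compl]
    have hz : ∀ x ∈ (closedBall (0 : 𝔼) (2 * R))ᶜ,
        ENNReal.ofReal (φ x) = (fun _ : 𝔼 => (0 : ℝ≥0∞)) x := by
      intro x hx
      have hdist : (2 : ℝ) * R ≤ dist x 0 := by
        have : ¬ dist x 0 ≤ 2 * R := by simpa [mem_closedBall] using hx
        linarith [not_le.1 this]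
      have hdist' : φ.rOut ≤ dist x 0 := hdist
      simp only [φ.zero_of_le_dist hdist', ENNReal.ofReal_zero]
    rw [setLIntegral_congr_fun measurableSet_closedBall.compl hz]
    simp
  have hνK : ν (A ∩ closedBall (0 : 𝔼) (2 * R)) = 1 := by
    have hcompl : ν (A ∩ closedBall (0 : 𝔼) (2 * R))ᶜ = 0 := by
      rw [Set.compl_inter]
      refine le_antisymm ((measure_union_le _ _).trans ?_) zero_le
      rw [hνdef]
      simp [Measure.smul_apply, hρA, hρB]
    exact (prob_compl_eq_zero_iff (hA.inter measurableSet_closedBall)).1 hcompl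
  -- Fourier transform of ν in terms of μ
  have hν_int : ∀ ξ : 𝔼, ∫ x, Complex.exp (-(Complex.I * ((⟪ξ, x⟫ : ℝ) : ℂ))) ∂ν
      = (m⁻¹ : ℝ) • ∫ x, ((φ x : ℝ) : ℂ) *
          Complex.exp (-(Complex.I * ((⟪ξ, x⟫ : ℝ) : ℂ))) ∂μ := by
    intro ξ
    rw [hνdef, integral_smul_measure, hρdef]
    rw [show (fun x : 𝔼 => ENNReal.ofReal (φ x))
        = (fun x : 𝔼 => ((Real.toNNReal (φ x) : ℝ≥0) : ℝ≥0∞)) from rfl]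
    rw [integral_withDensity_eq_integral_smul (φ.continuous.measurable.real_toNNReal) _]
    congr 1
    · rw [ENNReal.toReal_inv, ENNReal.toReal_ofReal hm_pos.le]
    · refine integral_congr_ae (Eventually.of_forall fun x => ?_)
      simp only []
      rw [NNReal.smul_def, Real.coe_toNNReal _ φ.nonneg, Complex.real_smul]
  -- the constants
  set L : ℝ := ∫ η : 𝔼, ‖ψ η‖ with hLdef
  set M : ℝ := ∫ η : 𝔼, ‖η‖ ^ d * ‖ψ η‖ with hMdef
  set c1 : ℝ := m⁻¹ * ((c * 2 ^ (s / 2)) * L + (4 * Real.pi) ^ d * M) with hc1def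
  set c' : ℝ := max 1 c1 with hc'def
  have hc' : (0 : ℝ) < c' := lt_of_lt_of_le one_pos (le_max_left _ _)
  refine ⟨2 * R, by linarith, ν, hν, hνK, c', hc', fun ξ => ?_⟩
  by_cases hξ : 1 ≤ ‖ξ‖
  · -- large frequencies
    have hξ0 : (0 : ℝ) < ‖ξ‖ := lt_of_lt_of_le one_pos hξ
    have hmain := main_estimate μ ψ hs0 hsd hc hdecR hξ
    have heq : ∫ x, Complex.exp (-(Complex.I * ((⟪ξ, x⟫ : ℝ) : ℂ))) ∂ν
        = (m⁻¹ : ℝ) • ∫ η : 𝔼, ψ η * ∫ x,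
            Complex.exp (-(Complex.I * ((⟪ξ - (2 * Real.pi) • η, x⟫ : ℝ) : ℂ))) ∂μ := by
      rw [hν_int ξ, ← swap_formula μ ψ ξ]
      congr 1
      refine integral_congr_ae (Eventually.of_forall fun x => ?_)
      simp only []
      rw [← hinv x]
    have hnorm : ‖∫ x, Complex.exp (-(Complex.I * ((⟪ξ, x⟫ : ℝ) : ℂ))) ∂ν‖ ≤
        c1 * ‖ξ‖ ^ (-(s / 2)) := by
      rw [heq, norm_smul, Real.norm_eq_abs, abs_of_pos (inv_pos.2 hm_pos)]
      calc m⁻¹ * ‖∫ η : 𝔼, ψ η * ∫ x,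
            Complex.exp (-(Complex.I * ((⟪ξ - (2 * Real.pi) • η, x⟫ : ℝ) : ℂ))) ∂μ‖
          ≤ m⁻¹ * (((c * 2 ^ (s / 2)) * L + (4 * Real.pi) ^ d * M) * ‖ξ‖ ^ (-(s / 2))) :=
            mul_le_mul_of_nonneg_left hmain (inv_pos.2 hm_pos).le
        _ = c1 * ‖ξ‖ ^ (-(s / 2)) := by rw [hc1def]; ring
    calc ENNReal.ofReal ‖∫ x, Complex.exp (-(Complex.I * ((⟪ξ, x⟫ : ℝ) : ℂ))) ∂ν‖
        ≤ ENNReal.ofReal (c1 * ‖ξ‖ ^ (-(s / 2))) := ENNReal.ofReal_le_ofReal hnorm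
      _ ≤ ENNReal.ofReal (c' * ‖ξ‖ ^ (-(s / 2))) := ENNReal.ofReal_le_ofReal
          (mul_le_mul_of_nonneg_right (le_max_right 1 c1) (by positivity))
      _ = ENNReal.ofReal c' * (‖ξ‖₊ : ℝ≥0∞) ^ (-(s / 2)) := by
          rw [ENNReal.ofReal_mul hc'.le, ← ENNReal.ofReal_rpow_of_pos hξ0,
            ofReal_norm, enorm_eq_nnnorm]
  · -- small frequencies
    push_neg at hξ
    have hb : ‖∫ x, Complex.exp (-(Complex.I * ((⟪ξ, x⟫ : ℝ) : ℂ))) ∂ν‖ ≤ 1 :=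
      norm_integral_exp_le_one ν ξ
    have hrpow : (1 : ℝ≥0∞) ≤ (‖ξ‖₊ : ℝ≥0∞) ^ (-(s / 2)) := by
      have hle1 : (‖ξ‖₊ : ℝ≥0∞) ≤ 1 := by
        rw [← enorm_eq_nnnorm, ← ofReal_norm]
        exact ENNReal.ofReal_le_one.2 hξ.le
      have h1 : (‖ξ‖₊ : ℝ≥0∞) ^ (s / 2) ≤ 1 := by
        calc (‖ξ‖₊ : ℝ≥0∞) ^ (s / 2) ≤ (1 : ℝ≥0∞) ^ (s / 2) :=
              ENNReal.rpow_le_rpow hle1 (by positivity)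
          _ = 1 := ENNReal.one_rpow _
      rw [ENNReal.rpow_neg]
      exact ENNReal.one_le_inv.2 h1
    calc ENNReal.ofReal ‖∫ x, Complex.exp (-(Complex.I * ((⟪ξ, x⟫ : ℝ) : ℂ))) ∂ν‖
        ≤ 1 := ENNReal.ofReal_le_one.2 hb
      _ ≤ ENNReal.ofReal c' * 1 := by
          rw [mul_one]
          exact ENNReal.one_le_ofReal.2 (le_max_left 1 c1)
      _ ≤ ENNReal.ofReal c' * (‖ξ‖₊ : ℝ≥0∞) ^ (-(s / 2)) := mul_le_mul_right hrpow _


def fdimSet (A : Set 𝔼) : Set ℝ :=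
  {s : ℝ | 0 ≤ s ∧ s ≤ (Module.finrank ℝ 𝔼 : ℝ) ∧
    ∃ μ : Measure 𝔼, IsProbabilityMeasure μ ∧ μ A = 1 ∧
      ∃ c : ℝ, 0 < c ∧ ∀ ξ : 𝔼,
        ENNReal.ofReal ‖∫ x, Complex.exp (-(Complex.I * ((inner ℝ ξ x : ℝ) : ℂ))) ∂μ‖ ≤
          ENNReal.ofReal c * (‖ξ‖₊ : ℝ≥0∞) ^ (-(s / 2))}

lemma fourierDim_eq_sSup (A : Set 𝔼) : fourierDim A = sSup (fdimSet A) := rfl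

lemma fdimSet_bddAbove (A : Set 𝔼) : BddAbove (fdimSet A) :=
  ⟨(Module.finrank ℝ 𝔼 : ℝ), fun _ hs => hs.2.1⟩

lemma zero_mem_fdimSet {A : Set 𝔼} (hA : A.Nonempty) : 0 ∈ fdimSet A := by
  obtain ⟨a, ha⟩ := hA
  refine ⟨le_refl 0, Nat.cast_nonneg _, Measure.dirac a, inferInstance,
    Measure.dirac_apply_of_mem ha, 1, one_pos, fun ξ => ?_⟩
  rw [show -((0 : ℝ) / 2) = 0 by norm_num, ENNReal.rpow_zero, mul_one, ENNReal.ofReal_one]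
  exact ENNReal.ofReal_le_one.2 (norm_integral_exp_le_one _ ξ)

lemma fdimSet_mono {K A : Set 𝔼} (h : K ⊆ A) : fdimSet K ⊆ fdimSet A := by
  rintro s ⟨h0, hd', μ, hμ, hμK, rest⟩
  exact ⟨h0, hd', μ, hμ, le_antisymm prob_le_one (hμK ▸ measure_mono h), rest⟩

lemma fourierDim_nonneg {A : Set 𝔼} (hA : A.Nonempty) : 0 ≤ fourierDim A :=
  le_csSup (fdimSet_bddAbove A) (zero_mem_fdimSet hA)

lemma fourierDim_le_finrank (A : Set 𝔼) : fourierDim A ≤ (Module.finrank ℝ 𝔼 : ℝ) :=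
  Real.sSup_le (fun _ hs => hs.2.1) (Nat.cast_nonneg _)

lemma fourierDim_mono {K A : Set 𝔼} (h : K ⊆ A) (hA : A.Nonempty) :
    fourierDim K ≤ fourierDim A := by
  rcases Set.eq_empty_or_nonempty (fdimSet K) with he | hne
  · rw [fourierDim_eq_sSup, he, Real.sSup_empty]
    exact fourierDim_nonneg hA
  · exact csSup_le_csSup (fdimSet_bddAbove A) hne (fdimSet_mono h)

lemma key_lemma {A : Set 𝔼} (hA : MeasurableSet A) {s : ℝ} (hs : s ∈ fdimSet A) :
    ∃ T : ℝ, 0 < T ∧ s ∈ fdimSet (A ∩ closedBall 0 T) := by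
  obtain ⟨hs0, hsd, μ, hμ, hμA, c, hc, hdec⟩ := hs
  haveI := hμ
  have hfr : Module.finrank ℝ 𝔼 = d := finrank_euclideanSpace_fin
  have hsd' : s ≤ (d : ℝ) := by rwa [hfr] at hsd
  obtain ⟨T, hT, ν, hν, hνK, c', hc', hdec'⟩ := exists_bounded_mem hA hs0 hsd' μ hμA hc hdec
  exact ⟨T, hT, hs0, hsd, ν, hν, hνK, c', hc', hdec'⟩

end FourierDimAux

/-- Inner regularity of the Fourier dimension: for every nonempty Borel `A ⊆ ℝᵈ`,
`dimF A = sup {dimF K : K ⊆ A, K bounded and Borel}`; in particular, for every nonempty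
closed `A ⊆ ℝᵈ`, `dimF A = sup {dimF K : K ⊆ A compact}`. -/
theorem fourierDim_inner_regular (d : ℕ) (hd : 1 ≤ d) :
    (∀ A : Set (EuclideanSpace ℝ (Fin d)), A.Nonempty → MeasurableSet A →
      fourierDim A = sSup {r : ℝ | ∃ K : Set (EuclideanSpace ℝ (Fin d)),
        K ⊆ A ∧ Bornology.IsBounded K ∧ MeasurableSet K ∧ fourierDim K = r}) ∧
    (∀ A : Set (EuclideanSpace ℝ (Fin d)), A.Nonempty → IsClosed A →
      fourierDim A = sSup {r : ℝ | ∃ K : Set (EuclideanSpace ℝ (Fin d)),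
        K ⊆ A ∧ IsCompact K ∧ fourierDim K = r}) := by
  have hfr : Module.finrank ℝ (EuclideanSpace ℝ (Fin d)) = d := finrank_euclideanSpace_fin
  constructor
  · -- Borel case
    intro A hAne hAmeas
    set S : Set ℝ := {r : ℝ | ∃ K : Set (EuclideanSpace ℝ (Fin d)),
        K ⊆ A ∧ Bornology.IsBounded K ∧ MeasurableSet K ∧ fourierDim K = r} with hSdef
    have hSbdd : BddAbove S := by
      refine ⟨(d : ℝ), ?_⟩
      rintro r ⟨K, -, -, -, rfl⟩
      exact (fourierDim_le_finrank K).trans_eq (by rw [hfr])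
    apply le_antisymm
    · rw [fourierDim_eq_sSup]
      refine Real.sSup_le (fun s hs => ?_) ?_
      · obtain ⟨T, hT, hsK⟩ := key_lemma hAmeas hs
        have h1 : s ≤ fourierDim (A ∩ Metric.closedBall 0 T) :=
          le_csSup (fdimSet_bddAbove _) hsK
        have h2 : fourierDim (A ∩ Metric.closedBall 0 T) ∈ S :=
          ⟨A ∩ Metric.closedBall 0 T, Set.inter_subset_left,
            Metric.isBounded_closedBall.subset Set.inter_subset_right,
            hAmeas.inter measurableSet_closedBall, rfl⟩
        exact h1.trans (le_csSup hSbdd h2)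
      · obtain ⟨a, ha⟩ := hAne
        have h2 : fourierDim {a} ∈ S :=
          ⟨{a}, Set.singleton_subset_iff.2 ha, Bornology.isBounded_singleton,
            measurableSet_singleton a, rfl⟩
        exact (fourierDim_nonneg (Set.singleton_nonempty a)).trans (le_csSup hSbdd h2)
    · refine Real.sSup_le ?_ (fourierDim_nonneg hAne)
      rintro r ⟨K, hKA, -, -, rfl⟩
      exact fourierDim_mono hKA hAne
  · -- closed case
    intro A hAne hAclosed
    set S : Set ℝ := {r : ℝ | ∃ K : Set (EuclideanSpace ℝ (Fin d)),
        K ⊆ A ∧ IsCompact K ∧ fourierDim K = r} with hSdef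
    have hSbdd : BddAbove S := by
      refine ⟨(d : ℝ), ?_⟩
      rintro r ⟨K, -, -, rfl⟩
      exact (fourierDim_le_finrank K).trans_eq (by rw [hfr])
    apply le_antisymm
    · rw [fourierDim_eq_sSup]
      refine Real.sSup_le (fun s hs => ?_) ?_
      · obtain ⟨T, hT, hsK⟩ := key_lemma hAclosed.measurableSet hs
        have h1 : s ≤ fourierDim (A ∩ Metric.closedBall 0 T) :=
          le_csSup (fdimSet_bddAbove _) hsK
        have h2 : fourierDim (A ∩ Metric.closedBall 0 T) ∈ S :=
          ⟨A ∩ Metric.closedBall 0 T, Set.inter_subset_left,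
            (isCompact_closedBall _ _).inter_left hAclosed, rfl⟩
        exact h1.trans (le_csSup hSbdd h2)
      · obtain ⟨a, ha⟩ := hAne
        have h2 : fourierDim {a} ∈ S :=
          ⟨{a}, Set.singleton_subset_iff.2 ha, isCompact_singleton, rfl⟩
        exact (fourierDim_nonneg (Set.singleton_nonempty a)).trans (le_csSup hSbdd h2)
    · refine Real.sSup_le ?_ (fourierDim_nonneg hAne)
      rintro r ⟨K, hKA, -, rfl⟩
      exact fourierDim_mono hKA hAne
end
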